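/- arXiv:2009.08327 — 12 statements merged into one kernel-verified Lean document; each statement's English description precedes it below -/
import Mathlib

section
/- Let n ≥ 1 and let x_0 < x_1 < ... < x_n be distinct real numbers. Then the polynomial q(x) = Σ_{j=0}^n (-1)^j Π_{k≠j} (x - x_k) has no real root; in particular, for every real x different from all nodes, Σ_{j=0}^n (-1)^j/(x - x_j) ≠ 0. -/
open Finset Real

lemma alt_sum_pos' : ∀ (m : ℕ) (f : ℕ → ℝ),
    (∀ j ≤ m, 0 < f j) → (∀ j < m, f (j+1) < f j) →
    0 < (∑ j ∈ Finset.range (m+1), (-1:ℝ)^j * f j) ∧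
      (∑ j ∈ Finset.range (m+1), (-1:ℝ)^j * f j) ≤ f 0 := by
  intro m
  induction m with
  | zero => intro f hpos _; simp [le_refl, hpos 0 le_rfl]
  | succ m ih =>
    intro f hpos hdec
    obtain ⟨h1, h2⟩ := ih (fun j => f (j+1)) (fun j hj => hpos (j+1) (by omega))
      (fun j hj => hdec (j+1) (by omega))
    have hsum : ∑ j ∈ Finset.range (m+2), (-1:ℝ)^j * f j
        = f 0 - ∑ j ∈ Finset.range (m+1), (-1:ℝ)^j * f (j+1) := by
      rw [Finset.sum_range_succ' (fun j => (-1:ℝ)^j * f j) (m+1)]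
      have : ∀ j ∈ Finset.range (m+1), (-1:ℝ)^(j+1) * f (j+1) = -((-1)^j * f (j+1)) := by
        intro j _; ring
      rw [Finset.sum_congr rfl this, Finset.sum_neg_distrib]
      ring
    rw [hsum]
    constructor
    · have := hdec 0 (by omega)
      linarith
    · linarith

lemma x_mono_lt (n : ℕ) (x : ℕ → ℝ) (hx : ∀ i, i < n → x i < x (i + 1)) :
    ∀ i j, i < j → j ≤ n → x i < x j := by
  intro i j hij hjn
  induction j with
  | zero => omega
  | succ j ih =>
    rcases Nat.lt_or_ge i j with h | h
    · exact (ih h (by omega)).trans (hx j (by omega))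
    · have : i = j := by omega
      subst this
      exact hx i (by omega)

lemma berrut_sum_ne (n : ℕ) (x : ℕ → ℝ) (hx : ∀ i, i < n → x i < x (i + 1))
    (y : ℝ) (hy : ∀ i ≤ n, y ≠ x i) :
    (∑ j ∈ Finset.range (n + 1), (-1 : ℝ) ^ j / (y - x j)) ≠ 0 := by
  have hmono := x_mono_lt n x hx
  have hmono' : ∀ i j, i ≤ j → j ≤ n → x i ≤ x j := by
    intro i j hij hjn
    rcases Nat.lt_or_ge i j with h | h
    · exact (hmono i j h hjn).le
    · have : i = j := by omega
      simp [this]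
  by_cases hc : x 0 < y
  · classical
    set i0 := Nat.findGreatest (fun i => x i < y) n with hi0def
    have hi0le : i0 ≤ n := Nat.findGreatest_le n
    have hi0 : x i0 < y := by
      rw [hi0def]; exact Nat.findGreatest_spec (P := fun i => x i < y) (Nat.zero_le n) hc
    have hgt : ∀ j, i0 < j → j ≤ n → y < x j := by
      intro j hj hjn
      have hnot : ¬ x j < y := Nat.findGreatest_is_greatest (by rw [hi0def] at hj; exact hj) hjn
      have := hy j hjn
      rcases lt_or_eq_of_le (not_lt.1 hnot) with h | h
      · exact h
      · exact absurd h this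
    set F : ℕ → ℝ := fun j => (y - x (i0 - j))⁻¹ with hF
    set G : ℕ → ℝ := fun t => (x (i0 + 1 + t) - y)⁻¹ with hG
    have hsplit : n + 1 = (i0 + 1) + (n - i0) := by omega
    have hS : ∑ j ∈ Finset.range (n + 1), (-1 : ℝ) ^ j / (y - x j)
        = ∑ j ∈ Finset.range (i0 + 1), (-1 : ℝ) ^ j / (y - x j)
          + ∑ t ∈ Finset.range (n - i0), (-1 : ℝ) ^ (i0 + 1 + t) / (y - x (i0 + 1 + t)) := by
      rw [hsplit, Finset.sum_range_add]
    have hA : ∑ j ∈ Finset.range (i0 + 1), (-1 : ℝ) ^ j / (y - x j)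
        = (-1:ℝ)^i0 * ∑ j ∈ Finset.range (i0 + 1), (-1:ℝ)^j * F j := by
      rw [Finset.mul_sum, ← Finset.sum_range_reflect (fun j => (-1:ℝ)^j / (y - x j)) (i0+1)]
      apply Finset.sum_congr rfl
      intro j hj
      simp only [Finset.mem_range] at hj
      have hij : i0 + 1 - 1 - j = i0 - j := by omega
      simp only [hij]
      have h1 : ((-1:ℝ))^(i0 - j) * (-1)^j = (-1)^i0 := by
        rw [← pow_add]; congr 1; omega
      have h2 : ((-1:ℝ))^j * (-1)^j = 1 := by
        rw [← pow_add, ← two_mul, pow_mul]; norm_num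
      have hpow : ((-1:ℝ))^(i0 - j) = (-1)^i0 * (-1)^j := by
        rw [← h1, mul_assoc, h2, mul_one]
      rw [hpow, div_eq_mul_inv, hF]
      ring
    have hB : ∑ t ∈ Finset.range (n - i0), (-1 : ℝ) ^ (i0 + 1 + t) / (y - x (i0 + 1 + t))
        = (-1:ℝ)^i0 * ∑ t ∈ Finset.range (n - i0), (-1:ℝ)^t * G t := by
      rw [Finset.mul_sum]
      apply Finset.sum_congr rfl
      intro t _
      have : y - x (i0 + 1 + t) = -(x (i0 + 1 + t) - y) := by ring
      rw [this, pow_add, pow_add, div_eq_mul_inv, inv_neg, hG]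
      ring
    have hApos : 0 < ∑ j ∈ Finset.range (i0 + 1), (-1:ℝ)^j * F j := by
      refine (alt_sum_pos' i0 F ?_ ?_).1
      · intro j hj
        have h1 : x (i0 - j) ≤ x i0 := hmono' _ _ (by omega) hi0le
        have h0 : 0 < y - x (i0 - j) := by linarith
        simp only [hF]
        positivity
      · intro j hj
        simp only [hF]
        have hlt : x (i0 - (j+1)) < x (i0 - j) := hmono _ _ (by omega) (by omega)
        have hp : 0 < y - x (i0 - j) := by
          have : x (i0 - j) ≤ x i0 := hmono' _ _ (by omega) hi0le
          linarith
        apply inv_strictAnti₀ hp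
        linarith
    have hBpos : 0 ≤ ∑ t ∈ Finset.range (n - i0), (-1:ℝ)^t * G t := by
      rcases Nat.eq_zero_or_pos (n - i0) with h | h
      · simp [h]
      · obtain ⟨m, hm⟩ : ∃ m, n - i0 = m + 1 := ⟨n - i0 - 1, by omega⟩
        rw [hm]
        refine le_of_lt (alt_sum_pos' m G ?_ ?_).1
        · intro t ht
          have h0 : 0 < x (i0 + 1 + t) - y := by
            have := hgt _ (show i0 < i0 + 1 + t by omega) (by omega); linarith
          simp only [hG]
          positivity
        · intro t ht
          simp only [hG]
          have hlt : x (i0 + 1 + t) < x (i0 + 1 + (t+1)) := hmono _ _ (by omega) (by omega)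
          have hp : 0 < x (i0 + 1 + t) - y := by
            have := hgt _ (show i0 < i0 + 1 + t by omega) (by omega)
            linarith
          apply inv_strictAnti₀ hp
          linarith
    rw [hS, hA, hB, ← mul_add]
    exact mul_ne_zero (by positivity) (by linarith)
  · have hlt : ∀ j ≤ n, y < x j := by
      intro j hjn
      have h0 : y < x 0 := by
        rcases lt_or_eq_of_le (not_lt.1 hc) with h | h
        · exact h
        · exact absurd h (hy 0 (by omega))
      rcases Nat.eq_zero_or_pos j with h | h
      · simpa [h] using h0
      · exact h0.trans_le (hmono' 0 j (by omega) hjn)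
    set G : ℕ → ℝ := fun t => (x t - y)⁻¹ with hG
    have hS : ∑ j ∈ Finset.range (n + 1), (-1 : ℝ) ^ j / (y - x j)
        = -∑ j ∈ Finset.range (n + 1), (-1:ℝ)^j * G j := by
      rw [← Finset.sum_neg_distrib]
      apply Finset.sum_congr rfl
      intro j _
      have : y - x j = -(x j - y) := by ring
      rw [this, div_eq_mul_inv, inv_neg, hG]
      ring
    rw [hS]
    have hpos : 0 < ∑ j ∈ Finset.range (n + 1), (-1:ℝ)^j * G j := by
      refine (alt_sum_pos' n G ?_ ?_).1
      · intro j hj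
        have h0 : 0 < x j - y := by have := hlt j hj; linarith
        simp only [hG]
        positivity
      · intro j hj
        simp only [hG]
        have hl : x j < x (j+1) := hx j hj
        have hp : 0 < x j - y := by have := hlt j (by omega); linarith
        apply inv_strictAnti₀ hp
        linarith
    linarith

/-- The denominator polynomial of Berrut's rational interpolant has no real root. -/
theorem berrut_denominator_no_real_root
    (n : ℕ) (hn : 1 ≤ n) (x : ℕ → ℝ)
    (hx : ∀ i, i < n → x i < x (i + 1)) :
    (∀ y : ℝ,
      (∑ j ∈ Finset.range (n + 1),
        (-1 : ℝ) ^ j * ∏ k ∈ (Finset.range (n + 1)).erase j, (y - x k)) ≠ 0) ∧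
    (∀ y : ℝ, (∀ i ≤ n, y ≠ x i) →
      (∑ j ∈ Finset.range (n + 1), (-1 : ℝ) ^ j / (y - x j)) ≠ 0) := by
  have hmono := x_mono_lt n x hx
  have hinj : ∀ i ≤ n, ∀ k ≤ n, i ≠ k → x i ≠ x k := by
    intro i hi k hk hik
    rcases Nat.lt_or_ge i k with h | h
    · exact (hmono i k h hk).ne
    · exact (hmono k i (by omega) hi).ne'
  constructor
  · intro y
    by_cases hy : ∀ i ≤ n, y ≠ x i
    · have hP : ∀ j ∈ Finset.range (n + 1),
          (-1:ℝ)^j * ∏ k ∈ (Finset.range (n + 1)).erase j, (y - x k)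
            = (∏ k ∈ Finset.range (n + 1), (y - x k)) * ((-1:ℝ)^j / (y - x j)) := by
        intro j hj
        have hjn : j ≤ n := by have := Finset.mem_range.mp hj; omega
        have hne : y - x j ≠ 0 := sub_ne_zero.2 (hy j hjn)
        have hpm := Finset.prod_erase_mul (Finset.range (n + 1)) (fun k => y - x k) hj
        have hprod : ∏ k ∈ (Finset.range (n + 1)).erase j, (y - x k)
            = (∏ k ∈ Finset.range (n + 1), (y - x k)) / (y - x j) := by
          rw [eq_div_iff hne]; exact hpm
        rw [hprod]
        ring
      rw [Finset.sum_congr rfl hP, ← Finset.mul_sum]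
      apply mul_ne_zero
      · apply Finset.prod_ne_zero_iff.2
        intro k hk
        have hkn : k ≤ n := by have := Finset.mem_range.mp hk; omega
        exact sub_ne_zero.2 (hy k hkn)
      · exact berrut_sum_ne n x hx y hy
    · push_neg at hy
      obtain ⟨m, hm, hym⟩ := hy
      subst hym
      have hmmem : m ∈ Finset.range (n + 1) := Finset.mem_range.2 (by omega)
      rw [Finset.sum_eq_single m]
      · apply mul_ne_zero (pow_ne_zero _ (by norm_num))
        apply Finset.prod_ne_zero_iff.2
        intro k hk
        obtain ⟨hkm, hkmem⟩ := Finset.mem_erase.mp hk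
        have hkn : k ≤ n := by have := Finset.mem_range.mp hkmem; omega
        exact sub_ne_zero.2 (hinj m hm k hkn (Ne.symm hkm))
      · intro j hj hjm
        apply mul_eq_zero_of_right
        apply Finset.prod_eq_zero (Finset.mem_erase.2 ⟨Ne.symm hjm, hmmem⟩)
        simp
      · intro h; exact absurd hmmem h
  · intro y hy; exact berrut_sum_ne n x hx y hy
end

section
/- Let N and s be integers with 0 ≤ s < N - 2 and set n = N - s. Let α_0 < α_1 < ... < α_n be integers with 0 ≤ α_0 and α_n ≤ N, and define y_k = -cos(α_k π / N), so that y_0 < y_1 < ... < y_n. Then the points y_0,...,y_n are well-spaced with constants C = π²(s+1)/2 and R = (s+1)(s+3)π²/4; that is: (1) for all 0 ≤ j ≤ k ≤ n-1, (y_{k+1} - y_k)/(y_{k+1} - y_j) ≤ C/(k+1-j); (2) for all 0 ≤ k ≤ n-1 and k+1 ≤ j ≤ n, (y_{k+1} - y_k)/(y_j - y_k) ≤ C/(j-k); (3) for all 1 ≤ k ≤ n-1, 1/R ≤ (y_{k+1} - y_k)/(y_k - y_{k-1}) ≤ R. -/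
open Finset Real

lemma sin_mul_le_aux {a b : ℝ} (ha : 0 < a) (hab : a ≤ b) (hb : b ≤ π) :
    Real.sin b * a ≤ Real.sin a * b := by
  have hb0 : 0 < b := ha.trans_le hab
  have h := strictConcaveOn_sin_Icc.concaveOn.2
    (show (0:ℝ) ∈ Set.Icc 0 π from ⟨le_rfl, Real.pi_pos.le⟩)
    (show b ∈ Set.Icc 0 π from ⟨hb0.le, hb⟩)
    (show (0:ℝ) ≤ 1 - a / b by rw [sub_nonneg]; exact div_le_one_of_le₀ hab hb0.le)
    (show (0:ℝ) ≤ a / b by positivity)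
    (show (1 - a / b) + a / b = 1 by ring)
  simp only [smul_eq_mul, mul_zero, Real.sin_zero, zero_add] at h
  rw [div_mul_cancel₀ a hb0.ne'] at h
  calc Real.sin b * a = (a / b * Real.sin b) * b := by field_simp
    _ ≤ Real.sin a * b := by nlinarith [h]

lemma cos_diff_eq {B C : ℝ} :
    Real.cos B - Real.cos C = 2 * Real.sin ((B + C) / 2) * Real.sin ((C - B) / 2) := by
  rw [Real.cos_sub_cos]
  have : (B - C) / 2 = -((C - B) / 2) := by ring
  rw [this, Real.sin_neg]; ring

lemma ratio1 {A B C : ℝ} (hA : 0 ≤ A) (hAB : A ≤ B) (hBC : B < C) (hC : C ≤ π) :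
    (Real.cos B - Real.cos C) / (Real.cos A - Real.cos C) ≤ π * (C - B) / (C - A) := by
  have hpi := Real.pi_pos
  set m1 := (B + C) / 2 with hm1
  set m2 := (A + C) / 2 with hm2
  have hC0 : 0 < C := lt_of_le_of_lt (hA.trans hAB) hBC
  have hm2pos : 0 < m2 := by rw [hm2]; linarith
  have hm2le : m2 ≤ m1 := by rw [hm1, hm2]; linarith
  have hm1lt : m1 < π := by rw [hm1]; linarith
  have hS2 : 0 < Real.sin m2 :=
    Real.sin_pos_of_pos_of_lt_pi hm2pos (lt_of_le_of_lt hm2le hm1lt)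
  have hsin12 : Real.sin m1 ≤ 2 * Real.sin m2 := by
    have h := sin_mul_le_aux hm2pos hm2le hm1lt.le
    have hm1le2 : m1 ≤ 2 * m2 := by rw [hm1, hm2]; linarith
    nlinarith [Real.sin_pos_of_pos_of_lt_pi hm2pos (lt_of_le_of_lt hm2le hm1lt)]
  have hNu : Real.cos B - Real.cos C ≤ 2 * Real.sin m2 * (C - B) := by
    rw [cos_diff_eq]
    have h1 : Real.sin ((C - B) / 2) ≤ (C - B) / 2 := Real.sin_le (by linarith)
    have h2 : 0 ≤ Real.sin ((C - B) / 2) := by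
      apply Real.sin_nonneg_of_nonneg_of_le_pi <;> linarith
    have h3 : 0 ≤ Real.sin m1 := by
      apply Real.sin_nonneg_of_nonneg_of_le_pi <;> linarith
    nlinarith
  have hDe : 2 / π * Real.sin m2 * (C - A) ≤ Real.cos A - Real.cos C := by
    rw [cos_diff_eq]
    have h1 : 2 / π * ((C - A) / 2) ≤ Real.sin ((C - A) / 2) :=
      Real.mul_le_sin (by linarith) (by linarith)
    nlinarith
  have hDepos : 0 < Real.cos A - Real.cos C := by
    have : 0 < 2 / π * Real.sin m2 * (C - A) := by
      apply mul_pos (mul_pos (by positivity) hS2); linarith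
    linarith
  calc (Real.cos B - Real.cos C) / (Real.cos A - Real.cos C)
      ≤ (2 * Real.sin m2 * (C - B)) / (2 / π * Real.sin m2 * (C - A)) := by
        apply div_le_div₀ (by nlinarith) hNu
          (mul_pos (mul_pos (by positivity) hS2) (by linarith)) hDe
    _ = π * (C - B) / (C - A) := by
        have hCA : C - A ≠ 0 := by intro h'; exact absurd h' (by intro h''; linarith)
        field_simp [hS2.ne']

lemma ratio3 {A B C h e f : ℝ} (hA : 0 ≤ A) (hAB : A < B) (hBC : B < C) (hC : C ≤ π)
    (hh : 0 < h) (he : 0 ≤ e) (hf : 0 ≤ f)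
    (h1 : C - B ≤ e * h) (h2 : h ≤ B - A) (h3 : C - A ≤ f * h) :
    (Real.cos B - Real.cos C) / (Real.cos A - Real.cos B) ≤ (1 + f) * (π / 2) * e := by
  have hpi := Real.pi_pos
  set m1 := (B + C) / 2 with hm1
  set m0 := (A + B) / 2 with hm0
  have hB0 : 0 < B := lt_of_le_of_lt hA hAB
  have hm0pos : 0 < m0 := by rw [hm0]; linarith
  have hm0le : m0 ≤ m1 := by rw [hm0, hm1]; linarith
  have hm1lt : m1 < π := by rw [hm1]; linarith
  have hS0 : 0 < Real.sin m0 :=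
    Real.sin_pos_of_pos_of_lt_pi hm0pos (lt_of_le_of_lt hm0le hm1lt)
  have hsin10 : Real.sin m1 ≤ (1 + f) * Real.sin m0 := by
    have hkey := sin_mul_le_aux hm0pos hm0le hm1lt.le
    have hm1le : m1 ≤ (1 + f) * m0 := by
      rw [hm0, hm1]
      nlinarith
    nlinarith
  have hNu : Real.cos B - Real.cos C ≤ (1 + f) * Real.sin m0 * (e * h) := by
    rw [cos_diff_eq]
    have hub : Real.sin ((C - B) / 2) ≤ (C - B) / 2 := Real.sin_le (by linarith)
    have hnn : 0 ≤ Real.sin ((C - B) / 2) := by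
      apply Real.sin_nonneg_of_nonneg_of_le_pi <;> linarith
    have h3' : 0 ≤ Real.sin m1 := by
      apply Real.sin_nonneg_of_nonneg_of_le_pi <;> linarith
    nlinarith
  have hDe : 2 / π * Real.sin m0 * h ≤ Real.cos A - Real.cos B := by
    rw [cos_diff_eq]
    have hlb : 2 / π * ((B - A) / 2) ≤ Real.sin ((B - A) / 2) :=
      Real.mul_le_sin (by linarith) (by linarith)
    nlinarith [mul_le_mul_of_nonneg_left hlb hS0.le,
      mul_le_mul_of_nonneg_left h2 (show (0:ℝ) ≤ 2 / π * Real.sin m0 by positivity)]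
  have hDepos : 0 < 2 / π * Real.sin m0 * h :=
    mul_pos (mul_pos (by positivity) hS0) hh
  calc (Real.cos B - Real.cos C) / (Real.cos A - Real.cos B)
      ≤ ((1 + f) * Real.sin m0 * (e * h)) / (2 / π * Real.sin m0 * h) :=
        div_le_div₀ (by positivity) hNu hDepos hDe
    _ = (1 + f) * (π / 2) * e := by
        field_simp [hS0.ne']

set_option maxHeartbeats 2000000 in
/-- An (n+1)-element subset of the (negated) Chebyshev points of the second kind,
obtained by removing `s` of the `N+1` points, is well-spaced with constants
`C = π²(s+1)/2` and `R = (s+1)(s+3)π²/4`. -/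
theorem chebyshev_subset_well_spaced
    (N s : ℕ) (hs : s + 2 < N) (n : ℕ) (hn : n = N - s)
    (α : ℕ → ℕ) (hα : ∀ k, k < n → α k < α (k + 1)) (hαN : α n ≤ N)
    (y : ℕ → ℝ) (hy : ∀ k, y k = -Real.cos (α k * Real.pi / N)) :
    (∀ j k : ℕ, j ≤ k → k + 1 ≤ n →
      (y (k + 1) - y k) / (y (k + 1) - y j) ≤
        (Real.pi ^ 2 * (s + 1) / 2) / ((k : ℝ) + 1 - j)) ∧
    (∀ k j : ℕ, k + 1 ≤ j → j ≤ n →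
      (y (k + 1) - y k) / (y j - y k) ≤
        (Real.pi ^ 2 * (s + 1) / 2) / ((j : ℝ) - k)) ∧
    (∀ k : ℕ, 1 ≤ k → k + 1 ≤ n →
      1 / ((s + 1) * (s + 3) * Real.pi ^ 2 / 4) ≤ (y (k + 1) - y k) / (y k - y (k - 1)) ∧
      (y (k + 1) - y k) / (y k - y (k - 1)) ≤ (s + 1) * (s + 3) * Real.pi ^ 2 / 4) := by
  have hpi := Real.pi_pos
  have hN0 : 0 < N := by omega
  have hNR : (0 : ℝ) < N := by exact_mod_cast hN0
  have hπN : (0:ℝ) < π / N := div_pos hpi hNR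
  have hnN : n + s = N := by omega
  have hn3 : 3 ≤ n := by omega
  have hs0 : (0:ℝ) ≤ s := Nat.cast_nonneg s
  -- monotonicity of α
  have hmono0 : ∀ i d : ℕ, i + d ≤ n → α i + d ≤ α (i + d) := by
    intro i d
    induction d with
    | zero => simp
    | succ d ih =>
      intro hle
      have h1 : α i + d ≤ α (i + d) := ih (by omega)
      have h2 : α (i + d) < α (i + d + 1) := hα _ (by omega)
      have he : i + (d + 1) = i + d + 1 := by omega
      rw [he]
      omega
  have hmono : ∀ i j : ℕ, i ≤ j → j ≤ n → α i + (j - i) ≤ α j := by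
    intro i j hij hjn
    have h1 := hmono0 i (j - i) (by omega)
    have he : i + (j - i) = j := by omega
    rwa [he] at h1
  set a : ℕ → ℝ := fun k => (α k : ℝ) * π / N with hadef
  have hyc : ∀ k, y k = -Real.cos (a k) := hy
  have haeq : ∀ k, a k = (α k : ℝ) * π / N := fun k => rfl
  have hαub : ∀ j : ℕ, j ≤ n → (α j : ℝ) ≤ s + j := by
    intro j hjn
    have h2 : α j + (n - j) ≤ N := le_trans (hmono j n hjn le_rfl) hαN
    have h3 : (α j : ℝ) + ((n : ℝ) - j) ≤ N := by
      have hc : ((n - j : ℕ) : ℝ) = (n : ℝ) - j := by rw [Nat.cast_sub hjn]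
      rw [← hc]; exact_mod_cast h2
    have hnn : (n : ℝ) + s = N := by exact_mod_cast hnN
    linarith
  have hαlb : ∀ j : ℕ, j ≤ n → (j : ℝ) ≤ α j := by
    intro j hjn
    have h1 := hmono 0 j (Nat.zero_le j) hjn
    have : j ≤ α j := by omega
    exact_mod_cast this
  have hgapLB : ∀ i j : ℕ, i ≤ j → j ≤ n → ((j : ℝ) - i) * (π / N) ≤ a j - a i := by
    intro i j hij hjn
    have h1 := hmono i j hij hjn
    have h2 : (α i : ℝ) + ((j : ℝ) - i) ≤ α j := by
      have hc : ((j - i : ℕ) : ℝ) = (j : ℝ) - i := by rw [Nat.cast_sub hij]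
      have h3 : (α i : ℝ) + ((j - i : ℕ) : ℝ) ≤ α j := by exact_mod_cast h1
      rwa [hc] at h3
    have he : a j - a i = ((α j : ℝ) - α i) * (π / N) := by
      rw [haeq, haeq]; ring
    rw [he]
    apply mul_le_mul_of_nonneg_right (by linarith) hπN.le
  have hgapUB : ∀ i j : ℕ, i ≤ j → j ≤ n →
      a j - a i ≤ ((s : ℝ) + ((j : ℝ) - i)) * (π / N) := by
    intro i j hij hjn
    have h1 := hαub j hjn
    have h2 := hαlb i (le_trans hij hjn)
    have he : a j - a i = ((α j : ℝ) - α i) * (π / N) := by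
      rw [haeq, haeq]; ring
    rw [he]
    apply mul_le_mul_of_nonneg_right (by linarith) hπN.le
  have ha0 : ∀ j : ℕ, 0 ≤ a j := by intro j; rw [haeq]; positivity
  have haπ : ∀ j : ℕ, j ≤ n → a j ≤ π := by
    intro j hjn
    have h1 := hαub j hjn
    have hnn : (n : ℝ) + s = N := by exact_mod_cast hnN
    have hjle : (j : ℝ) ≤ n := by exact_mod_cast hjn
    have h2 : (α j : ℝ) ≤ N := by linarith
    rw [haeq, div_le_iff₀ hNR]
    nlinarith
  have hamono : ∀ i j : ℕ, i ≤ j → j ≤ n → a i ≤ a j := by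
    intro i j hij hjn
    have h1 := hgapLB i j hij hjn
    have hji : (0:ℝ) ≤ (j : ℝ) - i := by
      have : (i:ℝ) ≤ j := by exact_mod_cast hij
      linarith
    nlinarith [mul_nonneg hji hπN.le]
  have hastrict : ∀ k : ℕ, k + 1 ≤ n → a k < a (k + 1) := by
    intro k hk
    have h1 := hgapLB k (k + 1) (Nat.le_succ k) hk
    have hc : ((k + 1 : ℕ) : ℝ) - k = 1 := by push_cast; ring
    rw [hc, one_mul] at h1
    linarith
  have hconst : ∀ x : ℝ, 0 ≤ x → π * x ≤ Real.pi ^ 2 * x / 2 := by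
    intro x hx
    have h2 : π ≤ π ^ 2 / 2 := by nlinarith [Real.pi_gt_three]
    nlinarith [mul_le_mul_of_nonneg_right h2 hx]
  refine ⟨?_, ?_, ?_⟩
  · -- Part 1
    intro j k hjk hk1
    have hjn : j ≤ n := by omega
    have hkn : k ≤ n := by omega
    have e1 : y (k + 1) - y k = Real.cos (a k) - Real.cos (a (k + 1)) := by
      rw [hyc (k + 1), hyc k]; ring
    have e2 : y (k + 1) - y j = Real.cos (a j) - Real.cos (a (k + 1)) := by
      rw [hyc (k + 1), hyc j]; ring
    rw [e1, e2]
    have hub := hgapUB k (k + 1) (Nat.le_succ k) hk1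
    have hlb := hgapLB j (k + 1) (by omega) hk1
    have hck : ((k + 1 : ℕ) : ℝ) = (k : ℝ) + 1 := by push_cast; ring
    rw [hck] at hub hlb
    rw [show ((s:ℝ) + ((k:ℝ) + 1 - (k:ℝ))) = (s:ℝ) + 1 from by ring] at hub
    have hd : (0:ℝ) < (k : ℝ) + 1 - j := by
      have : (j : ℝ) ≤ k := by exact_mod_cast hjk
      linarith
    calc (Real.cos (a k) - Real.cos (a (k + 1))) / (Real.cos (a j) - Real.cos (a (k + 1)))
        ≤ π * (a (k + 1) - a k) / (a (k + 1) - a j) :=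
          ratio1 (ha0 j) (hamono j k hjk hkn) (hastrict k hk1) (haπ (k + 1) hk1)
      _ ≤ π * (((s : ℝ) + 1) * (π / N)) / (((k : ℝ) + 1 - j) * (π / N)) :=
          div_le_div₀ (by positivity) (mul_le_mul_of_nonneg_left hub hpi.le)
            (by positivity) hlb
      _ = π * ((s : ℝ) + 1) / ((k : ℝ) + 1 - j) := by
          field_simp
      _ ≤ (Real.pi ^ 2 * ((s : ℝ) + 1) / 2) / ((k : ℝ) + 1 - j) :=
          div_le_div₀ (by positivity) (hconst _ (by positivity)) hd le_rfl
  · -- Part 2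
    intro k j hkj hjn
    have hk1 : k + 1 ≤ n := le_trans hkj hjn
    have e1 : y (k + 1) - y k = Real.cos (a k) - Real.cos (a (k + 1)) := by
      rw [hyc (k + 1), hyc k]; ring
    have e2 : y j - y k = Real.cos (a k) - Real.cos (a j) := by
      rw [hyc j, hyc k]; ring
    rw [e1, e2]
    have h := ratio1 (A := π - a j) (B := π - a (k + 1)) (C := π - a k)
      (by have := haπ j hjn; linarith)
      (by have := hamono (k + 1) j hkj hjn; linarith)
      (by have := hastrict k hk1; linarith)
      (by have := ha0 k; linarith)
    rw [Real.cos_pi_sub, Real.cos_pi_sub, Real.cos_pi_sub] at h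
    have eL : -Real.cos (a (k + 1)) - -Real.cos (a k)
        = Real.cos (a k) - Real.cos (a (k + 1)) := by ring
    have eL2 : -Real.cos (a j) - -Real.cos (a k)
        = Real.cos (a k) - Real.cos (a j) := by ring
    have eR : π - a k - (π - a (k + 1)) = a (k + 1) - a k := by ring
    have eR2 : π - a k - (π - a j) = a j - a k := by ring
    rw [eL, eL2, eR, eR2] at h
    have hub := hgapUB k (k + 1) (Nat.le_succ k) hk1
    have hlb := hgapLB k j (by omega) hjn
    have hck : ((k + 1 : ℕ) : ℝ) = (k : ℝ) + 1 := by push_cast; ring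
    rw [hck] at hub
    rw [show ((s:ℝ) + ((k:ℝ) + 1 - (k:ℝ))) = (s:ℝ) + 1 from by ring] at hub
    have hd : (0:ℝ) < (j : ℝ) - k := by
      have : (k:ℝ) < j := by exact_mod_cast hkj
      linarith
    calc (Real.cos (a k) - Real.cos (a (k + 1))) / (Real.cos (a k) - Real.cos (a j))
        ≤ π * (a (k + 1) - a k) / (a j - a k) := h
      _ ≤ π * (((s : ℝ) + 1) * (π / N)) / (((j : ℝ) - k) * (π / N)) :=
          div_le_div₀ (by positivity) (mul_le_mul_of_nonneg_left hub hpi.le)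
            (by positivity) hlb
      _ = π * ((s : ℝ) + 1) / ((j : ℝ) - k) := by
          field_simp
      _ ≤ (Real.pi ^ 2 * ((s : ℝ) + 1) / 2) / ((j : ℝ) - k) :=
          div_le_div₀ (by positivity) (hconst _ (by positivity)) hd le_rfl
  · -- Part 3
    intro k hk1 hk2
    obtain ⟨m, rfl⟩ : ∃ m, k = m + 1 := ⟨k - 1, by omega⟩
    simp only [Nat.add_sub_cancel]
    have hm2 : m + 1 + 1 ≤ n := hk2
    have eN : y (m + 1 + 1) - y (m + 1)
        = Real.cos (a (m + 1)) - Real.cos (a (m + 1 + 1)) := by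
      rw [hyc (m + 1 + 1), hyc (m + 1)]; ring
    have eD : y (m + 1) - y m = Real.cos (a m) - Real.cos (a (m + 1)) := by
      rw [hyc (m + 1), hyc m]; ring
    rw [eN, eD]
    have hAB : a m < a (m + 1) := hastrict m (by omega)
    have hBC : a (m + 1) < a (m + 1 + 1) := hastrict (m + 1) hk2
    have hC : a (m + 1 + 1) ≤ π := haπ _ hk2
    have hCB : a (m + 1 + 1) - a (m + 1) ≤ ((s:ℝ) + 1) * (π / N) := by
      have h1 := hgapUB (m + 1) (m + 1 + 1) (by omega) hk2
      have hc : ((s:ℝ) + (((m + 1 + 1 : ℕ) : ℝ) - ((m + 1 : ℕ) : ℝ))) = (s:ℝ) + 1 := by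
        push_cast; ring
      rw [hc] at h1; exact h1
    have hBA_ub : a (m + 1) - a m ≤ ((s:ℝ) + 1) * (π / N) := by
      have h1 := hgapUB m (m + 1) (by omega) (by omega)
      have hc : ((s:ℝ) + (((m + 1 : ℕ) : ℝ) - (m : ℝ))) = (s:ℝ) + 1 := by
        push_cast; ring
      rw [hc] at h1; exact h1
    have hBA_lb : π / N ≤ a (m + 1) - a m := by
      have h1 := hgapLB m (m + 1) (by omega) (by omega)
      have hc : (((m + 1 : ℕ) : ℝ) - (m : ℝ)) * (π / N) = π / N := by
        push_cast; ring
      rw [hc] at h1; exact h1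
    have hCB_lb : π / N ≤ a (m + 1 + 1) - a (m + 1) := by
      have h1 := hgapLB (m + 1) (m + 1 + 1) (by omega) hk2
      have hc : (((m + 1 + 1 : ℕ) : ℝ) - ((m + 1 : ℕ) : ℝ)) * (π / N) = π / N := by
        push_cast; ring
      rw [hc] at h1; exact h1
    have hCA : a (m + 1 + 1) - a m ≤ ((s:ℝ) + 2) * (π / N) := by
      have h1 := hgapUB m (m + 1 + 1) (by omega) hk2
      have hc : ((s:ℝ) + (((m + 1 + 1 : ℕ) : ℝ) - (m : ℝ))) = (s:ℝ) + 2 := by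
        push_cast; ring
      rw [hc] at h1; exact h1
    have hKR : (1 + ((s:ℝ) + 2)) * (π / 2) * ((s:ℝ) + 1)
        ≤ ((s:ℝ) + 1) * ((s:ℝ) + 3) * Real.pi ^ 2 / 4 := by
      have hss : (0:ℝ) ≤ ((s:ℝ) + 1) * ((s:ℝ) + 3) := by positivity
      have hhalf : π / 2 ≤ π ^ 2 / 4 := by
        have h2 : (0:ℝ) < π - 2 := by linarith [Real.pi_gt_three]
        nlinarith [mul_pos Real.pi_pos h2]
      rw [show (1 + ((s:ℝ) + 2)) * (π / 2) * ((s:ℝ) + 1)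
          = ((s:ℝ) + 1) * ((s:ℝ) + 3) * (π / 2) from by ring,
        show ((s:ℝ) + 1) * ((s:ℝ) + 3) * Real.pi ^ 2 / 4
          = ((s:ℝ) + 1) * ((s:ℝ) + 3) * (π ^ 2 / 4) from by ring]
      exact mul_le_mul_of_nonneg_left hhalf hss
    constructor
    · -- lower bound
      have hlow := ratio3 (A := π - a (m + 1 + 1)) (B := π - a (m + 1)) (C := π - a m)
        (h := π / N) (e := (s:ℝ) + 1) (f := (s:ℝ) + 2)
        (by linarith) (by linarith) (by linarith) (by have := ha0 m; linarith)
        hπN (by positivity) (by positivity)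
        (by linarith) (by linarith) (by linarith)
      rw [Real.cos_pi_sub, Real.cos_pi_sub, Real.cos_pi_sub] at hlow
      have eL : -Real.cos (a (m + 1)) - -Real.cos (a m)
          = Real.cos (a m) - Real.cos (a (m + 1)) := by ring
      have eL2 : -Real.cos (a (m + 1 + 1)) - -Real.cos (a (m + 1))
          = Real.cos (a (m + 1)) - Real.cos (a (m + 1 + 1)) := by ring
      rw [eL, eL2] at hlow
      have hNupos : 0 < Real.cos (a (m + 1)) - Real.cos (a (m + 1 + 1)) := by
        have := Real.cos_lt_cos_of_nonneg_of_le_pi (ha0 (m + 1)) hC hBC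
        linarith
      have hDepos : 0 < Real.cos (a m) - Real.cos (a (m + 1)) := by
        have := Real.cos_lt_cos_of_nonneg_of_le_pi (ha0 m) (by linarith) hAB
        linarith
      rw [div_le_div_iff₀ (by positivity) hDepos]
      have hD : Real.cos (a m) - Real.cos (a (m + 1))
          ≤ (1 + ((s:ℝ) + 2)) * (π / 2) * ((s:ℝ) + 1)
            * (Real.cos (a (m + 1)) - Real.cos (a (m + 1 + 1))) :=
        (div_le_iff₀ hNupos).mp hlow
      nlinarith [hNupos, hKR, mul_le_mul_of_nonneg_right hKR hNupos.le]
    · -- upper bound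
      have hup := ratio3 (A := a m) (B := a (m + 1)) (C := a (m + 1 + 1))
        (h := π / N) (e := (s:ℝ) + 1) (f := (s:ℝ) + 2)
        (ha0 m) hAB hBC hC hπN (by positivity) (by positivity)
        hCB hBA_lb hCA
      linarith [hKR]
end

section
/- Let n ≥ 3, let a = x_0 < x_1 < ... < x_n = b be real numbers, and let f be twice continuously differentiable on [a, b]. Set h = max_{0 ≤ i ≤ n-1} (x_{i+1} - x_i) and λ = max_{1 ≤ i ≤ n-2} min{(x_{i+1} - x_i)/(x_i - x_{i-1}), (x_{i+1} - x_i)/(x_{i+2} - x_{i+1})}. Then for every x ∈ [a, b] with x ≠ x_i for all i: if n is odd, |r(x) - f(x)| ≤ h(1+λ)(b-a)·(max_{t∈[a,b]} |f''(t)|)/2; and if n is even, |r(x) - f(x)| ≤ h(1+λ)·((b-a)·(max_{t∈[a,b]} |f''(t)|)/2 + max_{t∈[a,b]} |f'(t)|). -/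
/-!
Write `D(z) = ∑ (-1)^i / (z - x_i)` and `f[z, y] = slope f z y`. Then
`r(z) - f(z) = -(∑ (-1)^i f[z, x_i]) / D(z)`, and the two sums are bounded separately.

If `x_J < z < x_{J+1}`, then `(-1)^J D(z)` is the sum of two alternating sums of decreasing
positive terms, `1/|z - x_i|` over the nodes to the left of `z` and over those to its right.
Each is nonnegative and at least the difference of its first two terms. With `d_i = x_{i+1} - x_i`,
one of `d_J / d_{J-1}` and `d_J / d_{J+1}` is at most `λ`, and the corresponding difference is then
at least `1/((1+λ) d_J) ≥ 1/((1+λ) h)`. On the two end intervals a single term `1/|z - x_i|`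
already suffices.

In the numerator consecutive terms pair off. From `f[z, y] = ∫₀¹ f'(z + (y - z) t) dt` the map
`y ↦ f[z, y]` is `M₂/2`-Lipschitz, so the pairs contribute at most `M₂ (b - a) / 2`. When `n` is
even the last term is left over, and `|f[z, x_n]| ≤ M₁` by the mean value inequality.
-/

open Finset

theorem sum_range_succ_succ_neg_one_pow_mul (u : ℕ → ℝ) (m : ℕ) :
    ∑ k ∈ range (m + 2), (-1) ^ k * u k = u 0 - ∑ k ∈ range (m + 1), (-1) ^ k * u (k + 1) := by
  rw [sum_range_succ' _ (m + 1)]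
  simp only [pow_succ, mul_neg_one, neg_mul, sum_neg_distrib]
  ring

theorem sum_range_neg_one_pow_mul_mem_Icc {u : ℕ → ℝ} {m : ℕ}
    (hu : AntitoneOn u (Set.Iic m)) (hm : 0 ≤ u m) :
    ∑ k ∈ range (m + 1), (-1) ^ k * u k ∈ Set.Icc 0 (u 0) := by
  induction m generalizing u with
  | zero => simpa using hm
  | succ m ih =>
    have hshift : AntitoneOn (fun k => u (k + 1)) (Set.Iic m) := fun i hi j hj hij =>
      hu (by simpa using hi) (by simpa using hj) (by omega)
    obtain ⟨h0, h1⟩ := ih hshift hm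
    have hu01 : u 1 ≤ u 0 := hu (by simp) (by simp) zero_le_one
    rw [sum_range_succ_succ_neg_one_pow_mul]
    constructor <;> linarith

theorem sub_le_sum_range_neg_one_pow_mul {u : ℕ → ℝ} {m : ℕ}
    (hu : AntitoneOn u (Set.Iic (m + 1))) (hm : 0 ≤ u (m + 1)) :
    u 0 - u 1 ≤ ∑ k ∈ range (m + 2), (-1) ^ k * u k := by
  have hshift : AntitoneOn (fun k => u (k + 1)) (Set.Iic m) := fun i hi j hj hij =>
    hu (by simpa using hi) (by simpa using hj) (by omega)
  rw [sum_range_succ_succ_neg_one_pow_mul]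
  linarith [(sum_range_neg_one_pow_mul_mem_Icc hshift hm).2]

theorem inv_one_add_mul_le_inv_sub_inv {s d d' lam : ℝ} (hs : 0 < s) (hsd : s < d) (hd' : 0 < d')
    (hlam : d / d' ≤ lam) : ((1 + lam) * d)⁻¹ ≤ s⁻¹ - (s + d')⁻¹ := by
  have hd : d ≤ lam * d' := (div_le_iff₀ hd').1 hlam
  rw [inv_sub_inv hs.ne' (by positivity), add_sub_cancel_left, inv_eq_one_div,
    div_le_div_iff₀ (by nlinarith) (by positivity)]
  nlinarith [mul_lt_mul_of_pos_right hsd hd']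

theorem antitoneOn_inv_of_monotoneOn {e : ℕ → ℝ} {m : ℕ} (he : MonotoneOn e (Set.Iic m))
    (he0 : 0 < e 0) : AntitoneOn (fun k => (e k)⁻¹) (Set.Iic m) := fun i hi j hj hij =>
  inv_anti₀ (he0.trans_le (he (by simp) hi (Nat.zero_le i))) (he hi hj hij)

theorem sum_range_neg_one_pow_div_nonneg {e : ℕ → ℝ} {m : ℕ} (he : MonotoneOn e (Set.Iic m))
    (he0 : 0 < e 0) : 0 ≤ ∑ k ∈ range (m + 1), (-1) ^ k / e k := by
  simp only [div_eq_mul_inv]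
  refine (sum_range_neg_one_pow_mul_mem_Icc (antitoneOn_inv_of_monotoneOn he he0) ?_).1
  exact inv_nonneg.2 (he0.le.trans (he (by simp) (by simp) (Nat.zero_le m)))

theorem inv_le_sum_range_neg_one_pow_div {e : ℕ → ℝ} {m : ℕ} {d lam : ℝ}
    (he : StrictMonoOn e (Set.Iic m)) (he0 : 0 < e 0) (hd : e 0 < d) (hlam0 : 0 ≤ lam)
    (hloc : m = 0 ∨ d / (e 1 - e 0) ≤ lam) :
    ((1 + lam) * d)⁻¹ ≤ ∑ k ∈ range (m + 1), (-1) ^ k / e k := by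
  rcases m with _ | m
  · simp only [zero_add, range_one, sum_singleton, pow_zero, one_div]
    exact inv_anti₀ he0 (by nlinarith)
  · have hloc : d / (e 1 - e 0) ≤ lam := hloc.resolve_left (Nat.succ_ne_zero m)
    have he01 : e 0 < e 1 := he (by simp) (by simp) zero_lt_one
    have hlast : 0 ≤ (e (m + 1))⁻¹ :=
      inv_nonneg.2 (he0.le.trans (he.monotoneOn (by simp) (by simp) (Nat.zero_le _)))
    calc ((1 + lam) * d)⁻¹ ≤ (e 0)⁻¹ - (e 0 + (e 1 - e 0))⁻¹ :=
          inv_one_add_mul_le_inv_sub_inv he0 hd (sub_pos.2 he01) hloc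
      _ = (e 0)⁻¹ - (e 1)⁻¹ := by rw [add_sub_cancel]
      _ ≤ ∑ k ∈ range (m + 2), (-1) ^ k / e k := by
          simp only [div_eq_mul_inv]
          exact sub_le_sum_range_neg_one_pow_mul (u := fun k => (e k)⁻¹)
            (antitoneOn_inv_of_monotoneOn he.monotoneOn he0) hlast

theorem neg_one_pow_mul_sum_range_div_sub (x : ℕ → ℝ) {n J : ℕ} (hJ : J < n) (z : ℝ) :
    (-1) ^ J * ∑ i ∈ range (n + 1), (-1) ^ i / (z - x i) =
      ∑ k ∈ range (J + 1), (-1) ^ k / (z - x (J - k)) +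
        ∑ k ∈ range (n - J), (-1) ^ k / (x (J + 1 + k) - z) := by
  rw [show n + 1 = J + 1 + (n - J) by omega, sum_range_add, mul_add, mul_sum, mul_sum,
    ← sum_range_reflect _ (J + 1)]
  congr 1
  · refine sum_congr rfl fun k hk => ?_
    have hkJ : k ≤ J := Nat.lt_succ_iff.1 (mem_range.1 hk)
    rw [show J + 1 - 1 - k = J - k by omega, ← mul_div_assoc, ← pow_add,
      show J + (J - k) = 2 * (J - k) + k by omega, pow_add, pow_mul, neg_one_sq, one_pow, one_mul]
  · refine sum_congr rfl fun k _ => ?_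
    rw [← mul_div_assoc, ← pow_add, show J + (J + 1 + k) = 2 * J + 1 + k by omega, pow_add,
      pow_add, pow_mul, neg_one_sq, one_pow, one_mul, ← neg_div_neg_eq, neg_sub]
    ring

theorem inv_le_abs_sum_range_neg_one_pow_div {x : ℕ → ℝ} {n J : ℕ} {z lam : ℝ}
    (hx : StrictMonoOn x (Set.Iic n)) (hJ : J < n) (hxz : x J < z) (hzx : z < x (J + 1))
    (hlam0 : 0 ≤ lam)
    (hlam : ∀ i ∈ Icc 1 (n - 2), min ((x (i + 1) - x i) / (x i - x (i - 1)))
      ((x (i + 1) - x i) / (x (i + 2) - x (i + 1))) ≤ lam) :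
    ((1 + lam) * (x (J + 1) - x J))⁻¹ ≤ |∑ i ∈ range (n + 1), (-1) ^ i / (z - x i)| := by
  set A := ∑ k ∈ range (J + 1), (-1) ^ k / (z - x (J - k))
  obtain ⟨m, hm⟩ : ∃ m, n - J = m + 1 := ⟨n - J - 1, by omega⟩
  set B := ∑ k ∈ range (m + 1), (-1) ^ k / (x (J + 1 + k) - z)
  have hleft : StrictMonoOn (fun k => z - x (J - k)) (Set.Iic J) := fun i hi j hj hij =>
    sub_lt_sub_left (hx (by simp; omega) (by simp; omega) (by simp at hj; omega)) z
  have hright : StrictMonoOn (fun k => x (J + 1 + k) - z) (Set.Iic m) :=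
    fun i hi j hj hij => sub_lt_sub_right (hx (by simp at hi; simp; omega)
      (by simp at hj; simp; omega) (by omega)) z
  have hA0 : 0 ≤ A := sum_range_neg_one_pow_div_nonneg hleft.monotoneOn (by simpa using hxz)
  have hB0 : 0 ≤ B := sum_range_neg_one_pow_div_nonneg hright.monotoneOn (by simpa using hzx)
  have hA : J = 0 ∨ (x (J + 1) - x J) / (x J - x (J - 1)) ≤ lam →
      ((1 + lam) * (x (J + 1) - x J))⁻¹ ≤ A := fun hloc =>
    inv_le_sum_range_neg_one_pow_div hleft (by simpa using hxz) (by simpa using hzx) hlam0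
      (by simpa using hloc)
  have hB : m = 0 ∨ (x (J + 1) - x J) / (x (J + 2) - x (J + 1)) ≤ lam →
      ((1 + lam) * (x (J + 1) - x J))⁻¹ ≤ B := fun hloc =>
    inv_le_sum_range_neg_one_pow_div hright (by simpa using hzx) (by simpa using hxz) hlam0
      (by simpa [add_assoc] using hloc)
  have hAB : ((1 + lam) * (x (J + 1) - x J))⁻¹ ≤ A + B := by
    by_cases hJ0 : J = 0
    · linarith [hA (.inl hJ0)]
    by_cases hJn : J = n - 1
    · linarith [hB (.inl (by omega))]
    rcases min_le_iff.1 (hlam J (mem_Icc.2 ⟨by omega, by omega⟩)) with h | h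
    · linarith [hA (.inr h)]
    · linarith [hB (.inr h)]
  calc _ ≤ A + B := hAB
    _ = (-1) ^ J * ∑ i ∈ range (n + 1), (-1) ^ i / (z - x i) := by
      rw [neg_one_pow_mul_sum_range_div_sub x hJ z, hm]
    _ ≤ |(-1) ^ J * ∑ i ∈ range (n + 1), (-1) ^ i / (z - x i)| := le_abs_self _
    _ = |∑ i ∈ range (n + 1), (-1) ^ i / (z - x i)| := by simp [abs_mul]

theorem abs_slope_le_of_abs_deriv_le {s : Set ℝ} (hs : Convex ℝ s) {f f' : ℝ → ℝ} {M : ℝ}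
    (hf : ∀ t ∈ s, HasDerivWithinAt f (f' t) s t) (hM : ∀ t ∈ s, |f' t| ≤ M)
    {z y : ℝ} (hz : z ∈ s) (hy : y ∈ s) : |slope f z y| ≤ M := by
  have hmvt := hs.norm_image_sub_le_of_norm_hasDerivWithin_le hf hM hz hy
  rw [slope_def_field, abs_div]
  exact div_le_of_le_mul₀ (abs_nonneg _) ((abs_nonneg _).trans (hM z hz)) hmvt

theorem slope_eq_integral_deriv {a b : ℝ} {f f' : ℝ → ℝ}
    (hf : ∀ t ∈ Set.Icc a b, HasDerivWithinAt f (f' t) (Set.Icc a b) t)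
    (hf' : ContinuousOn f' (Set.Icc a b)) {z y : ℝ} (hz : z ∈ Set.Icc a b)
    (hy : y ∈ Set.Icc a b) (hyz : y ≠ z) :
    slope f z y = ∫ t in (0 : ℝ)..1, f' (z + (y - z) * t) := by
  have hsub : Set.uIcc z y ⊆ Set.Icc a b := Set.uIcc_subset_Icc hz hy
  have hftc : ∫ t in z..y, f' t = f y - f z := by
    refine intervalIntegral.integral_eq_sub_of_hasDeriv_right
      (fun t ht => (hf t (hsub ht)).continuousWithinAt.mono hsub) (fun t ht => ?_)
      ((hf'.mono hsub).intervalIntegrable)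
    have ht' : t ∈ Set.Ioo a b := Set.Ioo_subset_Ioo (le_min hz.1 hy.1) (max_le hz.2 hy.2) ht
    exact ((hf t (Set.Ioo_subset_Icc_self ht')).hasDerivAt
      (Icc_mem_nhds ht'.1 ht'.2)).hasDerivWithinAt
  rw [intervalIntegral.integral_comp_add_mul _ (sub_ne_zero.2 hyz), slope_def_field]
  simp [hftc, div_eq_inv_mul]

theorem abs_slope_sub_slope_le {a b : ℝ} {f f' f'' : ℝ → ℝ} {M : ℝ}
    (hf : ∀ t ∈ Set.Icc a b, HasDerivWithinAt f (f' t) (Set.Icc a b) t)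
    (hf' : ∀ t ∈ Set.Icc a b, HasDerivWithinAt f' (f'' t) (Set.Icc a b) t)
    (hM : ∀ t ∈ Set.Icc a b, |f'' t| ≤ M) {z u v : ℝ} (hz : z ∈ Set.Icc a b)
    (hu : u ∈ Set.Icc a b) (hv : v ∈ Set.Icc a b) (huz : u ≠ z) (hvz : v ≠ z) :
    |slope f z u - slope f z v| ≤ M / 2 * |u - v| := by
  have hcont : ContinuousOn f' (Set.Icc a b) := fun t ht =>
    (hf' t ht).continuousWithinAt
  have hseg : ∀ y ∈ Set.Icc a b, ∀ t ∈ Set.Icc (0 : ℝ) 1, z + (y - z) * t ∈ Set.Icc a b :=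
    fun y hy t ht => by simpa [mul_comm] using (convex_Icc a b).add_smul_sub_mem hz hy ht
  have hint : ∀ y ∈ Set.Icc a b,
      IntervalIntegrable (fun t => f' (z + (y - z) * t)) MeasureTheory.volume 0 1 := fun y hy =>
    (hcont.comp (by fun_prop) fun t ht =>
      hseg y hy t (by simpa [Set.uIcc_of_le] using ht)).intervalIntegrable
  rw [slope_eq_integral_deriv hf hcont hz hu huz, slope_eq_integral_deriv hf hcont hz hv hvz,
    ← intervalIntegral.integral_sub (hint u hu) (hint v hv)]
  have hbound : ∀ t ∈ Set.Ioc (0 : ℝ) 1,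
      ‖f' (z + (u - z) * t) - f' (z + (v - z) * t)‖ ≤ M * |u - v| * t := fun t ht => by
    have ht' : t ∈ Set.Icc (0 : ℝ) 1 := Set.Ioc_subset_Icc_self ht
    calc ‖f' (z + (u - z) * t) - f' (z + (v - z) * t)‖
        ≤ M * ‖z + (u - z) * t - (z + (v - z) * t)‖ :=
          (convex_Icc a b).norm_image_sub_le_of_norm_hasDerivWithin_le hf' hM
            (hseg v hv t ht') (hseg u hu t ht')
      _ = M * |u - v| * t := by
          rw [Real.norm_eq_abs, show z + (u - z) * t - (z + (v - z) * t) = (u - v) * t by ring,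
            abs_mul, abs_of_nonneg ht'.1]
          ring
  calc _ ≤ ∫ t in (0 : ℝ)..1, M * |u - v| * t :=
        intervalIntegral.norm_integral_le_of_norm_le zero_le_one
          (MeasureTheory.ae_of_all _ hbound)
          (Continuous.intervalIntegrable (by fun_prop) _ _)
    _ = M / 2 * |u - v| := by
        rw [intervalIntegral.integral_const_mul, integral_id]
        ring

theorem sum_range_two_mul_eq_sum_pairs {M : Type*} [AddCommMonoid M] (g : ℕ → M) (m : ℕ) :
    ∑ i ∈ range (2 * m), g i = ∑ k ∈ range m, (g (2 * k) + g (2 * k + 1)) := by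
  induction m with
  | zero => simp
  | succ m ih =>
    rw [mul_add, mul_one, sum_range_succ, sum_range_succ, sum_range_succ, ih, add_assoc]

theorem sum_range_pair_gaps_le {x : ℕ → ℝ} {N m : ℕ} (hx : MonotoneOn x (Set.Iic N))
    (hm : 2 * m ≤ N + 1) : ∑ k ∈ range m, (x (2 * k + 1) - x (2 * k)) ≤ x N - x 0 := by
  have hgap : ∀ i < N, 0 ≤ x (i + 1) - x i := fun i hi =>
    sub_nonneg.2 (hx (by simp; omega) (by simp; omega) (Nat.le_succ i))
  calc ∑ k ∈ range m, (x (2 * k + 1) - x (2 * k))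
      = ∑ i ∈ (range m).image (2 * ·), (x (i + 1) - x i) := by
        rw [sum_image fun p _ q _ h => by simpa using h]
    _ ≤ ∑ i ∈ range N, (x (i + 1) - x i) :=
        sum_le_sum_of_subset_of_nonneg (fun i hi => by simp at hi ⊢; omega)
          fun i hi _ => hgap i (mem_range.1 hi)
    _ = x N - x 0 := sum_range_sub x N

theorem abs_sum_range_two_mul_neg_one_pow_slope_le {a b : ℝ} {f f' f'' : ℝ → ℝ} {M : ℝ}
    (hf : ∀ t ∈ Set.Icc a b, HasDerivWithinAt f (f' t) (Set.Icc a b) t)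
    (hf' : ∀ t ∈ Set.Icc a b, HasDerivWithinAt f' (f'' t) (Set.Icc a b) t)
    (hM : ∀ t ∈ Set.Icc a b, |f'' t| ≤ M) {x : ℕ → ℝ} {N m : ℕ} {z : ℝ}
    (hx : MonotoneOn x (Set.Iic N)) (hxab : ∀ i ≤ N, x i ∈ Set.Icc a b) (hz : z ∈ Set.Icc a b)
    (hzx : ∀ i ≤ N, z ≠ x i) (hm : 2 * m ≤ N + 1) :
    |∑ i ∈ range (2 * m), (-1) ^ i * slope f z (x i)| ≤ M / 2 * (x N - x 0) := by
  have hpair : ∀ k ∈ range m, |slope f z (x (2 * k)) - slope f z (x (2 * k + 1))| ≤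
      M / 2 * (x (2 * k + 1) - x (2 * k)) := fun k hk => by
    have hk : 2 * k + 1 ≤ N := by simp at hk; omega
    have h := abs_slope_sub_slope_le hf hf' hM hz (hxab (2 * k) (by omega)) (hxab _ hk)
      (hzx (2 * k) (by omega)).symm (hzx _ hk).symm
    rwa [abs_of_nonpos (sub_nonpos.2 (hx (Set.mem_Iic.2 (by omega)) (Set.mem_Iic.2 hk)
      (by omega))), neg_sub] at h
  rw [sum_range_two_mul_eq_sum_pairs]
  calc _ ≤ ∑ k ∈ range m, |slope f z (x (2 * k)) - slope f z (x (2 * k + 1))| := by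
        refine (abs_sum_le_sum_abs _ _).trans_eq (sum_congr rfl fun k _ => ?_)
        rw [pow_succ, pow_mul, neg_one_sq, one_pow]
        ring_nf
    _ ≤ ∑ k ∈ range m, M / 2 * (x (2 * k + 1) - x (2 * k)) := sum_le_sum hpair
    _ ≤ M / 2 * (x N - x 0) := by
        rw [← mul_sum]
        exact mul_le_mul_of_nonneg_left (sum_range_pair_gaps_le hx hm)
          (by linarith [(abs_nonneg _).trans (hM z hz)])

theorem berrut_sub_eq {x : ℕ → ℝ} {n : ℕ} (f : ℝ → ℝ) {z : ℝ} (hzx : ∀ i ≤ n, z ≠ x i)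
    (hD : ∑ i ∈ range (n + 1), (-1 : ℝ) ^ i / (z - x i) ≠ 0) :
    (∑ i ∈ range (n + 1), ((-1 : ℝ) ^ i / (z - x i)) * f (x i)) /
        (∑ i ∈ range (n + 1), (-1 : ℝ) ^ i / (z - x i)) - f z =
      -(∑ i ∈ range (n + 1), (-1) ^ i * slope f z (x i)) /
        ∑ i ∈ range (n + 1), (-1 : ℝ) ^ i / (z - x i) := by
  rw [div_sub' hD, sum_mul, ← sum_sub_distrib, ← sum_neg_distrib]
  congr 1
  refine sum_congr rfl fun i hi => ?_
  have hi : z - x i ≠ 0 := sub_ne_zero.2 (hzx i (Nat.lt_succ_iff.1 (mem_range.1 hi)))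
  rw [slope_def_field, ← neg_sub z]
  field_simp

theorem exists_lt_lt_of_forall_ne {x : ℕ → ℝ} {n : ℕ} {z : ℝ} (h0 : x 0 ≤ z) (hn : z ≤ x n)
    (hzx : ∀ i ≤ n, z ≠ x i) : ∃ J < n, x J < z ∧ z < x (J + 1) := by
  classical
  have hex : ∃ i, z < x i := ⟨n, hn.lt_of_ne (hzx n le_rfl)⟩
  obtain ⟨J, hJ⟩ : ∃ J, Nat.find hex = J + 1 :=
    Nat.exists_eq_succ_of_ne_zero fun h => (h ▸ Nat.find_spec hex).not_ge h0
  have hle : J + 1 ≤ n := hJ ▸ Nat.find_min' hex (hn.lt_of_ne (hzx n le_rfl))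
  refine ⟨J, by omega, ?_, hJ ▸ Nat.find_spec hex⟩
  exact (not_lt.1 (Nat.find_min hex (by omega))).lt_of_ne (hzx J (by omega)).symm

theorem abs_berrut_sub_le {x : ℕ → ℝ} {n : ℕ} (f : ℝ → ℝ) {z h lam B : ℝ}
    (hx : StrictMonoOn x (Set.Iic n)) (h0 : x 0 ≤ z) (hn : z ≤ x n) (hzx : ∀ i ≤ n, z ≠ x i)
    (hh : ∀ i < n, x (i + 1) - x i ≤ h) (hlam0 : 0 ≤ lam)
    (hlam : ∀ i ∈ Icc 1 (n - 2), min ((x (i + 1) - x i) / (x i - x (i - 1)))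
      ((x (i + 1) - x i) / (x (i + 2) - x (i + 1))) ≤ lam)
    (hS : |∑ i ∈ range (n + 1), (-1) ^ i * slope f z (x i)| ≤ B) :
    |(∑ i ∈ range (n + 1), ((-1 : ℝ) ^ i / (z - x i)) * f (x i)) /
        (∑ i ∈ range (n + 1), (-1 : ℝ) ^ i / (z - x i)) - f z| ≤ (1 + lam) * h * B := by
  obtain ⟨J, hJ, hxz, hzx'⟩ := exists_lt_lt_of_forall_ne h0 hn hzx
  have hd : 0 < x (J + 1) - x J := sub_pos.2 (hxz.trans hzx')
  have hlam1 : 0 < 1 + lam := by linarith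
  have hC : 0 < (1 + lam) * h := mul_pos hlam1 (hd.trans_le (hh J hJ))
  have hD : ((1 + lam) * h)⁻¹ ≤ |∑ i ∈ range (n + 1), (-1 : ℝ) ^ i / (z - x i)| :=
    (inv_anti₀ (mul_pos hlam1 hd) (by gcongr; exact hh J hJ)).trans
      (inv_le_abs_sum_range_neg_one_pow_div hx hJ hxz hzx' hlam0 hlam)
  have hD0 := (inv_pos.2 hC).trans_le hD
  rw [berrut_sub_eq f hzx (abs_pos.1 hD0), abs_div, abs_neg, div_eq_mul_inv, mul_comm]
  exact mul_le_mul ((inv_le_comm₀ hC hD0).1 hD) hS (abs_nonneg _) hC.le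

/-- Error bound for Berrut's rational interpolant of a twice continuously
differentiable function, in terms of the maximal mesh size `h` and the local
mesh ratio `λ`. Here `M₁ = max_{[a,b]} |f'|` and `M₂ = max_{[a,b]} |f''|`. -/
theorem berrut_interpolation_error
    (n : ℕ) (hn : 3 ≤ n) (a b : ℝ) (x : ℕ → ℝ)
    (ha : x 0 = a) (hb : x n = b)
    (hmono : ∀ i, i < n → x i < x (i + 1))
    (f f' f'' : ℝ → ℝ)
    (hf' : ∀ t ∈ Set.Icc a b, HasDerivWithinAt f (f' t) (Set.Icc a b) t)
    (hf'' : ∀ t ∈ Set.Icc a b, HasDerivWithinAt f' (f'' t) (Set.Icc a b) t)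
    (h lam M₁ M₂ : ℝ)
    (hh : h = (Finset.range n).sup' (Finset.nonempty_range_iff.mpr (by omega))
      (fun i => x (i + 1) - x i))
    (hlam : lam = (Finset.Icc 1 (n - 2)).sup' (Finset.nonempty_Icc.mpr (by omega))
      (fun i => min ((x (i + 1) - x i) / (x i - x (i - 1)))
                    ((x (i + 1) - x i) / (x (i + 2) - x (i + 1)))))
    (hM₁ub : ∀ t ∈ Set.Icc a b, |f' t| ≤ M₁)
    (hM₂ub : ∀ t ∈ Set.Icc a b, |f'' t| ≤ M₂) :
    ∀ z ∈ Set.Icc a b, (∀ i ≤ n, z ≠ x i) →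
      (Odd n →
        |(∑ i ∈ Finset.range (n + 1), ((-1 : ℝ) ^ i / (z - x i)) * f (x i)) /
            (∑ j ∈ Finset.range (n + 1), (-1 : ℝ) ^ j / (z - x j)) - f z| ≤
          h * (1 + lam) * (b - a) * M₂ / 2) ∧
      (Even n →
        |(∑ i ∈ Finset.range (n + 1), ((-1 : ℝ) ^ i / (z - x i)) * f (x i)) /
            (∑ j ∈ Finset.range (n + 1), (-1 : ℝ) ^ j / (z - x j)) - f z| ≤
          h * (1 + lam) * ((b - a) * M₂ / 2 + M₁)) := by
  intro z hz hzx
  have hx : StrictMonoOn x (Set.Iic n) := strictMonoOn_Iic_of_lt_succ hmono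
  have hxab : ∀ i ≤ n, x i ∈ Set.Icc a b := fun i hi =>
    ⟨ha ▸ hx.monotoneOn (Set.mem_Iic.2 (Nat.zero_le n)) hi (Nat.zero_le i),
      hb ▸ hx.monotoneOn hi (Set.mem_Iic.2 le_rfl) hi⟩
  have hlam0 : 0 ≤ lam := hlam ▸ le_sup'_of_le _ (mem_Icc.2 ⟨le_rfl, by omega⟩)
    (le_min (div_pos (sub_pos.2 (hmono 1 (by omega))) (sub_pos.2 (hmono 0 (by omega)))).le
      (div_pos (sub_pos.2 (hmono 1 (by omega))) (sub_pos.2 (hmono 2 (by omega)))).le)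
  have herr := fun B : ℝ => abs_berrut_sub_le f (h := h) (lam := lam) (B := B) hx (ha ▸ hz.1)
    (hb ▸ hz.2) hzx (fun i hi => by rw [hh]; apply le_sup' _ (mem_range.2 hi)) hlam0
    (fun i hi => by rw [hlam]; apply le_sup' _ hi)
  have hpairs : ∀ m, 2 * m ≤ n + 1 →
      |∑ i ∈ range (2 * m), (-1) ^ i * slope f z (x i)| ≤ M₂ / 2 * (b - a) := fun m hm =>
    ha ▸ hb ▸ abs_sum_range_two_mul_neg_one_pow_slope_le hf' hf'' hM₂ub hx.monotoneOn hxab hz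
      hzx hm
  refine ⟨fun ⟨m, hm⟩ => (herr (M₂ / 2 * (b - a)) ?_).trans_eq (by ring),
    fun ⟨m, hm⟩ => (herr (M₂ / 2 * (b - a) + M₁) ?_).trans_eq (by ring)⟩
  · rw [show n + 1 = 2 * (m + 1) by omega]
    exact hpairs (m + 1) (by omega)
  · rw [show n + 1 = 2 * m + 1 by omega, sum_range_succ, Even.neg_one_pow ⟨m, two_mul m⟩, one_mul]
    exact (abs_add_le _ _).trans (add_le_add (hpairs m (by omega))
      (abs_slope_le_of_abs_deriv_le (convex_Icc a b) hf' hM₁ub hz (hxab (2 * m) (by omega))))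
end

section
/- Let N and s be integers with 0 ≤ s < N - 2 and set n = N - s, and suppose n is odd with n ≥ 3. Let α_0 < α_1 < ... < α_n be integers with 0 ≤ α_0 and α_n ≤ N, and define the nodes y_k = -cos(α_k π / N). Let g be twice continuously differentiable on [-1, 1], and let r be Berrut's rational interpolant of the values g(y_0),...,g(y_n) at the nodes y_0,...,y_n. Then for every z ∈ [y_0, y_n] with z ≠ y_i for all i, |r(z) - g(z)| ≤ 2(1 + R)·sin((s+1)π/(2N))·max_{t∈[-1,1]} |g''(t)|, where R = (s+1)(s+3)π²/4. -/
open Finset Real MeasureTheory intervalIntegral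

private lemma alt_sum_aux :
    ∀ (m : ℕ) (u : ℕ → ℝ), (∀ i, i + 1 < m → u (i + 1) ≤ u i) → (∀ i, i < m → 0 ≤ u i) →
      0 ≤ ∑ i ∈ Finset.range m, (-1 : ℝ) ^ i * u i ∧
        (0 < m → ∑ i ∈ Finset.range m, (-1 : ℝ) ^ i * u i ≤ u 0) := by
  intro m
  induction m with
  | zero => intro u _ _; simp
  | succ m ih =>
    intro u hmono hpos
    have key : ∑ i ∈ Finset.range (m + 1), (-1 : ℝ) ^ i * u i
        = u 0 - ∑ i ∈ Finset.range m, (-1 : ℝ) ^ i * u (i + 1) := by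
      rw [Finset.sum_range_succ' (fun i => (-1 : ℝ) ^ i * u i) m]
      have h1 : ∀ i ∈ Finset.range m, (-1 : ℝ) ^ (i + 1) * u (i + 1)
          = -((-1 : ℝ) ^ i * u (i + 1)) := by intro i _; ring
      rw [Finset.sum_congr rfl h1, Finset.sum_neg_distrib]
      simp; ring
    obtain ⟨h0, h1⟩ := ih (fun i => u (i + 1))
      (fun i hi => hmono (i + 1) (by omega)) (fun i hi => hpos (i + 1) (by omega))
    constructor
    · rw [key]
      rcases Nat.eq_zero_or_pos m with hm | hm
      · subst hm; simpa using hpos 0 (by omega)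
      · have := h1 hm
        have hu10 : u 1 ≤ u 0 := hmono 0 (by omega)
        linarith
    · intro _
      rw [key]; linarith

private lemma alt_sum_nonneg (m : ℕ) (u : ℕ → ℝ)
    (hmono : ∀ i, i + 1 < m → u (i + 1) ≤ u i) (hpos : ∀ i, i < m → 0 ≤ u i) :
    0 ≤ ∑ i ∈ Finset.range m, (-1 : ℝ) ^ i * u i :=
  (alt_sum_aux m u hmono hpos).1

private lemma alt_sum_lower (m : ℕ) (u : ℕ → ℝ)
    (hmono : ∀ i, i + 1 < m → u (i + 1) ≤ u i) (hpos : ∀ i, i < m → 0 ≤ u i)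
    (hm : 2 ≤ m) :
    u 0 - u 1 ≤ ∑ i ∈ Finset.range m, (-1 : ℝ) ^ i * u i := by
  obtain ⟨m', rfl⟩ : ∃ m', m = m' + 1 := ⟨m - 1, by omega⟩
  have key : ∑ i ∈ Finset.range (m' + 1), (-1 : ℝ) ^ i * u i
      = u 0 - ∑ i ∈ Finset.range m', (-1 : ℝ) ^ i * u (i + 1) := by
    rw [Finset.sum_range_succ' (fun i => (-1 : ℝ) ^ i * u i) m']
    have h1 : ∀ i ∈ Finset.range m', (-1 : ℝ) ^ (i + 1) * u (i + 1)
        = -((-1 : ℝ) ^ i * u (i + 1)) := by intro i _; ring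
    rw [Finset.sum_congr rfl h1, Finset.sum_neg_distrib]
    simp; ring
  have h1 := (alt_sum_aux m' (fun i => u (i + 1))
    (fun i hi => hmono (i + 1) (by omega)) (fun i hi => hpos (i + 1) (by omega))).2 (by omega)
  rw [key]; linarith

private lemma sin_le_min {x : ℝ} (h0 : 0 ≤ x) (hπ : x ≤ π) :
    Real.sin x ≤ min x (π - x) := by
  refine le_min (Real.sin_le h0) ?_
  have : Real.sin x = Real.sin (π - x) := by rw [Real.sin_pi_sub]
  rw [this]
  exact Real.sin_le (by linarith)

private lemma jordan_min {x : ℝ} (h0 : 0 ≤ x) (hπ : x ≤ π) :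
    2 / π * min x (π - x) ≤ Real.sin x := by
  rcases le_total x (π / 2) with h | h
  · have hmin : min x (π - x) = x := min_eq_left (by linarith)
    rw [hmin]; exact Real.mul_le_sin h0 h
  · have hmin : min x (π - x) = π - x := min_eq_right (by linarith)
    rw [hmin]
    have : Real.sin x = Real.sin (π - x) := by rw [Real.sin_pi_sub]
    rw [this]
    exact Real.mul_le_sin (by linarith) (by linarith)

private lemma gap_ratio (ε K A B C : ℝ) (hε : 0 < ε) (hK : 1 ≤ K) (hKπ : K * ε ≤ π)
    (hA : 0 ≤ A) (hC : C ≤ π) (h1 : ε ≤ B - A) (h2 : B - A ≤ K * ε)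
    (h3 : ε ≤ C - B) (h4 : C - B ≤ K * ε) :
    Real.cos A - Real.cos B ≤ K * (2 * K + 1) * π ^ 2 / 4 * (Real.cos B - Real.cos C) := by
  have hπ0 := Real.pi_pos
  have hm1nn : 0 ≤ (A + B) / 2 := by linarith
  have hm1π : (A + B) / 2 ≤ π := by linarith
  have hm2nn : 0 ≤ (B + C) / 2 := by linarith
  have hm2π : (B + C) / 2 ≤ π := by linarith
  have huε1 : ε / 2 ≤ (B + C) / 2 := by linarith
  have huε2 : ε / 2 ≤ π - (B + C) / 2 := by linarith
  have huε : ε / 2 ≤ min ((B + C) / 2) (π - (B + C) / 2) := le_min huε1 huε2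
  set u : ℝ := min ((B + C) / 2) (π - (B + C) / 2) with hu
  have hsinm2 : 2 / π * u ≤ Real.sin ((B + C) / 2) := jordan_min hm2nn hm2π
  have hminm1 : min ((A + B) / 2) (π - (A + B) / 2) ≤ u + ((B + C) / 2 - (A + B) / 2) := by
    rcases min_cases ((B + C) / 2) (π - (B + C) / 2) with ⟨he, _⟩ | ⟨he, _⟩ <;>
      rw [hu, he]
    · calc min ((A + B) / 2) (π - (A + B) / 2) ≤ (A + B) / 2 := min_le_left _ _
        _ ≤ (B + C) / 2 + ((B + C) / 2 - (A + B) / 2) := by linarith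
    · calc min ((A + B) / 2) (π - (A + B) / 2) ≤ π - (A + B) / 2 := min_le_right _ _
        _ = π - (B + C) / 2 + ((B + C) / 2 - (A + B) / 2) := by ring
  have hsinm1 : Real.sin ((A + B) / 2) ≤ (2 * K + 1) * u := by
    have h6 : (B + C) / 2 - (A + B) / 2 ≤ K * ε := by linarith
    calc Real.sin ((A + B) / 2) ≤ min ((A + B) / 2) (π - (A + B) / 2) :=
          sin_le_min hm1nn hm1π
      _ ≤ u + ((B + C) / 2 - (A + B) / 2) := hminm1
      _ ≤ u + K * ε := by linarith
      _ ≤ u + K * (2 * u) := by nlinarith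
      _ = (2 * K + 1) * u := by ring
  have hL : Real.cos A - Real.cos B = 2 * Real.sin ((A + B) / 2) * Real.sin ((B - A) / 2) := by
    rw [Real.cos_sub_cos]
    have h7 : (A - B) / 2 = -((B - A) / 2) := by ring
    rw [h7, Real.sin_neg]; ring
  have hR : Real.cos B - Real.cos C = 2 * Real.sin ((B + C) / 2) * Real.sin ((C - B) / 2) := by
    rw [Real.cos_sub_cos]
    have h7 : (B - C) / 2 = -((C - B) / 2) := by ring
    rw [h7, Real.sin_neg]; ring
  have hsinh_le : Real.sin ((B - A) / 2) ≤ K * ε / 2 :=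
    (Real.sin_le (by linarith)).trans (by linarith)
  have hsinh_nn : 0 ≤ Real.sin ((B - A) / 2) :=
    Real.sin_nonneg_of_nonneg_of_le_pi (by linarith) (by linarith)
  have hsinh'_ge : ε / π ≤ Real.sin ((C - B) / 2) := by
    have h8 := Real.mul_le_sin (x := (C - B) / 2) (by linarith) (by linarith)
    calc ε / π = 2 / π * (ε / 2) := by ring
      _ ≤ 2 / π * ((C - B) / 2) := by
          apply mul_le_mul_of_nonneg_left (by linarith) (by positivity)
      _ ≤ Real.sin ((C - B) / 2) := h8
  have hu0 : 0 ≤ u := by linarith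
  have hsinm1nn : 0 ≤ Real.sin ((A + B) / 2) :=
    Real.sin_nonneg_of_nonneg_of_le_pi hm1nn hm1π
  have hsinm2nn : 0 ≤ Real.sin ((B + C) / 2) :=
    Real.sin_nonneg_of_nonneg_of_le_pi hm2nn hm2π
  have hLbound : Real.cos A - Real.cos B ≤ (2 * K + 1) * u * (K * ε) := by
    rw [hL]
    calc 2 * Real.sin ((A + B) / 2) * Real.sin ((B - A) / 2)
        ≤ 2 * ((2 * K + 1) * u) * (K * ε / 2) :=
          mul_le_mul (by linarith) hsinh_le hsinh_nn (by nlinarith)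
      _ = (2 * K + 1) * u * (K * ε) := by ring
  have hRbound : 4 * u * ε / π ^ 2 ≤ Real.cos B - Real.cos C := by
    rw [hR]
    have e1 : (4 : ℝ) * u * ε / π ^ 2 = 2 * (2 / π * u) * (ε / π) := by
      field_simp; ring
    rw [e1]
    exact mul_le_mul (by linarith) hsinh'_ge (by positivity) (by linarith)
  calc Real.cos A - Real.cos B ≤ (2 * K + 1) * u * (K * ε) := hLbound
    _ = K * (2 * K + 1) * π ^ 2 / 4 * (4 * u * ε / π ^ 2) := by field_simp
    _ ≤ K * (2 * K + 1) * π ^ 2 / 4 * (Real.cos B - Real.cos C) :=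
        mul_le_mul_of_nonneg_left hRbound (by positivity)

private lemma ftc_icc (g g' : ℝ → ℝ)
    (hg' : ∀ t ∈ Set.Icc (-1 : ℝ) 1, HasDerivWithinAt g (g' t) (Set.Icc (-1 : ℝ) 1) t)
    (hg'c : ContinuousOn g' (Set.Icc (-1 : ℝ) 1))
    (p q : ℝ) (hp : p ∈ Set.Icc (-1 : ℝ) 1) (hq : q ∈ Set.Icc (-1 : ℝ) 1) :
    ∫ t in p..q, g' t = g q - g p := by
  have hgc : ContinuousOn g (Set.Icc (-1 : ℝ) 1) :=
    fun x hx => (hg' x hx).continuousWithinAt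
  have key : ∀ a b : ℝ, a ∈ Set.Icc (-1 : ℝ) 1 → b ∈ Set.Icc (-1 : ℝ) 1 → a ≤ b →
      ∫ t in a..b, g' t = g b - g a := by
    intro a b ha hb hab
    apply intervalIntegral.integral_eq_sub_of_hasDeriv_right_of_le hab
    · exact hgc.mono (Set.Icc_subset_Icc ha.1 hb.2)
    · intro x hx
      have hx1 : x ∈ Set.Ioo (-1 : ℝ) 1 :=
        ⟨lt_of_le_of_lt ha.1 hx.1, lt_of_lt_of_le hx.2 hb.2⟩
      have := (hg' x (Set.mem_Icc_of_Ioo hx1)).hasDerivAt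
        (Icc_mem_nhds hx1.1 hx1.2)
      exact this.hasDerivWithinAt
    · apply ContinuousOn.intervalIntegrable
      apply hg'c.mono
      rw [Set.uIcc_of_le hab]
      exact Set.Icc_subset_Icc ha.1 hb.2
  rcases le_total p q with h | h
  · exact key p q hp hq h
  · rw [intervalIntegral.integral_symm, key q p hq hp h]; ring

private lemma slope_diff_bound (g g' : ℝ → ℝ) (M₂ : ℝ)
    (hg' : ∀ t ∈ Set.Icc (-1 : ℝ) 1, HasDerivWithinAt g (g' t) (Set.Icc (-1 : ℝ) 1) t)
    (hg'c : ContinuousOn g' (Set.Icc (-1 : ℝ) 1))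
    (hlip : ∀ a ∈ Set.Icc (-1 : ℝ) 1, ∀ b ∈ Set.Icc (-1 : ℝ) 1, |g' a - g' b| ≤ M₂ * |a - b|)
    (z a b : ℝ) (hz : z ∈ Set.Icc (-1 : ℝ) 1) (ha : a ∈ Set.Icc (-1 : ℝ) 1)
    (hb : b ∈ Set.Icc (-1 : ℝ) 1) (hza : a ≠ z) (hzb : b ≠ z) :
    |(g a - g z) / (a - z) - (g b - g z) / (b - z)| ≤ M₂ / 2 * |a - b| := by
  -- integral representation of the slope
  have hmaps : ∀ c : ℝ, c ∈ Set.Icc (-1 : ℝ) 1 → ∀ t ∈ Set.Icc (0 : ℝ) 1,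
      (c - z) * t + z ∈ Set.Icc (-1 : ℝ) 1 := by
    intro c hc t ht
    have : (c - z) * t + z = (1 - t) * z + t * c := by ring
    rw [this]
    constructor
    · nlinarith [hz.1, hz.2, hc.1, hc.2, ht.1, ht.2]
    · nlinarith [hz.1, hz.2, hc.1, hc.2, ht.1, ht.2]
  have hcontc : ∀ c : ℝ, c ∈ Set.Icc (-1 : ℝ) 1 →
      ContinuousOn (fun t : ℝ => g' ((c - z) * t + z)) (Set.Icc 0 1) := by
    intro c hc
    apply hg'c.comp (by fun_prop) (hmaps c hc)
  have hrep : ∀ c : ℝ, c ∈ Set.Icc (-1 : ℝ) 1 → c ≠ z →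
      (g c - g z) / (c - z) = ∫ t in (0 : ℝ)..1, g' ((c - z) * t + z) := by
    intro c hc hcz
    have hcz' : c - z ≠ 0 := sub_ne_zero.mpr hcz
    have h1 : (∫ t in (0 : ℝ)..1, g' ((c - z) * t + z))
        = (c - z)⁻¹ • ∫ t in ((c - z) * 0 + z)..((c - z) * 1 + z), g' t :=
      intervalIntegral.integral_comp_mul_add (fun t => g' t) hcz' z
    rw [h1]
    have h2 : (c - z) * 0 + z = z := by ring
    have h3 : (c - z) * 1 + z = c := by ring
    rw [h2, h3, ftc_icc g g' hg' hg'c z c hz hc, smul_eq_mul]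
    field_simp
  rw [hrep a ha hza, hrep b hb hzb]
  have huI : Set.Icc (0 : ℝ) 1 = Set.uIcc (0 : ℝ) 1 := (Set.uIcc_of_le zero_le_one).symm
  have hint_a : IntervalIntegrable (fun t : ℝ => g' ((a - z) * t + z)) volume 0 1 :=
    ContinuousOn.intervalIntegrable (huI ▸ hcontc a ha)
  have hint_b : IntervalIntegrable (fun t : ℝ => g' ((b - z) * t + z)) volume 0 1 :=
    ContinuousOn.intervalIntegrable (huI ▸ hcontc b hb)
  rw [← intervalIntegral.integral_sub hint_a hint_b]
  have habs := intervalIntegral.abs_integral_le_integral_abs (μ := volume)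
    (f := fun t : ℝ => g' ((a - z) * t + z) - g' ((b - z) * t + z)) zero_le_one
  refine habs.trans ?_
  have hintabs : IntervalIntegrable
      (fun t : ℝ => |g' ((a - z) * t + z) - g' ((b - z) * t + z)|) volume 0 1 := by
    exact ContinuousOn.intervalIntegrable (huI ▸ ((hcontc a ha).sub (hcontc b hb)).abs)
  have hbound : ∀ t ∈ Set.Icc (0 : ℝ) 1,
      |g' ((a - z) * t + z) - g' ((b - z) * t + z)| ≤ M₂ * |a - b| * t := by
    intro t ht
    have h1 := hlip _ (hmaps a ha t ht) _ (hmaps b hb t ht)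
    have h2 : ((a - z) * t + z) - ((b - z) * t + z) = (a - b) * t := by ring
    rw [h2] at h1
    rw [abs_mul, abs_of_nonneg ht.1] at h1
    linarith [h1]
  calc (∫ t in (0 : ℝ)..1, |g' ((a - z) * t + z) - g' ((b - z) * t + z)|)
      ≤ ∫ t in (0 : ℝ)..1, M₂ * |a - b| * t := by
        apply intervalIntegral.integral_mono_on zero_le_one hintabs ?_ hbound
        apply Continuous.intervalIntegrable
        fun_prop
    _ = M₂ / 2 * |a - b| := by
        rw [intervalIntegral.integral_const_mul, integral_id]
        ring

private lemma sum_range_two_mul (m : ℕ) (f : ℕ → ℝ) :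
    ∑ i ∈ Finset.range (2 * m), f i = ∑ j ∈ Finset.range m, (f (2 * j) + f (2 * j + 1)) := by
  induction m with
  | zero => simp
  | succ m ih =>
    have h : 2 * (m + 1) = 2 * m + 1 + 1 := by omega
    rw [h, Finset.sum_range_succ, Finset.sum_range_succ, ih, Finset.sum_range_succ]
    ring
set_option maxHeartbeats 4000000

/-- BACC error bound (odd case): with `N+1` worker nodes and `s` stragglers,
`s < N - 2`, `n = N - s` odd, the Berrut interpolation error at a subset of the
Chebyshev points of the second kind is at most
`2(1+R) sin((s+1)π/(2N)) · max |g''|` with `R = (s+1)(s+3)π²/4`. -/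
theorem bacc_error_bound_odd
    (N s : ℕ) (hs : s + 2 < N) (n : ℕ) (hn : n = N - s)
    (hodd : Odd n) (hn3 : 3 ≤ n)
    (α : ℕ → ℕ) (hα : ∀ k, k < n → α k < α (k + 1)) (hαN : α n ≤ N)
    (y : ℕ → ℝ) (hy : ∀ k, y k = -Real.cos (α k * Real.pi / N))
    (g g' g'' : ℝ → ℝ)
    (hg' : ∀ t ∈ Set.Icc (-1 : ℝ) 1, HasDerivWithinAt g (g' t) (Set.Icc (-1 : ℝ) 1) t)
    (hg'' : ∀ t ∈ Set.Icc (-1 : ℝ) 1, HasDerivWithinAt g' (g'' t) (Set.Icc (-1 : ℝ) 1) t)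
    (hcont : ContinuousOn g'' (Set.Icc (-1 : ℝ) 1))
    (M₂ : ℝ)
    (hM₂mem : M₂ ∈ (fun t => |g'' t|) '' Set.Icc (-1 : ℝ) 1)
    (hM₂ub : ∀ t ∈ Set.Icc (-1 : ℝ) 1, |g'' t| ≤ M₂) :
    ∀ z ∈ Set.Icc (y 0) (y n), (∀ i ≤ n, z ≠ y i) →
      |(∑ i ∈ Finset.range (n + 1), ((-1 : ℝ) ^ i / (z - y i)) * g (y i)) /
          (∑ j ∈ Finset.range (n + 1), (-1 : ℝ) ^ j / (z - y j)) - g z| ≤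
        2 * (1 + (s + 1) * (s + 3) * Real.pi ^ 2 / 4) *
          Real.sin ((s + 1) * Real.pi / (2 * N)) * M₂ := by
  intro z hz hzne
  have hπ := Real.pi_pos
  have hN0 : 0 < N := by omega
  have hNR : (0 : ℝ) < N := by exact_mod_cast hN0
  have hns : n + s = N := by omega
  -- basic facts about α
  have hαmono : ∀ i j, i ≤ j → j ≤ n → α i + (j - i) ≤ α j := by
    intro i j hij
    induction j, hij using Nat.le_induction with
    | base => intro _; simp
    | succ j hij ih =>
      intro hjn
      have h1 := ih (by omega)
      have h2 := hα j (by omega)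
      omega
  have hαlt : ∀ i j, i < j → j ≤ n → α i < α j := by
    intro i j hij hjn
    have := hαmono i j (le_of_lt hij) hjn
    omega
  have hαub : ∀ j, j ≤ n → α j ≤ N := by
    intro j hj
    have := hαmono j n hj le_rfl
    omega
  have hgapnat : ∀ k, k < n → 1 ≤ α (k + 1) - α k ∧ α (k + 1) - α k ≤ s + 1 := by
    intro k hk
    have h1 := hα k hk
    have h2 := hαmono 0 k (by omega) (by omega)
    have h3 := hαmono (k + 1) n (by omega) le_rfl
    omega
  -- the angles
  set θ : ℕ → ℝ := fun i => (α i : ℝ) * π / N with hθdef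
  have hyθ : ∀ k, y k = -Real.cos (θ k) := fun k => hy k
  have hθnn : ∀ j, 0 ≤ θ j := by
    intro j
    simp only [hθdef]
    positivity
  have hθπ : ∀ j, j ≤ n → θ j ≤ π := by
    intro j hj
    simp only [hθdef]
    rw [div_le_iff₀ hNR]
    have : (α j : ℝ) ≤ N := by exact_mod_cast hαub j hj
    nlinarith
  have hθlt : ∀ i j, i < j → j ≤ n → θ i < θ j := by
    intro i j hij hjn
    simp only [hθdef]
    have : (α i : ℝ) < α j := by exact_mod_cast hαlt i j hij hjn
    have hπN : 0 < π / N := by positivity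
    calc (α i : ℝ) * π / N = (α i : ℝ) * (π / N) := by ring
      _ < (α j : ℝ) * (π / N) := by
          apply mul_lt_mul_of_pos_right this hπN
      _ = (α j : ℝ) * π / N := by ring
  have hθgap : ∀ k, k < n → π / N ≤ θ (k + 1) - θ k ∧ θ (k + 1) - θ k ≤ ((s : ℝ) + 1) * (π / N) := by
    intro k hk
    obtain ⟨hg1, hg2⟩ := hgapnat k hk
    have hle : α k ≤ α (k + 1) := le_of_lt (hα k hk)
    have hcast : ((α (k + 1) : ℝ) - α k) = ((α (k + 1) - α k : ℕ) : ℝ) := by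
      rw [Nat.cast_sub hle]
    have h1 : (1 : ℝ) ≤ ((α (k + 1) - α k : ℕ) : ℝ) := by exact_mod_cast hg1
    have h2 : ((α (k + 1) - α k : ℕ) : ℝ) ≤ (s : ℝ) + 1 := by exact_mod_cast hg2
    have hθeq : θ (k + 1) - θ k = ((α (k + 1) - α k : ℕ) : ℝ) * (π / N) := by
      simp only [hθdef]
      rw [← hcast]
      ring
    rw [hθeq]
    have hπN : 0 < π / N := by positivity
    constructor
    · nlinarith
    · apply mul_le_mul_of_nonneg_right h2 (le_of_lt hπN)
  -- monotonicity of y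
  have hymono : ∀ i j, i < j → j ≤ n → y i < y j := by
    intro i j hij hjn
    rw [hyθ i, hyθ j, neg_lt_neg_iff]
    exact Real.strictAntiOn_cos ⟨hθnn i, hθπ i (by omega)⟩ ⟨hθnn j, hθπ j hjn⟩
      (hθlt i j hij hjn)
  have hymono' : ∀ i j, i ≤ j → j ≤ n → y i ≤ y j := by
    intro i j hij hjn
    rcases eq_or_lt_of_le hij with rfl | h
    · exact le_rfl
    · exact (hymono i j h hjn).le
  have hy_mem : ∀ i, y i ∈ Set.Icc (-1 : ℝ) 1 := by
    intro i
    rw [hyθ i]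
    constructor
    · nlinarith [Real.cos_le_one (θ i)]
    · nlinarith [Real.neg_one_le_cos (θ i)]
  have hz_mem : z ∈ Set.Icc (-1 : ℝ) 1 :=
    ⟨le_trans (hy_mem 0).1 hz.1, le_trans hz.2 (hy_mem n).2⟩
  -- locate z between two nodes
  have hy0z : y 0 < z := lt_of_le_of_ne hz.1 (Ne.symm (hzne 0 (by omega)))
  have hzyn : z < y n := lt_of_le_of_ne hz.2 (hzne n le_rfl)
  have hex : ∃ k, k < n ∧ y k < z ∧ z < y (k + 1) := by
    set F := (Finset.range (n + 1)).filter (fun i => y i < z) with hF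
    have hF0 : 0 ∈ F := by
      simp only [hF, Finset.mem_filter, Finset.mem_range]
      exact ⟨by omega, hy0z⟩
    have hFne : F.Nonempty := ⟨0, hF0⟩
    set k := F.max' hFne with hkdef
    have hkF : k ∈ F := F.max'_mem hFne
    obtain ⟨hkr, hykz⟩ := Finset.mem_filter.mp hkF
    have hkn' : k ≤ n := by
      simp only [Finset.mem_range] at hkr; omega
    have hkn : k < n := by
      rcases eq_or_lt_of_le hkn' with he | h
      · exfalso; rw [he] at hykz; exact absurd hykz (not_lt.mpr hzyn.le)
      · exact h
    refine ⟨k, hkn, hykz, ?_⟩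
    by_contra hcon
    push_neg at hcon
    have hlt : y (k + 1) < z := lt_of_le_of_ne hcon (Ne.symm (hzne (k + 1) (by omega)))
    have hmem : k + 1 ∈ F := by
      simp only [hF, Finset.mem_filter, Finset.mem_range]
      exact ⟨by omega, hlt⟩
    have := F.le_max' (k + 1) hmem
    omega
  obtain ⟨k, hkn, hykz, hzk1⟩ := hex
  -- analytic facts about g
  have hg'c : ContinuousOn g' (Set.Icc (-1 : ℝ) 1) :=
    fun x hx => (hg'' x hx).continuousWithinAt
  have hM₂0 : 0 ≤ M₂ := by
    obtain ⟨t, _, ht⟩ := hM₂mem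
    rw [← ht]; positivity
  have hlip : ∀ a ∈ Set.Icc (-1 : ℝ) 1, ∀ b ∈ Set.Icc (-1 : ℝ) 1,
      |g' a - g' b| ≤ M₂ * |a - b| := by
    intro a ha b hb
    have := (convex_Icc (-1 : ℝ) 1).norm_image_sub_le_of_norm_hasDerivWithin_le
      hg'' (fun x hx => by rw [Real.norm_eq_abs]; exact hM₂ub x hx) hb ha
    rwa [Real.norm_eq_abs, Real.norm_eq_abs] at this
  -- the denominator
  set D : ℝ := ∑ j ∈ Finset.range (n + 1), (-1 : ℝ) ^ j / (z - y j) with hDdef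
  set f : ℕ → ℝ := fun j => (-1 : ℝ) ^ j / (z - y j) with hfdef
  have hsplit : D = (∑ j ∈ Finset.range (k + 1), f j) + ∑ j ∈ Finset.Ico (k + 1) (n + 1), f j := by
    rw [hDdef, Finset.range_eq_Ico,
      ← Finset.sum_Ico_consecutive f (Nat.zero_le (k + 1)) (by omega : k + 1 ≤ n + 1),
      ← Finset.range_eq_Ico]
  have hP : (-1 : ℝ) ^ k * ∑ j ∈ Finset.range (k + 1), f j
      = ∑ i ∈ Finset.range (k + 1), (-1 : ℝ) ^ i * (1 / (z - y (k - i))) := by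
    have hrefl := Finset.sum_range_reflect (fun j => (-1 : ℝ) ^ k * f j) (k + 1)
    rw [Finset.mul_sum, ← hrefl]
    apply Finset.sum_congr rfl
    intro j hj
    have hjk : j ≤ k := by simp only [Finset.mem_range] at hj; omega
    have hidx : k + 1 - 1 - j = k - j := by omega
    rw [hidx]
    show (-1 : ℝ) ^ k * ((-1 : ℝ) ^ (k - j) / (z - y (k - j)))
      = (-1 : ℝ) ^ j * (1 / (z - y (k - j)))
    have hpow : (-1 : ℝ) ^ (k - j) * (-1 : ℝ) ^ j = (-1 : ℝ) ^ k := by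
      rw [← pow_add, Nat.sub_add_cancel hjk]
    have hpow2 : (-1 : ℝ) ^ (k - j) * (-1 : ℝ) ^ (k - j) = 1 := by
      rw [← mul_pow]; norm_num
    have hkey : (-1 : ℝ) ^ k * (-1 : ℝ) ^ (k - j) = (-1 : ℝ) ^ j := by
      calc (-1 : ℝ) ^ k * (-1 : ℝ) ^ (k - j)
          = ((-1 : ℝ) ^ (k - j) * (-1 : ℝ) ^ (k - j)) * (-1 : ℝ) ^ j := by
            rw [← hpow]; ring
        _ = (-1 : ℝ) ^ j := by rw [hpow2]; ring
    rw [← mul_div_assoc, hkey, mul_one_div]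
  have hQ : (-1 : ℝ) ^ k * ∑ j ∈ Finset.Ico (k + 1) (n + 1), f j
      = ∑ i ∈ Finset.range (n - k), (-1 : ℝ) ^ i * (1 / (y (k + 1 + i) - z)) := by
    rw [Finset.sum_Ico_eq_sum_range]
    have hnk : n + 1 - (k + 1) = n - k := by omega
    rw [hnk, Finset.mul_sum]
    apply Finset.sum_congr rfl
    intro i hi
    simp only [Finset.mem_range] at hi
    show (-1 : ℝ) ^ k * ((-1 : ℝ) ^ (k + 1 + i) / (z - y (k + 1 + i)))
      = (-1 : ℝ) ^ i * (1 / (y (k + 1 + i) - z))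
    have h1 : (-1 : ℝ) ^ k * (-1 : ℝ) ^ (k + 1 + i) = -(-1 : ℝ) ^ i := by
      rw [← pow_add]
      have he : k + (k + 1 + i) = 2 * k + (i + 1) := by omega
      rw [he, pow_add, pow_mul]
      norm_num [pow_succ]
    rw [← mul_div_assoc, h1, mul_one_div, neg_div, ← div_neg, neg_sub]
  -- positivity/antitonicity of the two half-sums
  have hzyk : ∀ i, i ≤ k → 0 < z - y i := by
    intro i hi
    have : y i ≤ y k := hymono' i k hi (by omega)
    linarith
  have hykz' : ∀ i, k + 1 ≤ i → i ≤ n → 0 < y i - z := by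
    intro i hi hin
    have : y (k + 1) ≤ y i := hymono' (k + 1) i hi hin
    linarith
  have hPge : 0 ≤ ∑ i ∈ Finset.range (k + 1), (-1 : ℝ) ^ i * (1 / (z - y (k - i))) := by
    apply alt_sum_nonneg
    · intro i hi
      have h1 : y (k - (i + 1)) ≤ y (k - i) := hymono' _ _ (by omega) (by omega)
      have h2 : 0 < z - y (k - i) := hzyk _ (by omega)
      exact one_div_le_one_div_of_le h2 (by linarith)
    · intro i hi
      have := hzyk (k - i) (by omega)
      positivity
  have hQge : 0 ≤ ∑ i ∈ Finset.range (n - k), (-1 : ℝ) ^ i * (1 / (y (k + 1 + i) - z)) := by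
    apply alt_sum_nonneg
    · intro i hi
      have h1 : y (k + 1 + i) ≤ y (k + 1 + (i + 1)) := hymono' _ _ (by omega) (by omega)
      have h2 : 0 < y (k + 1 + i) - z := hykz' _ (by omega) (by omega)
      exact one_div_le_one_div_of_le h2 (by linarith)
    · intro i hi
      have := hykz' (k + 1 + i) (by omega) (by omega)
      positivity
  -- gap quantities
  set Δ : ℝ := y (k + 1) - y k with hΔdef
  have hΔpos : 0 < Δ := by
    have := hymono k (k + 1) (by omega) (by omega)
    simp only [hΔdef]; linarith
  set R' : ℝ := ((s : ℝ) + 1) * ((s : ℝ) + 3) * π ^ 2 + 2 with hR'def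
  have hsnn : (0 : ℝ) ≤ s := Nat.cast_nonneg s
  have hR'2 : 2 ≤ R' := by
    have h0 : 0 ≤ ((s : ℝ) + 1) * ((s : ℝ) + 3) * π ^ 2 := by positivity
    simp only [hR'def]; linarith
  have hgapy : ∀ j, j < n → y (j + 1) - y j = Real.cos (θ j) - Real.cos (θ (j + 1)) := by
    intro j hj
    rw [hyθ j, hyθ (j + 1)]; ring
  have hKπ' : ((s : ℝ) + 1) * (π / N) ≤ π := by
    have hcast : (s : ℝ) + 1 ≤ N := by
      have : (s + 1 : ℕ) ≤ N := by omega
      exact_mod_cast this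
    rw [mul_div_assoc']
    rw [div_le_iff₀ hNR]
    nlinarith
  have hconstle : ((s : ℝ) + 1) * (2 * ((s : ℝ) + 1) + 1) * π ^ 2 / 4 ≤ R' := by
    have hπ2 : 0 < π ^ 2 := by positivity
    simp only [hR'def]
    nlinarith
  have hratio_right : k + 2 ≤ n → Δ ≤ R' * (y (k + 2) - y (k + 1)) := by
    intro h2
    obtain ⟨ha1, ha2⟩ := hθgap k (by omega)
    obtain ⟨hb1, hb2⟩ := hθgap (k + 1) (by omega)
    have hgr := gap_ratio (π / N) ((s : ℝ) + 1) (θ k) (θ (k + 1)) (θ (k + 2))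
      (by positivity) (by linarith) hKπ' (hθnn k) (hθπ (k + 2) h2)
      ha1 ha2 hb1 hb2
    rw [hΔdef, hgapy k (by omega), hgapy (k + 1) (by omega)]
    have hrgap : 0 ≤ Real.cos (θ (k + 1)) - Real.cos (θ (k + 2)) := by
      rw [← hgapy (k + 1) (by omega)]
      have := hymono (k + 1) (k + 2) (by omega) h2
      linarith
    calc Real.cos (θ k) - Real.cos (θ (k + 1))
        ≤ ((s : ℝ) + 1) * (2 * ((s : ℝ) + 1) + 1) * π ^ 2 / 4 *
          (Real.cos (θ (k + 1)) - Real.cos (θ (k + 2))) := hgr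
      _ ≤ R' * (Real.cos (θ (k + 1)) - Real.cos (θ (k + 2))) :=
          mul_le_mul_of_nonneg_right hconstle hrgap
  have hratio_left : 1 ≤ k → Δ ≤ R' * (y k - y (k - 1)) := by
    intro h1
    obtain ⟨ha1, ha2⟩ := hθgap k (by omega)
    have hk1 : k - 1 + 1 = k := by omega
    have hbg := hθgap (k - 1) (by omega)
    rw [hk1] at hbg
    obtain ⟨hb1, hb2⟩ := hbg
    have hgr := gap_ratio (π / N) ((s : ℝ) + 1) (π - θ (k + 1)) (π - θ k) (π - θ (k - 1))
      (by positivity) (by linarith) hKπ'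
      (by linarith [hθπ (k + 1) (by omega)]) (by linarith [hθnn (k - 1)])
      (by linarith) (by linarith) (by linarith) (by linarith)
    rw [Real.cos_pi_sub, Real.cos_pi_sub, Real.cos_pi_sub] at hgr
    have hgily : y k - y (k - 1) = Real.cos (θ (k - 1)) - Real.cos (θ k) := by
      have := hgapy (k - 1) (by omega)
      rw [hk1] at this
      exact this
    rw [hΔdef, hgapy k (by omega), hgily]
    have hrgap : 0 ≤ Real.cos (θ (k - 1)) - Real.cos (θ k) := by
      rw [← hgily]
      have := hymono (k - 1) k (by omega) (by omega)
      linarith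
    calc Real.cos (θ k) - Real.cos (θ (k + 1))
        ≤ ((s : ℝ) + 1) * (2 * ((s : ℝ) + 1) + 1) * π ^ 2 / 4 *
          (Real.cos (θ (k - 1)) - Real.cos (θ k)) := by linarith [hgr]
      _ ≤ R' * (Real.cos (θ (k - 1)) - Real.cos (θ k)) :=
          mul_le_mul_of_nonneg_right hconstle hrgap
  -- lower bound on (-1)^k * D
  have hkD : (-1 : ℝ) ^ k * D
      = (∑ i ∈ Finset.range (k + 1), (-1 : ℝ) ^ i * (1 / (z - y (k - i))))
        + ∑ i ∈ Finset.range (n - k), (-1 : ℝ) ^ i * (1 / (y (k + 1 + i) - z)) := by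
    rw [hsplit, mul_add, hP, hQ]
  have hR'Δ : 0 < (R' + 2) * Δ := by positivity
  have hDlow : 4 / ((R' + 2) * Δ) ≤ (-1 : ℝ) ^ k * D := by
    rw [hkD]
    have hd1pos : 0 < z - y k := by linarith
    have hd2pos : 0 < y (k + 1) - z := by linarith
    rcases le_or_gt (z - y k) (Δ / 2) with hd | hd
    · -- use the left sum P
      rcases Nat.eq_zero_or_pos k with rfl | hk1
      · -- k = 0 : P = 1/(z - y 0)
        have hPval : ∑ i ∈ Finset.range (0 + 1), (-1 : ℝ) ^ i * (1 / (z - y (0 - i)))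
            = 1 / (z - y 0) := by simp
        rw [hPval]
        have h24 : 4 / ((R' + 2) * Δ) ≤ 2 / Δ := by
          rw [div_le_div_iff₀ hR'Δ hΔpos]
          nlinarith
        have h22 : 2 / Δ ≤ 1 / (z - y 0) := by
          rw [div_le_div_iff₀ hΔpos hd1pos]
          simp only [hΔdef] at hd ⊢
          nlinarith
        linarith
      · -- k ≥ 1 : P ≥ u 0 - u 1
        have hPlow : 1 / (z - y (k - 0)) - 1 / (z - y (k - 1))
            ≤ ∑ i ∈ Finset.range (k + 1), (-1 : ℝ) ^ i * (1 / (z - y (k - i))) :=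
          alt_sum_lower (k + 1) (fun i => 1 / (z - y (k - i)))
            (by
              intro i hi
              have h1 : y (k - (i + 1)) ≤ y (k - i) := hymono' _ _ (by omega) (by omega)
              have h2 : 0 < z - y (k - i) := hzyk _ (by omega)
              exact one_div_le_one_div_of_le h2 (by linarith))
            (by
              intro i hi
              have := hzyk (k - i) (by omega)
              positivity)
            (by omega)
        have hk0 : k - 0 = k := by omega
        rw [hk0] at hPlow
        have hΔ'pos : 0 < y k - y (k - 1) := by
          have := hymono (k - 1) k (by omega) (by omega)
          linarith
        have hzk1' : z - y (k - 1) = (z - y k) + (y k - y (k - 1)) := by ring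
        have hrat := hratio_left hk1
        have hkey : 4 / ((R' + 2) * Δ) ≤ 1 / (z - y k) - 1 / (z - y (k - 1)) := by
          rw [hzk1']
          have hdenpos : 0 < (z - y k) + (y k - y (k - 1)) := by linarith
          have heq : 1 / (z - y k) - 1 / ((z - y k) + (y k - y (k - 1)))
              = (y k - y (k - 1)) / ((z - y k) * ((z - y k) + (y k - y (k - 1)))) := by
            rw [div_sub_div _ _ (ne_of_gt hd1pos) (ne_of_gt hdenpos)]
            congr 1
            ring
          rw [heq, div_le_div_iff₀ hR'Δ (by positivity)]
          nlinarith [mul_pos hΔpos hΔ'pos, mul_pos hd1pos hΔ'pos]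
        linarith
    · -- use the right sum Q ; here y (k+1) - z < Δ/2
      have hd2 : y (k + 1) - z ≤ Δ / 2 := by
        simp only [hΔdef] at hd ⊢; linarith
      rcases eq_or_lt_of_le (show k + 1 ≤ n by omega) with he | hlt
      · -- k + 1 = n : Q = 1/(y n - z)
        have hnk1 : n - k = 1 := by omega
        have hQval : ∑ i ∈ Finset.range (n - k), (-1 : ℝ) ^ i * (1 / (y (k + 1 + i) - z))
            = 1 / (y (k + 1) - z) := by
          rw [hnk1]; simp
        rw [hQval]
        have h24 : 4 / ((R' + 2) * Δ) ≤ 2 / Δ := by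
          rw [div_le_div_iff₀ hR'Δ hΔpos]
          nlinarith
        have h22 : 2 / Δ ≤ 1 / (y (k + 1) - z) := by
          rw [div_le_div_iff₀ hΔpos hd2pos]
          nlinarith
        linarith
      · -- k + 2 ≤ n : Q ≥ b 0 - b 1
        have hQlow : 1 / (y (k + 1 + 0) - z) - 1 / (y (k + 1 + 1) - z)
            ≤ ∑ i ∈ Finset.range (n - k), (-1 : ℝ) ^ i * (1 / (y (k + 1 + i) - z)) :=
          alt_sum_lower (n - k) (fun i => 1 / (y (k + 1 + i) - z))
            (by
              intro i hi
              have h1 : y (k + 1 + i) ≤ y (k + 1 + (i + 1)) := hymono' _ _ (by omega) (by omega)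
              have h2 : 0 < y (k + 1 + i) - z := hykz' _ (by omega) (by omega)
              exact one_div_le_one_div_of_le h2 (by linarith))
            (by
              intro i hi
              have := hykz' (k + 1 + i) (by omega) (by omega)
              positivity)
            (by omega)
        have hi0 : k + 1 + 0 = k + 1 := by omega
        have hi1 : k + 1 + 1 = k + 2 := by omega
        rw [hi0, hi1] at hQlow
        have hΔ''pos : 0 < y (k + 2) - y (k + 1) := by
          have := hymono (k + 1) (k + 2) (by omega) (by omega)
          linarith
        have hrat := hratio_right (by omega)
        have hkey : 4 / ((R' + 2) * Δ) ≤ 1 / (y (k + 1) - z) - 1 / (y (k + 2) - z) := by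
          have hzk2 : y (k + 2) - z = (y (k + 1) - z) + (y (k + 2) - y (k + 1)) := by ring
          rw [hzk2]
          have hdenpos : 0 < (y (k + 1) - z) + (y (k + 2) - y (k + 1)) := by linarith
          have heq : 1 / (y (k + 1) - z) - 1 / ((y (k + 1) - z) + (y (k + 2) - y (k + 1)))
              = (y (k + 2) - y (k + 1)) /
                ((y (k + 1) - z) * ((y (k + 1) - z) + (y (k + 2) - y (k + 1)))) := by
            rw [div_sub_div _ _ (ne_of_gt hd2pos) (ne_of_gt hdenpos)]
            congr 1
            ring
          rw [heq, div_le_div_iff₀ hR'Δ (by positivity)]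
          nlinarith [mul_pos hΔpos hΔ''pos, mul_pos hd2pos hΔ''pos]
        linarith
  have hDabs : 4 / ((R' + 2) * Δ) ≤ |D| := by
    have h1 : (-1 : ℝ) ^ k * D ≤ |(-1 : ℝ) ^ k * D| := le_abs_self _
    have h2 : |(-1 : ℝ) ^ k * D| = |D| := by
      rw [abs_mul, abs_pow, abs_neg, abs_one, one_pow, one_mul]
    linarith
  have hDpos : 0 < |D| := lt_of_lt_of_le (by positivity) hDabs
  have hDne : D ≠ 0 := abs_pos.mp hDpos
  -- the error as a quotient
  set E : ℝ := ∑ i ∈ Finset.range (n + 1), (-1 : ℝ) ^ i * ((g (y i) - g z) / (z - y i))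
    with hEdef
  have hyne : ∀ i, i ≤ n → z - y i ≠ 0 := by
    intro i hi
    exact sub_ne_zero.mpr (hzne i hi)
  have hE : E = (∑ i ∈ Finset.range (n + 1), ((-1 : ℝ) ^ i / (z - y i)) * g (y i)) - g z * D := by
    rw [hEdef, hDdef, Finset.mul_sum, ← Finset.sum_sub_distrib]
    apply Finset.sum_congr rfl
    intro i hi
    simp only [Finset.mem_range] at hi
    have hne := hyne i (by omega)
    field_simp
  have hquot : (∑ i ∈ Finset.range (n + 1), ((-1 : ℝ) ^ i / (z - y i)) * g (y i)) / D - g z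
      = E / D := by
    rw [hE, sub_div, mul_div_assoc, div_self hDne, mul_one]
  -- pairing bound on E
  obtain ⟨t, hth⟩ := hodd
  set m : ℕ := t + 1 with hmdef
  have hnm : n + 1 = 2 * m := by omega
  have hslope := slope_diff_bound g g' M₂ hg' hg'c hlip z
  have hpair : ∀ j, j < m →
      |(-1 : ℝ) ^ (2 * j) * ((g (y (2 * j)) - g z) / (z - y (2 * j)))
        + (-1 : ℝ) ^ (2 * j + 1) * ((g (y (2 * j + 1)) - g z) / (z - y (2 * j + 1)))|
      ≤ M₂ / 2 * (y (2 * j + 1) - y (2 * j)) := by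
    intro j hj
    have hj1 : 2 * j + 1 ≤ n := by omega
    have hj0 : 2 * j ≤ n := by omega
    have h1 : ((-1 : ℝ)) ^ (2 * j) = 1 := by rw [pow_mul]; norm_num
    have h2 : ((-1 : ℝ)) ^ (2 * j + 1) = -1 := by rw [pow_succ, h1]; ring
    have hna := hyne (2 * j) hj0
    have hnb := hyne (2 * j + 1) hj1
    have hee : (-1 : ℝ) ^ (2 * j) * ((g (y (2 * j)) - g z) / (z - y (2 * j)))
        + (-1 : ℝ) ^ (2 * j + 1) * ((g (y (2 * j + 1)) - g z) / (z - y (2 * j + 1)))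
        = (g (y (2 * j + 1)) - g z) / (y (2 * j + 1) - z)
          - (g (y (2 * j)) - g z) / (y (2 * j) - z) := by
      rw [h1, h2]
      have e1 : ∀ w : ℝ, z - w ≠ 0 → (g w - g z) / (z - w) = -((g w - g z) / (w - z)) := by
        intro w hw
        have hzw : z - w = -(w - z) := by ring
        rw [hzw, div_neg]
      rw [e1 _ hna, e1 _ hnb]
      ring
    rw [hee]
    have hd := hslope (y (2 * j + 1)) (y (2 * j)) hz_mem (hy_mem _) (hy_mem _)
      (fun h => hzne (2 * j + 1) hj1 h.symm) (fun h => hzne (2 * j) hj0 h.symm)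
    have hgap : |y (2 * j + 1) - y (2 * j)| = y (2 * j + 1) - y (2 * j) := by
      rw [abs_of_pos]
      have := hymono (2 * j) (2 * j + 1) (by omega) hj1
      linarith
    rw [hgap] at hd
    exact hd
  have hEbound : |E| ≤ M₂ / 2 * (y n - y 0) := by
    have hEpair : E = ∑ j ∈ Finset.range m,
        ((-1 : ℝ) ^ (2 * j) * ((g (y (2 * j)) - g z) / (z - y (2 * j)))
          + (-1 : ℝ) ^ (2 * j + 1) * ((g (y (2 * j + 1)) - g z) / (z - y (2 * j + 1)))) := by
      rw [hEdef, hnm]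
      exact sum_range_two_mul m (fun i => (-1 : ℝ) ^ i * ((g (y i) - g z) / (z - y i)))
    rw [hEpair]
    have htri := Finset.abs_sum_le_sum_abs
      (fun j => (-1 : ℝ) ^ (2 * j) * ((g (y (2 * j)) - g z) / (z - y (2 * j)))
        + (-1 : ℝ) ^ (2 * j + 1) * ((g (y (2 * j + 1)) - g z) / (z - y (2 * j + 1))))
      (Finset.range m)
    refine htri.trans ?_
    have hsum1 : ∑ j ∈ Finset.range m,
        |(-1 : ℝ) ^ (2 * j) * ((g (y (2 * j)) - g z) / (z - y (2 * j)))
          + (-1 : ℝ) ^ (2 * j + 1) * ((g (y (2 * j + 1)) - g z) / (z - y (2 * j + 1)))|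
        ≤ ∑ j ∈ Finset.range m, M₂ / 2 * (y (2 * j + 1) - y (2 * j)) := by
      apply Finset.sum_le_sum
      intro j hj
      exact hpair j (Finset.mem_range.mp hj)
    refine hsum1.trans ?_
    rw [← Finset.mul_sum]
    have htele : ∀ q : ℕ, 0 < q → 2 * q ≤ n + 1 →
        ∑ j ∈ Finset.range q, (y (2 * j + 1) - y (2 * j)) ≤ y (2 * q - 1) - y 0 := by
      intro q
      induction q with
      | zero => omega
      | succ q ih =>
        intro _ hle
        rcases Nat.eq_zero_or_pos q with rfl | hq
        · norm_num
        · rw [Finset.sum_range_succ]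
          have h1 := ih hq (by omega)
          have h2 : y (2 * q - 1) ≤ y (2 * q) := hymono' _ _ (by omega) (by omega)
          have h3 : 2 * (q + 1) - 1 = 2 * q + 1 := by omega
          rw [h3]
          linarith
    have ht2 := htele m (by omega) (by omega)
    have hmn : 2 * m - 1 = n := by omega
    rw [hmn] at ht2
    apply mul_le_mul_of_nonneg_left ht2 (by positivity)
  -- final assembly
  rw [hquot, abs_div]
  have hyn2 : y n - y 0 ≤ 2 := by
    have := (hy_mem n).2
    have := (hy_mem 0).1
    linarith
  have hyn0 : 0 ≤ y n - y 0 := by linarith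
  have hnum_nn : 0 ≤ M₂ / 2 * (y n - y 0) := by positivity
  have hdiv : |E| / |D| ≤ (M₂ / 2 * (y n - y 0)) / (4 / ((R' + 2) * Δ)) :=
    div_le_div₀ hnum_nn hEbound (by positivity) hDabs
  refine hdiv.trans ?_
  rw [div_div_eq_mul_div]
  -- bound Δ by 2 sin((s+1)π/(2N))
  set σ : ℝ := Real.sin (((s : ℝ) + 1) * π / (2 * (N : ℝ))) with hσdef
  have hargnn : 0 ≤ ((s : ℝ) + 1) * π / (2 * (N : ℝ)) := by positivity
  have harg2 : ((s : ℝ) + 1) * π / (2 * (N : ℝ)) ≤ π / 2 := by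
    rw [div_le_div_iff₀ (by positivity) (by norm_num)]
    have hcast : (s : ℝ) + 1 ≤ N := by
      have h9 : (s + 1 : ℕ) ≤ N := by omega
      exact_mod_cast h9
    calc ((s : ℝ) + 1) * π * 2 = 2 * π * ((s : ℝ) + 1) := by ring
      _ ≤ 2 * π * N := by
          apply mul_le_mul_of_nonneg_left hcast (by positivity)
      _ = π * (2 * (N : ℝ)) := by ring
  have hσnn : 0 ≤ σ := Real.sin_nonneg_of_nonneg_of_le_pi hargnn (by linarith)
  have hΔσ : Δ ≤ 2 * σ := by
    obtain ⟨hg1, hg2⟩ := hθgap k (by omega)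
    have hhalf_le : (θ (k + 1) - θ k) / 2 ≤ ((s : ℝ) + 1) * π / (2 * (N : ℝ)) := by
      have : ((s : ℝ) + 1) * (π / N) / 2 = ((s : ℝ) + 1) * π / (2 * (N : ℝ)) := by ring
      linarith [this]
    have hπN2 : 0 < π / (N : ℝ) := by positivity
    have hhalf_nn : 0 ≤ (θ (k + 1) - θ k) / 2 := by linarith
    have hmono := Real.strictMonoOn_sin.monotoneOn
      (a := (θ (k + 1) - θ k) / 2) (b := ((s : ℝ) + 1) * π / (2 * (N : ℝ)))
      ⟨by linarith, by linarith⟩ ⟨by linarith, by linarith⟩ hhalf_le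
    have hΔeq : Δ = 2 * Real.sin ((θ k + θ (k + 1)) / 2) * Real.sin ((θ (k + 1) - θ k) / 2) := by
      rw [hΔdef, hgapy k (by omega), Real.cos_sub_cos]
      have h7 : (θ k - θ (k + 1)) / 2 = -((θ (k + 1) - θ k) / 2) := by ring
      rw [h7, Real.sin_neg]
      ring
    rw [hΔeq]
    have hs1 : Real.sin ((θ k + θ (k + 1)) / 2) ≤ 1 := Real.sin_le_one _
    have hs2 : 0 ≤ Real.sin ((θ (k + 1) - θ k) / 2) :=
      Real.sin_nonneg_of_nonneg_of_le_pi hhalf_nn (by linarith)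
    have hs3 : 0 ≤ Real.sin ((θ k + θ (k + 1)) / 2) := by
      apply Real.sin_nonneg_of_nonneg_of_le_pi
      · have := hθnn k; have := hθnn (k + 1); linarith
      · have := hθπ k (by omega); have := hθπ (k + 1) (by omega); linarith
    calc 2 * Real.sin ((θ k + θ (k + 1)) / 2) * Real.sin ((θ (k + 1) - θ k) / 2)
        ≤ 2 * 1 * σ := by
          have := mul_le_mul hs1 hmono hs2 (by norm_num : (0 : ℝ) ≤ 1)
          nlinarith
      _ = 2 * σ := by ring
  -- final numeric computation
  have hfin1 : M₂ / 2 * (y n - y 0) ≤ M₂ := by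
    have h9 := mul_le_mul_of_nonneg_left hyn2 (by positivity : (0 : ℝ) ≤ M₂ / 2)
    linarith
  have hfin2 : (R' + 2) * Δ / 4 ≤ (R' + 2) * (2 * σ) / 4 := by
    have h0 : (0 : ℝ) ≤ R' + 2 := by linarith
    exact (div_le_div_iff_of_pos_right (by norm_num : (0 : ℝ) < 4)).mpr
      (mul_le_mul_of_nonneg_left hΔσ h0)
  have hfin : M₂ / 2 * (y n - y 0) * ((R' + 2) * Δ) / 4
      ≤ M₂ * ((R' + 2) * (2 * σ) / 4) := by
    have hx : M₂ / 2 * (y n - y 0) * ((R' + 2) * Δ) / 4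
        = (M₂ / 2 * (y n - y 0)) * ((R' + 2) * Δ / 4) := by ring
    rw [hx]
    apply mul_le_mul hfin1 hfin2 (by positivity) hM₂0
  refine hfin.trans ?_
  have : M₂ * ((R' + 2) * (2 * σ) / 4)
      = 2 * (1 + ((s : ℝ) + 1) * ((s : ℝ) + 3) * π ^ 2 / 4) * σ * M₂ := by
    rw [hR'def]
    ring
  rw [this, hσdef]
end

section
/- Let N and s be integers with 0 ≤ s < N - 2 and set n = N - s, and suppose n is even with n ≥ 4. Let α_0 < α_1 < ... < α_n be integers with 0 ≤ α_0 and α_n ≤ N, and define the nodes y_k = -cos(α_k π / N). Let g be twice continuously differentiable on [-1, 1], and let r be Berrut's rational interpolant of the values g(y_0),...,g(y_n) at the nodes y_0,...,y_n. Then for every z ∈ [y_0, y_n] with z ≠ y_i for all i, |r(z) - g(z)| ≤ 2(1 + R)·sin((s+1)π/(2N))·(max_{t∈[-1,1]} |g''(t)| + max_{t∈[-1,1]} |g'(t)|), where R = (s+1)(s+3)π²/4. -/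
/-!
Write `r(z) - g(z) = (∑ wᵢ (g(yᵢ) - g(z))) / ∑ wᵢ` with `wᵢ = (-1)ⁱ / (z - yᵢ)`. In the numerator,
the terms `2t` and `2t + 1` together are `y_{2t+1} - y_{2t}` times a second divided difference
of `g`, and the last term is a first divided difference, so the numerator is at most
`2 max |g''| + max |g'|`. For `y_k < z < y_{k+1}`, the denominator splits into two alternating
sums of decreasing positive terms; the one on the side of the nearest node is at least
`1/d - 1/(d + h) ≥ 1/((1 + R) d)`, where `d` is the distance to that node, `h` the next gap, and
`R` bounds the ratio of adjacent gaps.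

For the Chebyshev subset, `y_{k+1} - y_k = 2 sin((α_{k+1} - α_k) π/2N) sin((α_{k+1} + α_k) π/2N)`.
As only `s` points are removed, Jordan's inequality `2x/π ≤ sin x ≤ x` compares both factors of
adjacent gaps and gives `R = (s+1)(s+3)π²/4`, while `d ≤ (y_{k+1} - y_k)/2 ≤ sin((s+1)π/2N)`.
-/

open Finset Real

lemma sum_range_succ_neg_one_pow_mul (c : ℕ → ℝ) (m : ℕ) :
    ∑ i ∈ range (m + 1), (-1 : ℝ) ^ i * c i = c 0 - ∑ i ∈ range m, (-1 : ℝ) ^ i * c (i + 1) := by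
  rw [sum_range_succ', sub_eq_neg_add, ← sum_neg_distrib]
  simp [pow_succ]

lemma sum_range_succ_neg_one_pow_mul_mem_Icc {c : ℕ → ℝ} {m : ℕ}
    (hc : ∀ i < m, c (i + 1) ≤ c i) (hc₀ : ∀ i ≤ m, 0 ≤ c i) :
    ∑ i ∈ range (m + 1), (-1 : ℝ) ^ i * c i ∈ Set.Icc 0 (c 0) := by
  induction m generalizing c with
  | zero => simpa using hc₀ 0 le_rfl
  | succ m ih =>
    obtain ⟨h₁, h₂⟩ := ih (c := fun i => c (i + 1)) (fun i hi => hc (i + 1) (by omega))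
      (fun i hi => hc₀ (i + 1) (by omega))
    rw [sum_range_succ_neg_one_pow_mul]
    constructor <;> linarith [hc 0 (by omega), hc₀ 0 (by omega)]

lemma inv_one_add_mul_le_sum_range_neg_one_pow_mul {c : ℕ → ℝ} {m : ℕ} {d h R : ℝ}
    (hc : ∀ i < m, c (i + 1) ≤ c i) (hc₀ : ∀ i ≤ m, 0 ≤ c i) (hd : 0 < d) (hR : 0 ≤ R)
    (h₀ : c 0 = d⁻¹) (h₁ : 0 < m → 0 < h ∧ d ≤ R * h ∧ c 1 = (d + h)⁻¹) :
    ((1 + R) * d)⁻¹ ≤ ∑ i ∈ range (m + 1), (-1 : ℝ) ^ i * c i := by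
  rcases m with _ | m
  · simp only [zero_add, range_one, sum_singleton, pow_zero, one_mul, h₀]
    exact inv_anti₀ hd (by nlinarith)
  · obtain ⟨hh, hdR, hc₁⟩ := h₁ (Nat.succ_pos m)
    have htail := (sum_range_succ_neg_one_pow_mul_mem_Icc (m := m) (c := fun i => c (i + 1))
      (fun i hi => hc (i + 1) (by omega)) (fun i hi => hc₀ (i + 1) (by omega))).2
    rw [sum_range_succ_neg_one_pow_mul, h₀]
    rw [hc₁] at htail
    have : ((1 + R) * d)⁻¹ ≤ d⁻¹ - (d + h)⁻¹ := by
      rw [inv_sub_inv hd.ne' (by positivity), inv_eq_one_div,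
        div_le_div_iff₀ (by positivity) (by positivity)]
      nlinarith
    linarith

lemma neg_one_pow_mul_sum_div_sub_eq (y : ℕ → ℝ) (z : ℝ) {n k : ℕ} (hk : k < n) :
    (-1 : ℝ) ^ k * ∑ j ∈ range (n + 1), (-1 : ℝ) ^ j / (z - y j) =
      ∑ i ∈ range (k + 1), (-1 : ℝ) ^ i * (z - y (k - i))⁻¹ +
        ∑ i ∈ range (n - k), (-1 : ℝ) ^ i * (y (k + 1 + i) - z)⁻¹ := by
  rw [mul_sum, show n + 1 = (k + 1) + (n - k) by omega, sum_range_add,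
    ← sum_range_reflect _ (k + 1)]
  congr 1 <;> refine sum_congr rfl fun i hi => ?_
  · obtain ⟨j, rfl⟩ : ∃ j, k = i + j := ⟨k - i, by simp at hi; omega⟩
    rw [show i + j + 1 - 1 - i = j by omega, show i + j - i = j by omega, pow_add, div_eq_mul_inv]
    ring_nf
    simp
  · rw [pow_add, pow_add, show z - y (k + 1 + i) = -(y (k + 1 + i) - z) by ring, div_eq_mul_inv,
      inv_neg]
    ring_nf
    simp

theorem inv_le_neg_one_pow_mul_berrut_denominator {y : ℕ → ℝ} {n k : ℕ} {z R : ℝ}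
    (hy : StrictMonoOn y (Set.Iic n)) (hR : 0 ≤ R)
    (hratio : ∀ p, p + 1 < n → y (p + 1) - y p ≤ R * (y (p + 2) - y (p + 1)) ∧
      y (p + 2) - y (p + 1) ≤ R * (y (p + 1) - y p))
    (hk : k < n) (hzk : y k < z) (hzk' : z < y (k + 1)) :
    ((1 + R) * min (z - y k) (y (k + 1) - z))⁻¹ ≤
      (-1 : ℝ) ^ k * ∑ j ∈ range (n + 1), (-1 : ℝ) ^ j / (z - y j) := by
  have hlt : ∀ i j, i < j → j ≤ n → y i < y j := fun i j hij hj =>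
    hy (Set.mem_Iic.2 (by omega)) (Set.mem_Iic.2 hj) hij
  have hle : ∀ i j, i ≤ j → j ≤ n → y i ≤ y j := fun i j hij hj =>
    hy.monotoneOn (Set.mem_Iic.2 (by omega)) (Set.mem_Iic.2 hj) hij
  have hleft_anti : ∀ i < k, (z - y (k - (i + 1)))⁻¹ ≤ (z - y (k - i))⁻¹ := fun i hi =>
    inv_anti₀ (by linarith [hle (k - i) k (by omega) (by omega)])
      (by linarith [hle (k - (i + 1)) (k - i) (by omega) (by omega)])
  have hleft_pos : ∀ i ≤ k, 0 ≤ (z - y (k - i))⁻¹ := fun i hi =>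
    inv_nonneg.2 (by linarith [hle (k - i) k (by omega) (by omega)])
  have hright_anti : ∀ i < n - k - 1, (y (k + 1 + (i + 1)) - z)⁻¹ ≤ (y (k + 1 + i) - z)⁻¹ :=
    fun i hi => inv_anti₀ (by linarith [hle (k + 1) (k + 1 + i) (by omega) (by omega)])
      (by linarith [hle (k + 1 + i) (k + 1 + (i + 1)) (by omega) (by omega)])
  have hright_pos : ∀ i ≤ n - k - 1, 0 ≤ (y (k + 1 + i) - z)⁻¹ := fun i hi =>
    inv_nonneg.2 (by linarith [hle (k + 1) (k + 1 + i) (by omega) (by omega)])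
  rw [neg_one_pow_mul_sum_div_sub_eq y z hk, show n - k = n - k - 1 + 1 by omega]
  have hL := (sum_range_succ_neg_one_pow_mul_mem_Icc hleft_anti hleft_pos).1
  have hR' := (sum_range_succ_neg_one_pow_mul_mem_Icc hright_anti hright_pos).1
  rcases le_total (z - y k) (y (k + 1) - z) with hmin | hmin
  · rw [min_eq_left hmin]
    have := inv_one_add_mul_le_sum_range_neg_one_pow_mul (h := y k - y (k - 1)) hleft_anti
      hleft_pos (sub_pos.2 hzk) hR (by simp) fun hk0 => by
        have h := (hratio (k - 1) (by omega)).2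
        rw [show k - 1 + 1 = k by omega, show k - 1 + 2 = k + 1 by omega] at h
        exact ⟨sub_pos.2 (hlt (k - 1) k (by omega) hk.le), by linarith, by ring_nf⟩
    linarith
  · rw [min_eq_right hmin]
    have := inv_one_add_mul_le_sum_range_neg_one_pow_mul (h := y (k + 2) - y (k + 1))
      hright_anti hright_pos (sub_pos.2 hzk') hR (by simp) fun hk0 =>
        ⟨sub_pos.2 (hlt _ _ (by omega) (by omega)), by linarith [(hratio k (by omega)).1],
          by ring_nf⟩
    linarith

section DividedDifferences

variable {f f' f'' : ℝ → ℝ} {a b M : ℝ}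

lemma exists_hasDerivWithinAt_Icc_eq_slope
    (hf : ∀ t ∈ Set.Icc a b, HasDerivWithinAt f (f' t) (Set.Icc a b) t)
    {p q : ℝ} (hp : a ≤ p) (hq : q ≤ b) (hpq : p < q) :
    ∃ ξ ∈ Set.Ioo p q, f' ξ = (f q - f p) / (q - p) :=
  exists_hasDerivAt_eq_slope f f' hpq
    (ContinuousOn.mono (fun t ht => (hf t ht).continuousWithinAt) (Set.Icc_subset_Icc hp hq))
    fun t ht => (hf t ⟨by linarith [ht.1], by linarith [ht.2]⟩).hasDerivAt
      (Icc_mem_nhds (by linarith [ht.1]) (by linarith [ht.2]))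

lemma abs_divided_difference_le
    (hf : ∀ t ∈ Set.Icc a b, HasDerivWithinAt f (f' t) (Set.Icc a b) t)
    (hM : ∀ t ∈ Set.Icc a b, |f' t| ≤ M) {u z : ℝ} (hu : u ∈ Set.Icc a b)
    (hz : z ∈ Set.Icc a b) (hzu : z ≠ u) : |(f u - f z) / (z - u)| ≤ M := by
  have hmvt := Convex.norm_image_sub_le_of_norm_hasDerivWithin_le hf hM (convex_Icc a b) hz hu
  rw [Real.norm_eq_abs, Real.norm_eq_abs, abs_sub_comm u] at hmvt
  rwa [abs_div, div_le_iff₀ (abs_pos.2 (sub_ne_zero.2 hzu))]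

lemma abs_second_divided_difference_le
    (hf : ∀ t ∈ Set.Icc a b, HasDerivWithinAt f (f' t) (Set.Icc a b) t)
    (hf' : ∀ t ∈ Set.Icc a b, HasDerivWithinAt f' (f'' t) (Set.Icc a b) t)
    (hM : ∀ t ∈ Set.Icc a b, |f'' t| ≤ M)
    {p q r : ℝ} (hp : a ≤ p) (hr : r ≤ b) (hpq : p < q) (hqr : q < r) :
    |((f r - f q) / (r - q) - (f q - f p) / (q - p)) / (r - p)| ≤ M := by
  obtain ⟨ξ, hξ, hξeq⟩ := exists_hasDerivWithinAt_Icc_eq_slope hf hp (hqr.le.trans hr) hpq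
  obtain ⟨η, hη, hηeq⟩ := exists_hasDerivWithinAt_Icc_eq_slope hf (hp.trans hpq.le) hr hqr
  have hmvt := Convex.norm_image_sub_le_of_norm_hasDerivWithin_le hf' hM (convex_Icc a b)
    (x := ξ) (y := η) ⟨by linarith [hξ.1], by linarith [hξ.2]⟩
    ⟨by linarith [hη.1], by linarith [hη.2]⟩
  rw [Real.norm_eq_abs, Real.norm_eq_abs, abs_of_pos (sub_pos.2 (hξ.2.trans hη.1))] at hmvt
  have hM₀ : 0 ≤ M := (abs_nonneg _).trans (hM a ⟨le_rfl, by linarith⟩)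
  rw [← hξeq, ← hηeq, abs_div, abs_of_pos (sub_pos.2 (hpq.trans hqr)), div_le_iff₀ (by linarith)]
  exact hmvt.trans (mul_le_mul_of_nonneg_left (by linarith [hξ.1, hη.2]) hM₀)

/-- Whatever the position of `z`, the left side is `(v - u)` times a second divided difference
of `f` at `u, v, z`. -/
lemma abs_div_sub_sub_div_sub_le
    (hf : ∀ t ∈ Set.Icc a b, HasDerivWithinAt f (f' t) (Set.Icc a b) t)
    (hf' : ∀ t ∈ Set.Icc a b, HasDerivWithinAt f' (f'' t) (Set.Icc a b) t)
    (hM : ∀ t ∈ Set.Icc a b, |f'' t| ≤ M)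
    {u v z : ℝ} (hu : a ≤ u) (hv : v ≤ b) (hz : z ∈ Set.Icc a b) (huv : u < v)
    (hzu : z ≠ u) (hzv : z ≠ v) :
    |(f u - f z) / (z - u) - (f v - f z) / (z - v)| ≤ M * (v - u) := by
  have hzu' := sub_ne_zero.2 hzu
  have hzv' := sub_ne_zero.2 hzv
  have huz' := sub_ne_zero.2 hzu.symm
  have hvz' := sub_ne_zero.2 hzv.symm
  have hvu' := (sub_pos.2 huv).ne'
  obtain ⟨D, hD, heq⟩ : ∃ D, |D| ≤ M ∧
      (f u - f z) / (z - u) - (f v - f z) / (z - v) = (v - u) * D := by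
    rcases hzu.lt_or_gt with hzu | hzu
    · refine ⟨_, abs_second_divided_difference_le hf hf' hM hz.1 hv hzu huv, ?_⟩
      field_simp
      ring
    rcases hzv.lt_or_gt with hzv | hzv
    · refine ⟨_, abs_second_divided_difference_le hf hf' hM hu hv hzu hzv, ?_⟩
      field_simp
      ring
    · refine ⟨_, abs_second_divided_difference_le hf hf' hM hu hz.2 huv hzv, ?_⟩
      field_simp
      ring
  rw [heq, abs_mul, abs_of_pos (sub_pos.2 huv), mul_comm M]
  exact mul_le_mul_of_nonneg_left hD (sub_pos.2 huv).le

end DividedDifferences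

lemma Finset.sum_range_two_mul {M : Type*} [AddCommMonoid M] (F : ℕ → M) (m : ℕ) :
    ∑ i ∈ range (2 * m), F i = ∑ t ∈ range m, (F (2 * t) + F (2 * t + 1)) := by
  induction m with
  | zero => simp
  | succ m ih =>
    rw [mul_add, mul_one, sum_range_succ, sum_range_succ, sum_range_succ, ih, add_assoc]

theorem abs_berrut_numerator_le {f f' f'' : ℝ → ℝ} {a b M₁ M₂ : ℝ}
    (hf : ∀ t ∈ Set.Icc a b, HasDerivWithinAt f (f' t) (Set.Icc a b) t)
    (hf' : ∀ t ∈ Set.Icc a b, HasDerivWithinAt f' (f'' t) (Set.Icc a b) t)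
    (hM₁ : ∀ t ∈ Set.Icc a b, |f' t| ≤ M₁) (hM₂ : ∀ t ∈ Set.Icc a b, |f'' t| ≤ M₂)
    {y : ℕ → ℝ} {n : ℕ} (hn : Even n) (hy : StrictMonoOn y (Set.Iic n))
    (hya : a ≤ y 0) (hyb : y n ≤ b) {z : ℝ} (hz : z ∈ Set.Icc a b) (hzy : ∀ i ≤ n, z ≠ y i) :
    |∑ i ∈ range (n + 1), (-1 : ℝ) ^ i / (z - y i) * (f (y i) - f z)| ≤
      M₂ * (y n - y 0) + M₁ := by
  obtain ⟨m, rfl⟩ := hn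
  rw [← two_mul] at *
  have hlt : ∀ i j, i < j → j ≤ 2 * m → y i < y j := fun i j hij hj =>
    hy (Set.mem_Iic.2 (by omega)) (Set.mem_Iic.2 hj) hij
  have hle : ∀ i j, i ≤ j → j ≤ 2 * m → y i ≤ y j := fun i j hij hj =>
    hy.monotoneOn (Set.mem_Iic.2 (by omega)) (Set.mem_Iic.2 hj) hij
  have hpair : ∀ t ∈ range m,
      |(-1 : ℝ) ^ (2 * t) / (z - y (2 * t)) * (f (y (2 * t)) - f z) +
        (-1 : ℝ) ^ (2 * t + 1) / (z - y (2 * t + 1)) * (f (y (2 * t + 1)) - f z)| ≤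
        M₂ * (y (2 * (t + 1)) - y (2 * t)) := by
    intro t ht
    have ht := mem_range.1 ht
    have hpair := abs_div_sub_sub_div_sub_le hf hf' hM₂
      (hya.trans (hle 0 (2 * t) (by omega) (by omega)))
      ((hle (2 * t + 1) (2 * m) (by omega) le_rfl).trans hyb) hz
      (hlt (2 * t) (2 * t + 1) (by omega) (by omega)) (hzy _ (by omega)) (hzy _ (by omega))
    have hM₂₀ : 0 ≤ M₂ := (abs_nonneg _).trans (hM₂ z hz)
    rw [pow_succ, pow_mul, neg_one_sq, one_pow]
    refine le_trans (le_of_eq (congrArg _ (by ring))) (hpair.trans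
      (mul_le_mul_of_nonneg_left ?_ hM₂₀))
    linarith [hle (2 * t + 1) (2 * (t + 1)) (by omega) (by omega)]
  have hlast : |(-1 : ℝ) ^ (2 * m) / (z - y (2 * m)) * (f (y (2 * m)) - f z)| ≤ M₁ := by
    rw [pow_mul, neg_one_sq, one_pow, one_div_mul_eq_div]
    exact abs_divided_difference_le hf hM₁ ⟨hya.trans (hle 0 (2 * m) (by omega) le_rfl), hyb⟩ hz
      (hzy (2 * m) le_rfl)
  calc |∑ i ∈ range (2 * m + 1), (-1 : ℝ) ^ i / (z - y i) * (f (y i) - f z)|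
      ≤ ∑ t ∈ range m, M₂ * (y (2 * (t + 1)) - y (2 * t)) + M₁ := by
        rw [sum_range_succ, sum_range_two_mul]
        exact (abs_add_le _ _).trans
          (add_le_add ((abs_sum_le_sum_abs _ _).trans (sum_le_sum hpair)) hlast)
    _ = M₂ * (y (2 * m) - y 0) + M₁ := by
        rw [← mul_sum, sum_range_sub (fun t => y (2 * t)), mul_zero]

theorem abs_berrut_sub_le_s6 {f f' f'' : ℝ → ℝ} {a b M₁ M₂ R z : ℝ} {y : ℕ → ℝ} {n k : ℕ}
    (hf : ∀ t ∈ Set.Icc a b, HasDerivWithinAt f (f' t) (Set.Icc a b) t)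
    (hf' : ∀ t ∈ Set.Icc a b, HasDerivWithinAt f' (f'' t) (Set.Icc a b) t)
    (hM₁ : ∀ t ∈ Set.Icc a b, |f' t| ≤ M₁) (hM₂ : ∀ t ∈ Set.Icc a b, |f'' t| ≤ M₂)
    (hn : Even n) (hy : StrictMonoOn y (Set.Iic n)) (hya : a ≤ y 0) (hyb : y n ≤ b)
    (hR : 0 ≤ R)
    (hratio : ∀ p, p + 1 < n → y (p + 1) - y p ≤ R * (y (p + 2) - y (p + 1)) ∧
      y (p + 2) - y (p + 1) ≤ R * (y (p + 1) - y p))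
    (hk : k < n) (hzk : y k < z) (hzk' : z < y (k + 1)) :
    |(∑ i ∈ range (n + 1), (-1 : ℝ) ^ i / (z - y i) * f (y i)) /
        (∑ j ∈ range (n + 1), (-1 : ℝ) ^ j / (z - y j)) - f z| ≤
      (1 + R) * min (z - y k) (y (k + 1) - z) * (M₂ * (y n - y 0) + M₁) := by
  have hle : ∀ i j, i ≤ j → j ≤ n → y i ≤ y j := fun i j hij hj =>
    hy.monotoneOn (Set.mem_Iic.2 (by omega)) (Set.mem_Iic.2 hj) hij
  have hz : z ∈ Set.Icc a b := ⟨by linarith [hle 0 k (by omega) hk.le],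
    by linarith [hle (k + 1) n (by omega) le_rfl]⟩
  have hzy : ∀ i ≤ n, z ≠ y i := fun i hi => by
    rcases le_or_gt i k with hik | hik
    · exact (lt_of_le_of_lt (hle i k hik hk.le) hzk).ne'
    · exact (lt_of_lt_of_le hzk' (hle (k + 1) i hik hi)).ne
  have hden := inv_le_neg_one_pow_mul_berrut_denominator hy hR hratio hk hzk hzk'
  have hpos : 0 < ((1 + R) * min (z - y k) (y (k + 1) - z))⁻¹ := by
    have := lt_min (sub_pos.2 hzk) (sub_pos.2 hzk')
    positivity
  replace hden := hden.trans (le_abs_self _)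
  rw [abs_mul, abs_neg_one_pow, one_mul] at hden
  have hnum := abs_berrut_numerator_le hf hf' hM₁ hM₂ hn hy hya hyb hz hzy
  set D := ∑ j ∈ range (n + 1), (-1 : ℝ) ^ j / (z - y j)
  have hD : D ≠ 0 := abs_pos.1 (hpos.trans_le hden)
  have herr : (∑ i ∈ range (n + 1), (-1 : ℝ) ^ i / (z - y i) * f (y i)) / D - f z =
      (∑ i ∈ range (n + 1), (-1 : ℝ) ^ i / (z - y i) * (f (y i) - f z)) / D := by
    rw [eq_div_iff hD, sub_mul, div_mul_cancel₀ _ hD, mul_sum, ← sum_sub_distrib]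
    exact sum_congr rfl fun i _ => by ring
  rw [herr, abs_div]
  calc _ ≤ (M₂ * (y n - y 0) + M₁) / ((1 + R) * min (z - y k) (y (k + 1) - z))⁻¹ :=
        div_le_div₀ ((abs_nonneg _).trans hnum) hnum hpos hden
    _ = _ := by rw [div_inv_eq_mul, mul_comm]

lemma exists_mem_Ioo_of_mem_Icc {y : ℕ → ℝ} {z : ℝ} :
    ∀ {n : ℕ}, z ∈ Set.Icc (y 0) (y n) → (∀ i ≤ n, z ≠ y i) →
      ∃ k < n, z ∈ Set.Ioo (y k) (y (k + 1))
  | 0, hz, hzy => absurd (le_antisymm hz.2 hz.1) (hzy 0 le_rfl)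
  | n + 1, hz, hzy => by
    by_cases h : z ≤ y n
    · obtain ⟨k, hk, hzk⟩ := exists_mem_Ioo_of_mem_Icc ⟨hz.1, h⟩ fun i hi => hzy i (by omega)
      exact ⟨k, by omega, hzk⟩
    · exact ⟨n, by omega, not_le.1 h, hz.2.lt_of_ne (hzy (n + 1) le_rfl)⟩

lemma sin_le_min_pi_sub {θ : ℝ} (h₀ : 0 ≤ θ) (hπ : θ ≤ π) : sin θ ≤ min θ (π - θ) :=
  le_min (sin_le h₀) (sin_pi_sub θ ▸ sin_le (by linarith))

lemma two_div_pi_mul_min_le_sin {θ : ℝ} (h₀ : 0 ≤ θ) (hπ : θ ≤ π) :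
    2 / π * min θ (π - θ) ≤ sin θ := by
  rcases le_total θ (π / 2) with h | h
  · exact (mul_le_mul_of_nonneg_left (min_le_left _ _) (by positivity)).trans (mul_le_sin h₀ h)
  · rw [← sin_pi_sub]
    exact (mul_le_mul_of_nonneg_left (min_le_right _ _) (by positivity)).trans
      (mul_le_sin (by linarith) (by linarith))

lemma sin_le_mul_mul_sin {θ φ c : ℝ} (hθ₀ : 0 ≤ θ) (hθπ : θ ≤ π) (hφ₀ : 0 ≤ φ) (hφπ : φ ≤ π)
    (hc : 0 ≤ c) (h : min θ (π - θ) ≤ c * min φ (π - φ)) : sin θ ≤ c * (π / 2) * sin φ :=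
  calc sin θ ≤ c * min φ (π - φ) := (sin_le_min_pi_sub hθ₀ hθπ).trans h
    _ = c * (π / 2) * (2 / π * min φ (π - φ)) := by field_simp
    _ ≤ c * (π / 2) * sin φ :=
        mul_le_mul_of_nonneg_left (two_div_pi_mul_min_le_sin hφ₀ hφπ) (by positivity)

lemma cos_sub_cos_eq_two_mul_sin_mul_sin (a b : ℝ) :
    cos a - cos b = 2 * sin ((b - a) / 2) * sin ((a + b) / 2) := by
  rw [cos_sub_cos, show (a - b) / 2 = -((b - a) / 2) by ring, sin_neg]
  ring

/-- With `u = (b - a) / 2`, `σ = (a + b) / 2` (and `v`, `τ` for `c, d`), the two factors of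
`2 sin u sin σ` are compared separately: `u ≤ m v` as `b - a ≤ m h ≤ m (d - c)`, and `σ`, `τ`
are within `(m + 1) h / 2` of each other while `τ` stays `h / 2` away from `0` and `π`. -/
lemma cos_sub_cos_le_mul_cos_sub_cos {a b c d h m : ℝ} (hh : 0 ≤ h) (hm : 0 ≤ m)
    (ha : 0 ≤ a) (hab : a ≤ b) (hb : b ≤ π) (hc : 0 ≤ c) (hcd : c + h ≤ d) (hd : d ≤ π)
    (hba : b - a ≤ m * h) (hspread : |a + b - (c + d)| ≤ (m + 1) * h) :
    cos a - cos b ≤ m * (π / 2) * ((m + 2) * (π / 2)) * (cos c - cos d) := by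
  rw [cos_sub_cos_eq_two_mul_sin_mul_sin, cos_sub_cos_eq_two_mul_sin_mul_sin]
  have hv : h / 2 ≤ min ((d - c) / 2) (π - (d - c) / 2) := le_min (by linarith) (by linarith)
  have hτ : h / 2 ≤ min ((c + d) / 2) (π - (c + d) / 2) := le_min (by linarith) (by linarith)
  have hu : sin ((b - a) / 2) ≤ m * (π / 2) * sin ((d - c) / 2) := by
    refine sin_le_mul_mul_sin (by linarith) (by linarith) (by linarith) (by linarith) hm ?_
    calc min ((b - a) / 2) (π - (b - a) / 2) ≤ m * (h / 2) := by
          linarith [min_le_left ((b - a) / 2) (π - (b - a) / 2)]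
      _ ≤ _ := mul_le_mul_of_nonneg_left hv hm
  have hσ : sin ((a + b) / 2) ≤ (m + 2) * (π / 2) * sin ((c + d) / 2) := by
    refine sin_le_mul_mul_sin (by linarith) (by linarith) (by linarith) (by linarith)
      (by linarith) ?_
    obtain ⟨h₁, h₂⟩ := abs_le.1 hspread
    calc min ((a + b) / 2) (π - (a + b) / 2)
        ≤ min ((c + d) / 2) (π - (c + d) / 2) + (m + 1) * (h / 2) := by
          rw [← min_add_add_right]
          exact min_le_min (by linarith) (by linarith)
      _ ≤ (m + 2) * min ((c + d) / 2) (π - (c + d) / 2) := by nlinarith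
  have hsu : 0 ≤ sin ((b - a) / 2) := sin_nonneg_of_nonneg_of_le_pi (by linarith) (by linarith)
  have hsσ : 0 ≤ sin ((a + b) / 2) := sin_nonneg_of_nonneg_of_le_pi (by linarith) (by linarith)
  calc 2 * sin ((b - a) / 2) * sin ((a + b) / 2)
      ≤ 2 * (m * (π / 2) * sin ((d - c) / 2)) * ((m + 2) * (π / 2) * sin ((c + d) / 2)) := by
        have := hsu.trans hu
        exact mul_le_mul (by linarith) hσ hsσ (by linarith)
    _ = _ := by ring

lemma cos_sub_cos_le_two_mul_sin {a b w : ℝ} (ha : 0 ≤ a) (hab : a ≤ b) (hb : b ≤ π)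
    (hw : b - a ≤ w) (hwπ : w ≤ π) : cos a - cos b ≤ 2 * sin (w / 2) := by
  rw [cos_sub_cos_eq_two_mul_sin_mul_sin]
  have hsu : 0 ≤ sin ((b - a) / 2) := sin_nonneg_of_nonneg_of_le_pi (by linarith) (by linarith)
  calc 2 * sin ((b - a) / 2) * sin ((a + b) / 2) ≤ 2 * sin ((b - a) / 2) :=
        mul_le_of_le_one_right (by positivity) (sin_le_one _)
    _ ≤ 2 * sin (w / 2) := by
        gcongr
        exact sin_le_sin_of_le_of_le_pi_div_two (by linarith) (by linarith) (by linarith)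

lemma nat_mul_pi_div_le_pi {a N : ℕ} (h : a ≤ N) : (a : ℝ) * π / N ≤ π := by
  rcases N.eq_zero_or_pos with rfl | hN
  · simp [pi_nonneg]
  · rw [div_le_iff₀ (by exact_mod_cast hN), mul_comm π]
    gcongr

lemma cos_nat_mul_pi_div_sub_cos_le {N s i j l : ℕ} (hij : i < j) (hjl : j < l)
    (hli : l ≤ i + (s + 2)) (hlN : l ≤ N) :
    cos (i * π / N) - cos (j * π / N) ≤
        (s + 1) * (s + 3) * π ^ 2 / 4 * (cos (j * π / N) - cos (l * π / N)) ∧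
      cos (j * π / N) - cos (l * π / N) ≤
        (s + 1) * (s + 3) * π ^ 2 / 4 * (cos (i * π / N) - cos (j * π / N)) := by
  have hh : 0 < π / N := div_pos pi_pos (by exact_mod_cast (show 0 < N by omega))
  have hl := nat_mul_pi_div_le_pi hlN
  have hR : (s + 1) * (s + 3) * π ^ 2 / 4 = ((s : ℝ) + 1) * (π / 2) * ((s + 1 + 2) * (π / 2)) := by
    ring
  rw [hR]
  simp only [mul_div_assoc] at hl ⊢
  have hij' : (i : ℝ) + 1 ≤ j := by exact_mod_cast hij
  have hjl' : (j : ℝ) + 1 ≤ l := by exact_mod_cast hjl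
  have hli' : (l : ℝ) ≤ i + (s + 2) := by exact_mod_cast hli
  have hspread : |(i : ℝ) * (π / N) + j * (π / N) - (j * (π / N) + l * (π / N))| ≤
      (s + 1 + 1) * (π / N) := by
    rw [abs_le]; constructor <;> nlinarith
  constructor
  · exact cos_sub_cos_le_mul_cos_sub_cos hh.le (by positivity) (by positivity) (by nlinarith)
      (by nlinarith) (by positivity) (by nlinarith) hl (by nlinarith) hspread
  · exact cos_sub_cos_le_mul_cos_sub_cos hh.le (by positivity) (by positivity) (by nlinarith)
      hl (by positivity) (by nlinarith) (by nlinarith) (by nlinarith) (by rwa [abs_sub_comm])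

lemma cos_nat_mul_pi_div_sub_cos_le_two_mul_sin {N s i j : ℕ} (hij : i ≤ j)
    (hji : j ≤ i + (s + 1)) (hjN : j ≤ N) (hsN : s + 1 ≤ N) :
    cos (i * π / N) - cos (j * π / N) ≤ 2 * sin ((s + 1) * π / (2 * N)) := by
  rw [show ((s : ℝ) + 1) * π / (2 * N) = ((s + 1 : ℕ) : ℝ) * π / N / 2 by push_cast; ring]
  refine cos_sub_cos_le_two_mul_sin (by positivity) (by gcongr) (nat_mul_pi_div_le_pi hjN) ?_
    (nat_mul_pi_div_le_pi hsN)
  rw [← sub_div, ← sub_mul]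
  gcongr
  have : (j : ℝ) ≤ i + (s + 1) := by exact_mod_cast hji
  push_cast
  linarith

lemma strictMonoOn_neg_cos_nat_mul_pi_div {N n : ℕ} {α : ℕ → ℕ}
    (hα : ∀ k < n, α k < α (k + 1)) (hαN : α n ≤ N) :
    StrictMonoOn (fun k => -cos (α k * π / N)) (Set.Iic n) := by
  have hmono : StrictMonoOn α (Set.Iic n) := strictMonoOn_Iic_of_lt_succ hα
  have hle : ∀ i ∈ Set.Iic n, α i ≤ N := fun i hi =>
    (hmono.monotoneOn hi (Set.mem_Iic.2 le_rfl) hi).trans hαN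
  intro i hi j hj hij
  have hN : (0 : ℝ) < N := by exact_mod_cast ((hmono hi hj hij).trans_le (hle j hj)).pos
  simp only [neg_lt_neg_iff]
  refine strictAntiOn_cos ⟨by positivity, nat_mul_pi_div_le_pi (hle i hi)⟩
    ⟨by positivity, nat_mul_pi_div_le_pi (hle j hj)⟩ ?_
  gcongr
  exact_mod_cast hmono hi hj hij

lemma add_sub_le_of_lt_succ {α : ℕ → ℕ} {n : ℕ} (hα : ∀ k < n, α k < α (k + 1)) {i j : ℕ}
    (hij : i ≤ j) (hj : j ≤ n) : α i + (j - i) ≤ α j := by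
  induction j, hij using Nat.le_induction with
  | base => simp
  | succ j hij ih => have := hα j (by omega); have := ih (by omega); omega

lemma le_add_sub_add_of_lt_succ {α : ℕ → ℕ} {n s : ℕ} (hα : ∀ k < n, α k < α (k + 1))
    (hαn : α n ≤ n + s) {i j : ℕ} (hij : i ≤ j) (hj : j ≤ n) : α j ≤ α i + (j - i) + s := by
  have := add_sub_le_of_lt_succ hα (Nat.zero_le i) (hij.trans hj)
  have := add_sub_le_of_lt_succ hα hj le_rfl
  omega

section ChebyshevSubset

variable {N s n : ℕ} {α : ℕ → ℕ} {y : ℕ → ℝ}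

lemma chebyshev_subset_gap_ratio (hα : ∀ k < n, α k < α (k + 1)) (hαN : α n ≤ N)
    (hN : N = n + s) (hy : ∀ k, y k = -cos (α k * π / N)) {p : ℕ} (hp : p + 1 < n) :
    y (p + 1) - y p ≤ (s + 1) * (s + 3) * π ^ 2 / 4 * (y (p + 2) - y (p + 1)) ∧
      y (p + 2) - y (p + 1) ≤ (s + 1) * (s + 3) * π ^ 2 / 4 * (y (p + 1) - y p) := by
  simp only [hy, neg_sub_neg]
  have := le_add_sub_add_of_lt_succ hα (hN ▸ hαN) (show p ≤ p + 2 by omega) (by omega)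
  have := add_sub_le_of_lt_succ hα (show p + 2 ≤ n by omega) le_rfl
  exact cos_nat_mul_pi_div_sub_cos_le (hα p (by omega)) (hα (p + 1) hp) (by omega) (by omega)

lemma chebyshev_subset_gap_le (hα : ∀ k < n, α k < α (k + 1)) (hαN : α n ≤ N)
    (hN : N = n + s) (hy : ∀ k, y k = -cos (α k * π / N)) {k : ℕ} (hk : k < n) :
    y (k + 1) - y k ≤ 2 * sin ((s + 1) * π / (2 * N)) := by
  rw [hy, hy, neg_sub_neg]
  have := le_add_sub_add_of_lt_succ hα (hN ▸ hαN) (show k ≤ k + 1 by omega) hk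
  have := add_sub_le_of_lt_succ hα (show k + 1 ≤ n from hk) le_rfl
  exact cos_nat_mul_pi_div_sub_cos_le_two_mul_sin (hα k hk).le (by omega) (by omega) (by omega)

end ChebyshevSubset

theorem bacc_error_bound_even_general
    (N s : ℕ) (n : ℕ) (hn : n = N - s)
    (heven : Even n)
    (α : ℕ → ℕ) (hα : ∀ k, k < n → α k < α (k + 1)) (hαN : α n ≤ N)
    (y : ℕ → ℝ) (hy : ∀ k, y k = -Real.cos (α k * Real.pi / N))
    (g g' g'' : ℝ → ℝ)
    (hg' : ∀ t ∈ Set.Icc (-1 : ℝ) 1, HasDerivWithinAt g (g' t) (Set.Icc (-1 : ℝ) 1) t)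
    (hg'' : ∀ t ∈ Set.Icc (-1 : ℝ) 1, HasDerivWithinAt g' (g'' t) (Set.Icc (-1 : ℝ) 1) t)
    (M₁ M₂ : ℝ)
    (hM₁ub : ∀ t ∈ Set.Icc (-1 : ℝ) 1, |g' t| ≤ M₁)
    (hM₂ub : ∀ t ∈ Set.Icc (-1 : ℝ) 1, |g'' t| ≤ M₂) :
    ∀ z ∈ Set.Icc (y 0) (y n), (∀ i ≤ n, z ≠ y i) →
      |(∑ i ∈ Finset.range (n + 1), ((-1 : ℝ) ^ i / (z - y i)) * g (y i)) /
          (∑ j ∈ Finset.range (n + 1), (-1 : ℝ) ^ j / (z - y j)) - g z| ≤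
        2 * (1 + (s + 1) * (s + 3) * Real.pi ^ 2 / 4) *
          Real.sin ((s + 1) * Real.pi / (2 * N)) * (M₂ + M₁) := by
  intro z hz hzy
  obtain ⟨k, hk, hzk, hzk'⟩ := exists_mem_Ioo_of_mem_Icc hz hzy
  have hN : N = n + s := by omega
  have hymono : StrictMonoOn y (Set.Iic n) := by
    rw [show y = _ from funext hy]
    exact strictMonoOn_neg_cos_nat_mul_pi_div hα hαN
  have hy₀ : -1 ≤ y 0 := by rw [hy]; linarith [cos_le_one (α 0 * π / N)]
  have hyₙ : y n ≤ 1 := by rw [hy]; linarith [neg_one_le_cos (α n * π / N)]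
  have herr := abs_berrut_sub_le_s6 hg' hg'' hM₁ub hM₂ub heven hymono hy₀ hyₙ (by positivity)
    (fun p => chebyshev_subset_gap_ratio hα hαN hN hy) hk hzk hzk'
  have hgap : min (z - y k) (y (k + 1) - z) ≤ sin ((s + 1) * π / (2 * N)) := by
    linarith [chebyshev_subset_gap_le hα hαN hN hy hk, min_le_left (z - y k) (y (k + 1) - z),
      min_le_right (z - y k) (y (k + 1) - z)]
  have hM₁ : 0 ≤ M₁ := (abs_nonneg _).trans (hM₁ub 0 (by norm_num))
  have hM₂ : 0 ≤ M₂ := (abs_nonneg _).trans (hM₂ub 0 (by norm_num))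
  have hd : 0 ≤ min (z - y k) (y (k + 1) - z) := le_min (by linarith) (by linarith)
  have hc : 0 ≤ (1 + (s + 1) * (s + 3) * π ^ 2 / 4) * sin ((s + 1) * π / (2 * N)) :=
    mul_nonneg (by positivity) (hd.trans hgap)
  calc _ ≤ _ := herr
    _ ≤ (1 + (s + 1) * (s + 3) * π ^ 2 / 4) * sin ((s + 1) * π / (2 * N)) * (M₂ * 2 + M₁) := by
        gcongr
        · nlinarith [hz.1.trans hz.2]
        · linarith
    _ ≤ _ := by nlinarith [mul_nonneg hc hM₁]

/-- BACC error bound (even case): with `N+1` worker nodes and `s` stragglers,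
`s < N - 2`, `n = N - s` even, the Berrut interpolation error at a subset of the
Chebyshev points of the second kind is at most
`2(1+R) sin((s+1)pi/(2N)) (max |g''| + max |g'|)` with `R = (s+1)(s+3)pi^2/4`. -/
theorem bacc_error_bound_even
    (N s : ℕ) (hs : s + 2 < N) (n : ℕ) (hn : n = N - s)
    (heven : Even n) (hn4 : 4 ≤ n)
    (α : ℕ → ℕ) (hα : ∀ k, k < n → α k < α (k + 1)) (hαN : α n ≤ N)
    (y : ℕ → ℝ) (hy : ∀ k, y k = -Real.cos (α k * Real.pi / N))
    (g g' g'' : ℝ → ℝ)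
    (hg' : ∀ t ∈ Set.Icc (-1 : ℝ) 1, HasDerivWithinAt g (g' t) (Set.Icc (-1 : ℝ) 1) t)
    (hg'' : ∀ t ∈ Set.Icc (-1 : ℝ) 1, HasDerivWithinAt g' (g'' t) (Set.Icc (-1 : ℝ) 1) t)
    (hcont : ContinuousOn g'' (Set.Icc (-1 : ℝ) 1))
    (M₁ M₂ : ℝ)
    (hM₁mem : M₁ ∈ (fun t => |g' t|) '' Set.Icc (-1 : ℝ) 1)
    (hM₁ub : ∀ t ∈ Set.Icc (-1 : ℝ) 1, |g' t| ≤ M₁)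
    (hM₂mem : M₂ ∈ (fun t => |g'' t|) '' Set.Icc (-1 : ℝ) 1)
    (hM₂ub : ∀ t ∈ Set.Icc (-1 : ℝ) 1, |g'' t| ≤ M₂) :
    ∀ z ∈ Set.Icc (y 0) (y n), (∀ i ≤ n, z ≠ y i) →
      |(∑ i ∈ Finset.range (n + 1), ((-1 : ℝ) ^ i / (z - y i)) * g (y i)) /
          (∑ j ∈ Finset.range (n + 1), (-1 : ℝ) ^ j / (z - y j)) - g z| ≤
        2 * (1 + (s + 1) * (s + 3) * Real.pi ^ 2 / 4) *
          Real.sin ((s + 1) * Real.pi / (2 * N)) * (M₂ + M₁) :=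
  bacc_error_bound_even_general N s n hn heven α hα hαN y hy g g' g'' hg' hg'' M₁ M₂ hM₁ub hM₂ub
end

section
/- Let x_0 > x_1 > ... > x_n be distinct real numbers, let 0 ≤ k ≤ n-1, and let x be a real number with x_{k+1} < x < x_k. Then (x_k - x)(x - x_{k+1}) · Σ_{i=0}^n 1/|x - x_i| ≤ (x_k - x_{k+1}) · (1 + Σ_{i=0}^{k-1} (x_k - x_{k+1})/(x_i - x_{k+1}) + Σ_{i=k+2}^{n} (x_k - x_{k+1})/(x_k - x_i)). -/
/-!
Split the sum at the two nodes `x (k + 1) < t < x k` bracketing `t`. These two terms contribute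
exactly `x k - x (k + 1)`, because `(b - t)(t - a)(1/(b - t) + 1/(t - a)) = b - a`. For a node
`y` to the left of the interval, `(b - t)/(y - t) ≤ (b - a)/(y - a)` since the quotient
decreases as `t` moves from `a` towards `b`, and `t - a ≤ b - a`; nodes to the right are the
mirror image of this.
-/

open Finset

section NodeTerms

variable {a b t y : ℝ}

theorem div_sub_le_div_sub_of_le (hat : a ≤ t) (hby : b ≤ y) (hty : t < y) :
    (b - t) / (y - t) ≤ (b - a) / (y - a) := by
  rw [div_le_div_iff₀ (by linarith) (by linarith)]
  nlinarith [mul_nonneg (sub_nonneg.2 hat) (sub_nonneg.2 hby)]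

theorem mul_one_div_abs_le_of_lt_right (hat : a ≤ t) (htb : t ≤ b) (hby : b < y) :
    (b - t) * (t - a) * (1 / |t - y|) ≤ (b - a) * ((b - a) / (y - a)) := by
  have hty : t < y := htb.trans_lt hby
  rw [abs_sub_comm, abs_of_pos (sub_pos.2 hty), mul_right_comm, mul_one_div, mul_comm]
  exact mul_le_mul (by linarith) (div_sub_le_div_sub_of_le hat hby.le hty)
    (div_nonneg (by linarith) (by linarith)) (by linarith)

theorem mul_one_div_abs_le_of_lt_left (hat : a ≤ t) (htb : t ≤ b) (hya : y < a) :
    (b - t) * (t - a) * (1 / |t - y|) ≤ (b - a) * ((b - a) / (b - y)) := by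
  have h := mul_one_div_abs_le_of_lt_right (neg_le_neg htb) (neg_le_neg hat) (neg_lt_neg hya)
  rw [← abs_neg] at h
  convert h using 2 <;> ring_nf

theorem mul_one_div_add_one_div_eq (hat : a < t) (htb : t < b) :
    (b - t) * (t - a) * (1 / |t - b| + 1 / |t - a|) = b - a := by
  rw [abs_sub_comm, abs_of_pos (sub_pos.2 htb), abs_of_pos (sub_pos.2 hat)]
  field_simp [(sub_pos.2 htb).ne', (sub_pos.2 hat).ne']
  ring

end NodeTerms

/-- Upper bound for the numerator factor `N_k(x)` appearing in the Lebesgue function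
of Berrut's rational interpolant on the subinterval `(x_{k+1}, x_k)` of decreasing
nodes `x_0 > x_1 > ... > x_n`. -/
theorem berrut_numerator_bound
    (n : ℕ) (x : ℕ → ℝ)
    (hdec : ∀ i, i < n → x (i + 1) < x i)
    (k : ℕ) (hk : k + 1 ≤ n)
    (t : ℝ) (ht1 : x (k + 1) < t) (ht2 : t < x k) :
    (x k - t) * (t - x (k + 1)) * ∑ i ∈ Finset.range (n + 1), 1 / |t - x i| ≤
      (x k - x (k + 1)) *
        (1 + (∑ i ∈ Finset.range k, (x k - x (k + 1)) / (x i - x (k + 1))) +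
          ∑ i ∈ Finset.Icc (k + 2) n, (x k - x (k + 1)) / (x k - x i)) := by
  have hanti : StrictAntiOn x (Set.Iic n) := strictAntiOn_Iic_of_succ_lt hdec
  have hleft : ∑ i ∈ range k, (x k - t) * (t - x (k + 1)) * (1 / |t - x i|) ≤
      ∑ i ∈ range k, (x k - x (k + 1)) * ((x k - x (k + 1)) / (x i - x (k + 1))) := by
    refine sum_le_sum fun i hi => mul_one_div_abs_le_of_lt_right ht1.le ht2.le ?_
    have hi := mem_range.1 hi
    exact hanti (by simp; omega) (by simp; omega) hi
  have hright : ∑ i ∈ Icc (k + 2) n, (x k - t) * (t - x (k + 1)) * (1 / |t - x i|) ≤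
      ∑ i ∈ Icc (k + 2) n, (x k - x (k + 1)) * ((x k - x (k + 1)) / (x k - x i)) := by
    refine sum_le_sum fun i hi => mul_one_div_abs_le_of_lt_left ht1.le ht2.le ?_
    have hi := mem_Icc.1 hi
    exact hanti (by simp; omega) (by simpa using hi.2) (by omega)
  rw [← mul_sum, ← mul_sum] at hleft hright
  have hmiddle := mul_one_div_add_one_div_eq ht1 ht2
  rw [← sum_range_add_sum_Ico _ (by omega : k + 2 ≤ n + 1), Ico_add_one_right_eq_Icc,
    sum_range_succ, sum_range_succ]
  linear_combination hleft + hright + hmiddle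
end

section
/- Let N ≥ 1 and s ≥ 0 be integers, and let p, q, t be integers with 0 ≤ p ≤ q < t ≤ N and t - q ≤ s + 1. Then (cos(qπ/N) - cos(tπ/N)) / (cos(pπ/N) - cos(tπ/N)) ≤ (π²(s+1)/2) · 1/(q - p + 1). -/
open Real

/-!
Write `θ = π/(2N)`. By the product formula the ratio equals
`(sin((t+q)θ) / sin((t+p)θ)) · (sin((t-q)θ) / sin((t-p)θ))`.
Both `(t+q)θ` and `(t+p)θ` lie in `(0, π]` with `t+q ≤ 2(t+p)`, which bounds the first factor by `π`;
Jordan's inequality on `(t-p)θ ≤ π/2` bounds the second by `(π/2)(t-q)/(t-p)`,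
and `(t-q)/(t-p) ≤ (s+1)/(q-p+1)` because `t-p = (t-q) + (q-p)` and `1 ≤ t-q ≤ s+1`.
-/

namespace Real

theorem cos_mul_div_sub_cos_mul_div (a b n : ℝ) :
    cos (a * π / n) - cos (b * π / n) =
      2 * sin ((b + a) * (π / (2 * n))) * sin ((b - a) * (π / (2 * n))) := by
  rw [cos_sub_cos, show (a * π / n - b * π / n) / 2 = -((b - a) * (π / (2 * n))) by ring,
    show (a * π / n + b * π / n) / 2 = (b + a) * (π / (2 * n)) by ring, sin_neg]
  ring

theorem sin_le_pi_mul_sin {x y : ℝ} (hy : 0 ≤ y) (hyx : y ≤ x) (hx : x ≤ 2 * y) (hxπ : x ≤ π) :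
    sin x ≤ π * sin y := by
  rcases le_or_gt y (π / 2) with hyπ | hyπ
  · calc sin x ≤ x := sin_le (hy.trans hyx)
      _ ≤ π * (2 / π * y) := by field_simp; linarith
      _ ≤ π * sin y := by gcongr; exact mul_le_sin hy hyπ
  · have hx' : sin x ≤ π - x := by
      simpa only [sin_pi_sub] using sin_le (sub_nonneg.2 hxπ) (x := π - x)
    have hy' : 2 / π * (π - y) ≤ sin y := by
      simpa only [sin_pi_sub] using mul_le_sin (x := π - y) (by linarith) (by linarith)
    calc sin x ≤ π - x := hx'
      _ ≤ π * (2 / π * (π - y)) := by field_simp; linarith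
      _ ≤ π * sin y := by gcongr

theorem sin_div_sin_le {b d : ℝ} (hb : 0 ≤ b) (hd : 0 < d) (hdπ : d ≤ π / 2) :
    sin b / sin d ≤ π / 2 * (b / d) := by
  have hsin : 2 / π * d ≤ sin d := mul_le_sin hd.le hdπ
  rw [div_le_iff₀ (lt_of_lt_of_le (by positivity) hsin)]
  calc sin b ≤ b := sin_le hb
    _ = π / 2 * (b / d) * (2 / π * d) := by field_simp
    _ ≤ π / 2 * (b / d) * sin d := by gcongr

theorem sin_mul_sin_div_sin_mul_sin_le {θ p q t : ℝ} (hθ : 0 < θ) (hp : 0 ≤ p) (hpq : p ≤ q)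
    (hqt : q < t) (htθ : 2 * t * θ ≤ π) :
    sin ((t + q) * θ) * sin ((t - q) * θ) / (sin ((t + p) * θ) * sin ((t - p) * θ)) ≤
      π * (π / 2 * ((t - q) / (t - p))) := by
  have htq : 0 < t - q := by linarith
  have htp : 0 < t - p := by linarith
  have hsinC : 0 < sin ((t + p) * θ) :=
    sin_pos_of_pos_of_lt_pi (by nlinarith) (by nlinarith)
  have hsinB : 0 ≤ sin ((t - q) * θ) :=
    sin_nonneg_of_nonneg_of_le_pi (by positivity) (by nlinarith)
  have hsinD : 0 < sin ((t - p) * θ) :=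
    sin_pos_of_pos_of_lt_pi (by positivity) (by nlinarith)
  have hA : sin ((t + q) * θ) / sin ((t + p) * θ) ≤ π :=
    div_le_of_le_mul₀ hsinC.le pi_pos.le <|
      sin_le_pi_mul_sin (by nlinarith) (by nlinarith) (by nlinarith) (by nlinarith)
  have hB : sin ((t - q) * θ) / sin ((t - p) * θ) ≤ π / 2 * ((t - q) / (t - p)) := by
    have := sin_div_sin_le (b := (t - q) * θ) (d := (t - p) * θ) (by positivity) (by positivity)
      (by nlinarith)
    rwa [mul_div_mul_right _ _ hθ.ne'] at this
  rw [mul_div_mul_comm]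
  exact mul_le_mul hA hB (div_nonneg hsinB hsinD.le) pi_pos.le

end Real

theorem sub_div_sub_le_div {p q t s : ℝ} (hs : 0 ≤ s) (hpq : p ≤ q) (hqt : q + 1 ≤ t)
    (hgap : t - q ≤ s + 1) : (t - q) / (t - p) ≤ (s + 1) / (q - p + 1) := by
  rw [div_le_div_iff₀ (by linarith) (by linarith)]
  nlinarith

/-- Key gap estimate for Chebyshev points of the second kind: removing at most `s`
consecutive points, the ratio of the enlarged gap to the distance to an earlier
point is at most `(π²(s+1)/2)/(q-p+1)`. -/
theorem chebyshev_gap_ratio_bound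
    (N s p q t : ℕ) (hN : 1 ≤ N) (hpq : p ≤ q) (hqt : q < t) (htN : t ≤ N)
    (hgap : t - q ≤ s + 1) :
    (Real.cos (q * Real.pi / N) - Real.cos (t * Real.pi / N)) /
        (Real.cos (p * Real.pi / N) - Real.cos (t * Real.pi / N)) ≤
      (Real.pi ^ 2 * (s + 1) / 2) * (1 / ((q : ℝ) - p + 1)) := by
  have hN0 : (0 : ℝ) < N := by exact_mod_cast hN
  have hp : (p : ℝ) ≤ q := by exact_mod_cast hpq
  have hq : (q : ℝ) + 1 ≤ t := by exact_mod_cast hqt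
  have ht : (t : ℝ) ≤ N := by exact_mod_cast htN
  have hs : (t : ℝ) - q ≤ s + 1 := by
    rw [sub_le_iff_le_add]; exact_mod_cast (by omega : t ≤ s + 1 + q)
  have htθ : 2 * t * (π / (2 * N)) ≤ π := by
    rw [mul_div_assoc', div_le_iff₀ (by positivity)]; nlinarith [pi_pos]
  rw [cos_mul_div_sub_cos_mul_div, cos_mul_div_sub_cos_mul_div, mul_assoc, mul_assoc,
    mul_div_mul_left _ _ two_ne_zero]
  calc _ ≤ π * (π / 2 * ((t - q) / (t - p))) :=
        sin_mul_sin_div_sin_mul_sin_le (by positivity) p.cast_nonneg hp (by linarith) htθ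
    _ ≤ π * (π / 2 * ((s + 1) / (q - p + 1))) := by
        gcongr π * (π / 2 * ?_)
        exact sub_div_sub_le_div s.cast_nonneg hp hq hs
    _ = π ^ 2 * (s + 1) / 2 * (1 / (q - p + 1)) := by ring
end

section
/- Let N and s be integers with 0 ≤ s < N - 2, and let k̄ be an integer with 1 ≤ k̄ and k̄ + s + 2 ≤ N. Then (s+1)/π ≤ (cos(k̄π/N) - cos((k̄+s+1)π/N)) / (cos((k̄-1)π/N) - cos(k̄π/N)) ≤ (s+1)(s+3)π²/4. -/
/-!
Writing each gap as a product of sines, `cos p - cos q = 2 sin ((p + q) / 2) sin ((q - p) / 2)`,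
the ratio becomes `sin A sin C / (sin B sin θ)` with `θ = π / 2N`, `A = (2k̄ + s + 1) θ`,
`B = (2k̄ - 1) θ` and `C = (s + 1) θ`. Concavity of `sin` on `[0, π]` makes `sin x / x` antitone
and `sin x / (π - x)` monotone there; this gives `sin B / 2 ≤ sin A ≤ (s + 3) sin B` and
`sin C ≤ (s + 1) sin θ`, while Jordan's inequality gives `2 (s + 1) sin θ ≤ π sin C`.
-/

open Real

section SinComparison

variable {a b c : ℝ}

theorem sin_mul_le_sin_mul_of_le (hb : 0 < b) (hba : b ≤ a) (ha : a ≤ π) :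
    sin a * b ≤ sin b * a := by
  have ha0 : 0 < a := hb.trans_le hba
  have h := strictConcaveOn_sin_Icc.concaveOn.2 (Set.mem_Icc.2 ⟨le_rfl, pi_pos.le⟩)
    (Set.mem_Icc.2 ⟨ha0.le, ha⟩) (show 0 ≤ 1 - b / a by rw [sub_nonneg, div_le_one ha0]; exact hba)
    (show 0 ≤ b / a by positivity) (by ring)
  simp only [smul_eq_mul, mul_zero, sin_zero, zero_add, div_mul_cancel₀ _ ha0.ne'] at h
  calc sin a * b = b / a * sin a * a := by field_simp
    _ ≤ sin b * a := by gcongr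

theorem sin_le_mul_sin_of_le_mul (hb : 0 < b) (hba : b ≤ a) (ha : a ≤ π) (hac : a ≤ c * b) :
    sin a ≤ c * sin b := by
  have hsinb : 0 ≤ sin b := sin_nonneg_of_nonneg_of_le_pi hb.le (hba.trans ha)
  refine le_of_mul_le_mul_right ?_ hb
  calc sin a * b ≤ sin b * a := sin_mul_le_sin_mul_of_le hb hba ha
    _ ≤ sin b * (c * b) := by gcongr
    _ = c * sin b * b := by ring

theorem sin_le_mul_sin_of_pi_sub_le_mul (ha : 0 ≤ a) (hab : a ≤ b) (hb : b < π)
    (hc : π - a ≤ c * (π - b)) : sin a ≤ c * sin b := by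
  have h := sin_le_mul_sin_of_le_mul (sub_pos.2 hb) (by linarith) (by linarith) hc
  rwa [sin_pi_sub, sin_pi_sub] at h

theorem two_mul_mul_sin_le_pi_mul_sin_mul (hc : 0 ≤ c) (ha : 0 ≤ a) (hca : c * a ≤ π / 2) :
    2 * c * sin a ≤ π * sin (c * a) := by
  calc 2 * c * sin a ≤ 2 * (c * a) := by nlinarith [sin_le ha]
    _ = π * (2 / π * (c * a)) := by field_simp
    _ ≤ π * sin (c * a) := by gcongr; exact mul_le_sin (by positivity) hca

end SinComparison

theorem cos_mul_pi_div_sub_cos_mul_pi_div (x y n : ℝ) :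
    cos (x * π / n) - cos (y * π / n) =
      2 * sin ((x + y) * (π / (2 * n))) * sin ((y - x) * (π / (2 * n))) := by
  rw [cos_sub_cos, show (x * π / n - y * π / n) / 2 = -((y - x) * (π / (2 * n))) by ring,
    show (x * π / n + y * π / n) / 2 = (x + y) * (π / (2 * n)) by ring, sin_neg]
  ring

theorem sin_gap_ratio_bounds {θ k t : ℝ} (hθ0 : 0 < θ) (hk : 1 ≤ k) (ht : 0 ≤ t)
    (hπ : (2 * k + 2 * t + 4) * θ ≤ π) :
    (t + 1) / π ≤
      2 * sin ((2 * k + t + 1) * θ) * sin ((t + 1) * θ) / (2 * sin ((2 * k - 1) * θ) * sin θ) ∧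
    2 * sin ((2 * k + t + 1) * θ) * sin ((t + 1) * θ) / (2 * sin ((2 * k - 1) * θ) * sin θ) ≤
      (t + 1) * (t + 3) * π ^ 2 / 4 := by
  set A := (2 * k + t + 1) * θ
  set B := (2 * k - 1) * θ
  set C := (t + 1) * θ
  have hB0 : 0 < B := mul_pos (by linarith) hθ0
  have hBA : B ≤ A := mul_le_mul_of_nonneg_right (by linarith) hθ0.le
  have hApi : A < π := by nlinarith
  have hCpi : C ≤ π / 2 := by nlinarith
  have hθC : θ ≤ C := by nlinarith
  have hsinB : 0 < sin B := sin_pos_of_pos_of_lt_pi hB0 (hBA.trans_lt hApi)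
  have hsinA : 0 < sin A := sin_pos_of_pos_of_lt_pi (hB0.trans_le hBA) hApi
  have hsinθ : 0 < sin θ := sin_pos_of_pos_of_lt_pi hθ0 (by linarith)
  have hsinC : 0 < sin C := sin_pos_of_pos_of_lt_pi (hθ0.trans_le hθC) (by linarith)
  have hAB : sin A ≤ (t + 3) * sin B :=
    sin_le_mul_sin_of_le_mul hB0 hBA hApi.le (by simp only [A, B]; nlinarith)
  have hBA' : sin B ≤ 2 * sin A :=
    sin_le_mul_sin_of_pi_sub_le_mul hB0.le hBA hApi (by simp only [A, B]; nlinarith)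
  have hCθ : sin C ≤ (t + 1) * sin θ :=
    sin_le_mul_sin_of_le_mul hθ0 hθC (by linarith) le_rfl
  have hθC' : 2 * (t + 1) * sin θ ≤ π * sin C :=
    two_mul_mul_sin_le_pi_mul_sin_mul (by linarith) hθ0.le hCpi
  have hden : 0 < 2 * sin B * sin θ := by positivity
  constructor
  · rw [div_le_div_iff₀ pi_pos hden]
    calc (t + 1) * (2 * sin B * sin θ) ≤ (t + 1) * (2 * (2 * sin A) * sin θ) := by gcongr
      _ = 2 * sin A * (2 * (t + 1) * sin θ) := by ring
      _ ≤ 2 * sin A * (π * sin C) := by gcongr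
      _ = 2 * sin A * sin C * π := by ring
  · rw [div_le_iff₀ hden]
    have hπ2 : 4 ≤ π ^ 2 := by nlinarith [pi_gt_three]
    calc 2 * sin A * sin C ≤ 2 * ((t + 3) * sin B) * ((t + 1) * sin θ) := by gcongr
      _ = (t + 1) * (t + 3) * 4 / 4 * (2 * sin B * sin θ) := by ring
      _ ≤ (t + 1) * (t + 3) * π ^ 2 / 4 * (2 * sin B * sin θ) := by gcongr

theorem chebyshev_gap_ratio_bounds (n k t : ℝ) (hk : 1 ≤ k) (ht : 0 ≤ t) (hn : k + t + 2 ≤ n) :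
    (t + 1) / π ≤
      (cos (k * π / n) - cos ((k + t + 1) * π / n)) / (cos ((k - 1) * π / n) - cos (k * π / n)) ∧
    (cos (k * π / n) - cos ((k + t + 1) * π / n)) / (cos ((k - 1) * π / n) - cos (k * π / n)) ≤
      (t + 1) * (t + 3) * π ^ 2 / 4 := by
  have hn0 : 0 < n := by linarith
  rw [cos_mul_pi_div_sub_cos_mul_pi_div, cos_mul_pi_div_sub_cos_mul_pi_div,
    show k + (k + t + 1) = 2 * k + t + 1 by ring, show k + t + 1 - k = t + 1 by ring,
    show k - 1 + k = 2 * k - 1 by ring, show k - (k - 1) = 1 by ring, one_mul]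
  refine sin_gap_ratio_bounds (by positivity) hk ht ?_
  calc (2 * k + 2 * t + 4) * (π / (2 * n)) = (k + t + 2) / n * π := by field_simp; ring
    _ ≤ π := mul_le_of_le_one_left pi_pos.le ((div_le_one hn0).2 hn)

theorem chebyshev_enlarged_gap_ratio_general
    (N s kbar : ℕ) (hk1 : 1 ≤ kbar) (hk2 : kbar + s + 2 ≤ N) :
    (s + 1 : ℝ) / Real.pi ≤
      (Real.cos (kbar * Real.pi / N) - Real.cos ((kbar + s + 1) * Real.pi / N)) /
        (Real.cos (((kbar : ℝ) - 1) * Real.pi / N) - Real.cos (kbar * Real.pi / N)) ∧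
    (Real.cos (kbar * Real.pi / N) - Real.cos ((kbar + s + 1) * Real.pi / N)) /
        (Real.cos (((kbar : ℝ) - 1) * Real.pi / N) - Real.cos (kbar * Real.pi / N)) ≤
      (s + 1) * (s + 3) * Real.pi ^ 2 / 4 :=
  chebyshev_gap_ratio_bounds N kbar s (by exact_mod_cast hk1) s.cast_nonneg
    (by exact_mod_cast hk2)

/-- Ratio of the enlarged Chebyshev gap (after removing `s` consecutive points)
to the ordinary gap immediately before it. -/
theorem chebyshev_enlarged_gap_ratio
    (N s kbar : ℕ) (hs : s + 2 < N) (hk1 : 1 ≤ kbar) (hk2 : kbar + s + 2 ≤ N) :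
    (s + 1 : ℝ) / Real.pi ≤
      (Real.cos (kbar * Real.pi / N) - Real.cos ((kbar + s + 1) * Real.pi / N)) /
        (Real.cos (((kbar : ℝ) - 1) * Real.pi / N) - Real.cos (kbar * Real.pi / N)) ∧
    (Real.cos (kbar * Real.pi / N) - Real.cos ((kbar + s + 1) * Real.pi / N)) /
        (Real.cos (((kbar : ℝ) - 1) * Real.pi / N) - Real.cos (kbar * Real.pi / N)) ≤
      (s + 1) * (s + 3) * Real.pi ^ 2 / 4 :=
  chebyshev_enlarged_gap_ratio_general N s kbar hk1 hk2
end

section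
/- Let N and s be integers with 0 ≤ s < N - 2, and let k̄ be an integer with 1 ≤ k̄ and k̄ + s + 2 ≤ N. Then 4/(π²(s+1)(s+3)) ≤ (cos((k̄+s+1)π/N) - cos((k̄+s+2)π/N)) / (cos(k̄π/N) - cos((k̄+s+1)π/N)) ≤ π/(s+1). -/
open Real

private lemma gap_eq (x y : ℝ) :
    Real.cos x - Real.cos y = 2 * Real.sin ((x + y) / 2) * Real.sin ((y - x) / 2) := by
  rw [Real.cos_sub_cos, show (x - y) / 2 = -((y - x) / 2) by ring, Real.sin_neg]
  ring

private lemma sin_concave_aux {a b : ℝ} (ha : 0 ≤ a) (hab : a ≤ b) (hb : b ≤ π) :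
    a * Real.sin b ≤ b * Real.sin a := by
  rcases eq_or_lt_of_le (ha.trans hab) with hb0 | hb0
  · have ha0 : a = 0 := le_antisymm (hb0 ▸ hab) ha
    simp [ha0, ← hb0]
  · have hmem : b ∈ Set.Icc (0 : ℝ) π := ⟨hb0.le, hb⟩
    have h0mem : (0 : ℝ) ∈ Set.Icc (0 : ℝ) π := ⟨le_rfl, Real.pi_pos.le⟩
    have ht1 : 0 ≤ a / b := div_nonneg ha hb0.le
    have ht2 : 0 ≤ 1 - a / b := by
      have : a / b ≤ 1 := (div_le_one hb0).mpr hab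
      linarith
    have key := strictConcaveOn_sin_Icc.concaveOn.2 hmem h0mem ht1 ht2 (by ring)
    simp only [smul_eq_mul, Real.sin_zero, mul_zero, add_zero] at key
    rw [show a / b * b = a by field_simp] at key
    have h2 := mul_le_mul_of_nonneg_left key hb0.le
    have e : b * (a / b * Real.sin b) = a * Real.sin b := by field_simp
    linarith [e ▸ h2]

/-- Jordan's inequality, multiplied form. -/
private lemma jordan' {x : ℝ} (h1 : 0 ≤ x) (h2 : x ≤ π / 2) : 2 * x ≤ π * Real.sin x := by
  have h := Real.mul_le_sin h1 h2
  have hπ := Real.pi_pos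
  have e : 2 * x = π * (2 / π * x) := by field_simp
  nlinarith [mul_le_mul_of_nonneg_left h hπ.le]

set_option maxHeartbeats 1000000 in
/-- Ratio of the ordinary Chebyshev gap immediately after the enlarged gap
(created by removing `s` consecutive points) to that enlarged gap. -/
theorem chebyshev_gap_after_enlarged_ratio
    (N s kbar : ℕ) (hs : s + 2 < N) (hk1 : 1 ≤ kbar) (hk2 : kbar + s + 2 ≤ N) :
    4 / (Real.pi ^ 2 * (s + 1) * (s + 3)) ≤
      (Real.cos ((kbar + s + 1) * Real.pi / N) - Real.cos ((kbar + s + 2) * Real.pi / N)) /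
        (Real.cos (kbar * Real.pi / N) - Real.cos ((kbar + s + 1) * Real.pi / N)) ∧
    (Real.cos ((kbar + s + 1) * Real.pi / N) - Real.cos ((kbar + s + 2) * Real.pi / N)) /
        (Real.cos (kbar * Real.pi / N) - Real.cos ((kbar + s + 1) * Real.pi / N)) ≤
      Real.pi / (s + 1) := by
  have hπ := Real.pi_pos
  have hNpos : 0 < N := by omega
  have hNn : (0:ℝ) < (N:ℝ) := by exact_mod_cast hNpos
  have hK1 : (1:ℝ) ≤ (kbar:ℝ) := by exact_mod_cast hk1
  have hS0 : (0:ℝ) ≤ (s:ℝ) := Nat.cast_nonneg s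
  have hk2' : (kbar:ℝ) + (s:ℝ) + 2 ≤ (N:ℝ) := by exact_mod_cast hk2
  have hs' : (s:ℝ) + 2 < (N:ℝ) := by exact_mod_cast hs
  obtain ⟨c, hc_def⟩ : ∃ c : ℝ, c = π / (2 * N) := ⟨_, rfl⟩
  obtain ⟨a, ha_def⟩ : ∃ a : ℝ, a = (2 * (kbar:ℝ) + (s:ℝ) + 1) * c := ⟨_, rfl⟩
  obtain ⟨b, hb_def⟩ : ∃ b : ℝ, b = (2 * (kbar:ℝ) + 2 * (s:ℝ) + 3) * c := ⟨_, rfl⟩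
  have hc : 0 < c := by rw [hc_def]; positivity
  have hcπ : 2 * N * c = π := by rw [hc_def]; field_simp
  have ha_pos : 0 < a := by
    rw [ha_def]
    have : (0:ℝ) < 2 * (kbar:ℝ) + (s:ℝ) + 1 := by linarith
    positivity
  have hab : a < b := by
    rw [ha_def, hb_def]
    have : 2 * (kbar:ℝ) + (s:ℝ) + 1 < 2 * (kbar:ℝ) + 2 * (s:ℝ) + 3 := by linarith
    exact mul_lt_mul_of_pos_right this hc
  have hb_lt : b ≤ π - c := by
    have h1 : 2 * (kbar:ℝ) + 2 * (s:ℝ) + 3 ≤ 2 * N - 1 := by linarith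
    have := mul_le_mul_of_nonneg_right h1 hc.le
    rw [hb_def]; nlinarith
  have hbπ : b < π := by linarith
  have ha_ub : a ≤ π - ((s:ℝ) + 3) * c := by
    have h1 : 2 * (kbar:ℝ) + (s:ℝ) + 1 ≤ 2 * N - ((s:ℝ) + 3) := by linarith
    have := mul_le_mul_of_nonneg_right h1 hc.le
    rw [ha_def]; nlinarith
  have haπ : a < π := by nlinarith
  have hS1c : ((s:ℝ) + 1) * c ≤ π / 2 := by
    have h1 : (s:ℝ) + 1 ≤ N := by linarith
    nlinarith [mul_le_mul_of_nonneg_right h1 hc.le]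
  have hchalf : c ≤ π / 2 := by
    have h1 : (1:ℝ) ≤ N := by linarith
    nlinarith [mul_le_mul_of_nonneg_right h1 hc.le]
  -- positivity of the sines
  have hsa : 0 < Real.sin a := Real.sin_pos_of_pos_of_lt_pi ha_pos haπ
  have hsb : 0 < Real.sin b := Real.sin_pos_of_pos_of_lt_pi (ha_pos.trans hab) hbπ
  have hsc : 0 < Real.sin c := Real.sin_pos_of_pos_of_lt_pi hc (by linarith)
  have hsS : 0 < Real.sin (((s:ℝ) + 1) * c) :=
    Real.sin_pos_of_pos_of_lt_pi (by positivity) (by linarith)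
  -- the two gaps as products of sines
  have hgap1 : Real.cos ((kbar:ℝ) * π / N) - Real.cos (((kbar:ℝ) + (s:ℝ) + 1) * π / N)
      = 2 * Real.sin a * Real.sin (((s:ℝ) + 1) * c) := by
    rw [gap_eq]
    congr 2
    · rw [ha_def, hc_def]; field_simp; ring
    · rw [hc_def]; field_simp; ring
  have hgap2 : Real.cos (((kbar:ℝ) + (s:ℝ) + 1) * π / N)
        - Real.cos (((kbar:ℝ) + (s:ℝ) + 2) * π / N)
      = 2 * Real.sin b * Real.sin c := by
    rw [gap_eq]
    congr 2
    · rw [hb_def, hc_def]; field_simp; ring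
    · rw [hc_def]; field_simp; ring
  rw [hgap1, hgap2]
  have hD : 0 < 2 * Real.sin a * Real.sin (((s:ℝ) + 1) * c) := by positivity
  -- key inequalities
  have jordanS : 2 * (((s:ℝ) + 1) * c) ≤ π * Real.sin (((s:ℝ) + 1) * c) :=
    jordan' (by positivity) hS1c
  have jordanc : 2 * c ≤ π * Real.sin c := jordan' hc.le hchalf
  have hsinc_le : Real.sin c ≤ c := Real.sin_le hc.le
  have hsinS_le : Real.sin (((s:ℝ) + 1) * c) ≤ ((s:ℝ) + 1) * c := Real.sin_le (by positivity)
  -- key lower-bound inequality : 2 sin a ≤ π (s+3) sin b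
  have key : 2 * Real.sin a ≤ π * ((s:ℝ) + 3) * Real.sin b := by
    rcases le_or_gt b (π / 2) with hb2 | hb2
    · have h1 : Real.sin a ≤ a := Real.sin_le ha_pos.le
      have h2 : 2 * b ≤ π * Real.sin b := jordan' (by linarith) hb2
      have h3 : 0 ≤ π * ((s:ℝ) + 2) * Real.sin b := by positivity
      linarith
    · have hu : c ≤ π - b := by linarith
      have h1 : Real.sin a ≤ π - a := by
        have := Real.sin_le (x := π - a) (by linarith)
        rwa [Real.sin_pi_sub] at this
      have h2 : 2 * (π - b) ≤ π * Real.sin b := by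
        have := jordan' (x := π - b) (by linarith) (by linarith)
        rwa [Real.sin_pi_sub] at this
      have hpa : π - a = (π - b) + ((s:ℝ) + 2) * c := by rw [ha_def, hb_def]; ring
      have h3 := mul_le_mul_of_nonneg_left h2 (show (0:ℝ) ≤ (s:ℝ) + 3 by linarith)
      have h4 := mul_le_mul_of_nonneg_left hu (show (0:ℝ) ≤ 2 * ((s:ℝ) + 2) by linarith)
      nlinarith
  constructor
  · -- lower bound
    rw [div_le_div_iff₀ (by positivity) hD]
    have h1 := mul_le_mul_of_nonneg_left hsinS_le
      (show (0:ℝ) ≤ 8 * Real.sin a by positivity)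
    have h2 := mul_le_mul_of_nonneg_right key
      (show (0:ℝ) ≤ 4 * (((s:ℝ) + 1) * c) by positivity)
    have h3 := mul_le_mul_of_nonneg_left jordanc
      (show (0:ℝ) ≤ 2 * π * (((s:ℝ) + 1) * ((s:ℝ) + 3)) * Real.sin b by positivity)
    nlinarith [h1, h2, h3]
  · -- upper bound
    rw [div_le_div_iff₀ hD (by positivity)]
    have hconc : a * Real.sin b ≤ b * Real.sin a :=
      sin_concave_aux ha_pos.le hab.le hbπ.le
    have hb2a : b ≤ 2 * a := by
      rw [ha_def, hb_def]
      nlinarith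
    have hsb2 : Real.sin b ≤ 2 * Real.sin a := by nlinarith
    have t1 : Real.sin b * Real.sin c ≤ 2 * Real.sin a * c :=
      mul_le_mul hsb2 hsinc_le hsc.le (by positivity)
    have h1 := mul_le_mul_of_nonneg_left t1
      (show (0:ℝ) ≤ 2 * ((s:ℝ) + 1) by linarith)
    have h2 := mul_le_mul_of_nonneg_left jordanS
      (show (0:ℝ) ≤ 2 * Real.sin a by positivity)
    nlinarith [h1, h2]
end

section
/- Let N ≥ 2 and let k be an integer with 1 ≤ k ≤ N - 1. Then 2/(3π) ≤ (cos(kπ/N) - cos((k+1)π/N)) / (cos((k-1)π/N) - cos(kπ/N)) ≤ 3π/2. -/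
open Real

lemma sin_le_min_s11 {y : ℝ} (hy0 : 0 ≤ y) (hyπ : y ≤ Real.pi) :
    Real.sin y ≤ min y (Real.pi - y) := by
  refine le_min (Real.sin_le hy0) ?_
  have := Real.sin_le (x := Real.pi - y) (by linarith)
  rwa [Real.sin_pi_sub] at this

lemma two_div_pi_mul_min_le_sin_s11 {x : ℝ} (hx0 : 0 ≤ x) (hxπ : x ≤ Real.pi) :
    2 / Real.pi * min x (Real.pi - x) ≤ Real.sin x := by
  rcases le_total x (Real.pi / 2) with h | h
  · have hmin : min x (Real.pi - x) = x := min_eq_left (by linarith)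
    rw [hmin]; exact Real.mul_le_sin hx0 h
  · have hmin : min x (Real.pi - x) = Real.pi - x := min_eq_right (by linarith)
    rw [hmin, ← Real.sin_pi_sub]
    exact Real.mul_le_sin (by linarith) (by linarith)

lemma sin_ratio_aux {x y : ℝ} (hx0 : 0 ≤ x) (hxπ : x ≤ Real.pi)
    (hy0 : 0 ≤ y) (hyπ : y ≤ Real.pi)
    (hmin : min y (Real.pi - y) ≤ 3 * min x (Real.pi - x)) :
    Real.sin y ≤ 3 * Real.pi / 2 * Real.sin x := by
  have hπ := Real.pi_pos
  have h1 := sin_le_min_s11 hy0 hyπ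
  have h2 := two_div_pi_mul_min_le_sin_s11 hx0 hxπ
  have h3 : min x (Real.pi - x) ≤ Real.pi / 2 * Real.sin x := by
    rw [div_mul_eq_mul_div, div_le_iff₀ hπ] at h2
    linarith
  nlinarith

/-- The ratio of consecutive gaps of the full set of Chebyshev points of the
second kind `cos(jπ/N)` is between `2/(3π)` and `3π/2`. -/
theorem chebyshev_consecutive_gap_ratio
    (N k : ℕ) (hN : 2 ≤ N) (hk1 : 1 ≤ k) (hk2 : k + 1 ≤ N) :
    2 / (3 * Real.pi) ≤
      (Real.cos (k * Real.pi / N) - Real.cos ((k + 1) * Real.pi / N)) /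
        (Real.cos (((k : ℝ) - 1) * Real.pi / N) - Real.cos (k * Real.pi / N)) ∧
    (Real.cos (k * Real.pi / N) - Real.cos ((k + 1) * Real.pi / N)) /
        (Real.cos (((k : ℝ) - 1) * Real.pi / N) - Real.cos (k * Real.pi / N)) ≤
      3 * Real.pi / 2 := by
  have hπ := Real.pi_pos
  have hN' : (2 : ℝ) ≤ (N : ℝ) := by exact_mod_cast hN
  have hk1' : (1 : ℝ) ≤ (k : ℝ) := by exact_mod_cast hk1
  have hk2' : (k : ℝ) + 1 ≤ (N : ℝ) := by exact_mod_cast hk2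
  have hNpos : (0 : ℝ) < (N : ℝ) := by linarith
  set θ : ℝ := Real.pi / N with hθdef
  have hθpos : 0 < θ := by positivity
  have hθle : θ ≤ Real.pi / 2 := by
    rw [hθdef, div_le_div_iff₀ hNpos two_pos]; nlinarith
  set a : ℝ := ((k : ℝ) - 1 / 2) * θ with ha
  set b : ℝ := ((k : ℝ) + 1 / 2) * θ with hb
  have hab : b = a + θ := by rw [ha, hb]; ring
  have haθ : θ / 2 ≤ a := by rw [ha]; nlinarith
  have hbθ : θ / 2 ≤ Real.pi - b := by
    have : b ≤ ((N : ℝ) - 1 / 2) * θ := by rw [hb]; nlinarith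
    have hNθ : (N : ℝ) * θ = Real.pi := by rw [hθdef]; field_simp
    nlinarith
  have ha0 : 0 < a := by linarith
  have haπ : a < Real.pi := by linarith
  have hb0 : 0 < b := by linarith
  have hbπ : b < Real.pi := by linarith
  have hsa : 0 < Real.sin a := Real.sin_pos_of_pos_of_lt_pi ha0 haπ
  have hsb : 0 < Real.sin b := Real.sin_pos_of_pos_of_lt_pi hb0 hbπ
  have hsθ : 0 < Real.sin (θ / 2) :=
    Real.sin_pos_of_pos_of_lt_pi (by linarith) (by linarith)
  -- rewrite numerator and denominator
  have hnum : Real.cos (k * Real.pi / N) - Real.cos ((k + 1) * Real.pi / N)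
      = 2 * Real.sin b * Real.sin (θ / 2) := by
    rw [Real.cos_sub_cos]
    have e1 : ((k : ℝ) * Real.pi / N + (k + 1) * Real.pi / N) / 2 = b := by
      rw [hb, hθdef]; ring
    have e2 : ((k : ℝ) * Real.pi / N - (k + 1) * Real.pi / N) / 2 = -(θ / 2) := by
      rw [hθdef]; ring
    rw [e1, e2, Real.sin_neg]; ring
  have hden : Real.cos (((k : ℝ) - 1) * Real.pi / N) - Real.cos (k * Real.pi / N)
      = 2 * Real.sin a * Real.sin (θ / 2) := by
    rw [Real.cos_sub_cos]
    have e1 : (((k : ℝ) - 1) * Real.pi / N + k * Real.pi / N) / 2 = a := by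
      rw [ha, hθdef]; ring
    have e2 : (((k : ℝ) - 1) * Real.pi / N - k * Real.pi / N) / 2 = -(θ / 2) := by
      rw [hθdef]; ring
    rw [e1, e2, Real.sin_neg]; ring
  rw [hnum, hden]
  have hdenpos : 0 < 2 * Real.sin a * Real.sin (θ / 2) := by positivity
  -- min comparisons
  have hmin1 : min b (Real.pi - b) ≤ 3 * min a (Real.pi - a) := by
    rcases le_total b (Real.pi - b) with h1 | h1 <;>
      rcases le_total a (Real.pi - a) with h2 | h2 <;>
      simp only [min_eq_left, min_eq_right, h1, h2] <;> linarith
  have hmin2 : min a (Real.pi - a) ≤ 3 * min b (Real.pi - b) := by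
    rcases le_total b (Real.pi - b) with h1 | h1 <;>
      rcases le_total a (Real.pi - a) with h2 | h2 <;>
      simp only [min_eq_left, min_eq_right, h1, h2] <;> linarith
  have hub : Real.sin b ≤ 3 * Real.pi / 2 * Real.sin a :=
    sin_ratio_aux ha0.le haπ.le hb0.le hbπ.le hmin1
  have hlb : Real.sin a ≤ 3 * Real.pi / 2 * Real.sin b :=
    sin_ratio_aux hb0.le hbπ.le ha0.le haπ.le hmin2
  have hub' := mul_le_mul_of_nonneg_right hub hsθ.le
  have hlb' := mul_le_mul_of_nonneg_right hlb hsθ.le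
  constructor
  · rw [div_le_div_iff₀ (by positivity) hdenpos]
    ring_nf at hlb' ⊢
    linarith
  · rw [div_le_iff₀ hdenpos]
    ring_nf at hub' ⊢
    linarith
end

section
/- Let n ≥ 1 and let x_j = cos(jπ/n) for j = 0, ..., n be the Chebyshev points of the second kind. Then for every j ∈ {0,...,n}, the barycentric weight satisfies 1/Π_{k≠j}(x_j - x_k) = (-1)^j · δ_j · 2^{n-1}/n, where δ_j = 1/2 if j = 0 or j = n, and δ_j = 1 otherwise. -/
/-!
With `s m = chebSin n m = sin (m π / 2n)`, the identity
`cos a - cos b = -2 sin ((a + b) / 2) sin ((a - b) / 2)` gives `x_j - x_k = ∓ 2 s (j + k) s |j - k|`, the sign being `-` exactly for `k < j`. Hence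
`∏_{k ≠ j} (x_j - x_k)` is `(-1)^j 2^n` times a product of values `s m` with `0 < m < 2n`.
Using `s (2n - m) = s m`, `s n = 1` and `s (2j) = 2 s j s (n - j)`, that product collapses to
`Q² / 2` for `0 < j < n` and to `Q²` for `j ∈ {0, n}`, where `Q = ∏_{0<m<n} s m`. Finally
`Q² = n / 4^(n-1)` by `∏_{0<m<N} sin (m π / N) = N / 2^(N-1)`, which is the norm of the identity
`∏_{0<m<N} (1 - ζ^m) = N` for a primitive `N`-th root of unity `ζ`.
-/

open Finset Real

lemma prod_Ico_succ_mul_prod_Ico {M : Type*} [CommMonoid M] (f : ℕ → M) {a b c : ℕ}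
    (hca : c ≤ a) (hab : a ≤ b) :
    (∏ m ∈ Ico c (a + 1), f m) * ∏ m ∈ Ico a b, f m = f a * ∏ m ∈ Ico c b, f m := by
  rw [prod_Ico_succ_top hca, ← prod_Ico_consecutive f hca hab]
  ac_rfl

theorem prod_sin_mul_pi_div (N : ℕ) :
    ∏ k ∈ range N, sin ((k + 1) * π / (N + 1)) = (N + 1) / 2 ^ N := by
  have hμ := Complex.isPrimitiveRoot_exp (N + 1) N.succ_ne_zero
  have hnorm := congrArg (‖·‖) hμ.prod_one_sub_pow_eq_order
  have hterm : ∀ k ∈ range N,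
      ‖1 - Complex.exp (2 * π * Complex.I / (N + 1 : ℕ)) ^ (k + 1)‖ =
        2 * sin ((k + 1) * π / (N + 1)) := by
    intro k hk
    have hk : (k : ℝ) + 1 < N + 1 := by exact_mod_cast Nat.succ_lt_succ (mem_range.mp hk)
    have hsin : 0 < sin ((k + 1) * π / (N + 1)) := by
      apply sin_pos_of_pos_of_lt_pi (by positivity)
      rw [div_lt_iff₀ (by positivity)]
      nlinarith [pi_pos]
    rw [← Complex.exp_nat_mul, norm_sub_rev,
      show (↑(k + 1) * (2 * π * Complex.I / (N + 1 : ℕ)) : ℂ) =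
        Complex.I * ((2 * ((k + 1) * π / (N + 1)) : ℝ) : ℂ) by push_cast; ring,
      Complex.norm_exp_I_mul_ofReal_sub_one, mul_div_cancel_left₀ _ two_ne_zero,
      Real.norm_of_nonneg (mul_nonneg zero_le_two hsin.le)]
  rw [Complex.norm_prod, prod_congr rfl hterm, prod_mul_distrib, prod_const, card_range] at hnorm
  rw [eq_div_iff (by positivity), mul_comm]
  exact_mod_cast hnorm

noncomputable def chebSin (n m : ℕ) : ℝ := sin (m * π / (2 * n))

section
variable {n : ℕ}

lemma chebSin_self (hn : n ≠ 0) : chebSin n n = 1 := by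
  rw [chebSin, show (n : ℝ) * π / (2 * n) = π / 2 by field_simp, sin_pi_div_two]

lemma chebSin_two_mul_sub {m : ℕ} (hm : m ≤ 2 * n) : chebSin n (2 * n - m) = chebSin n m := by
  rcases eq_or_ne n 0 with rfl | hn
  · simp_all
  rw [chebSin, chebSin, Nat.cast_sub hm, ← sin_pi_sub]
  congr 1
  push_cast
  field_simp
  ring

lemma chebSin_pos {m : ℕ} (hm₀ : 0 < m) (hm : m < 2 * n) : 0 < chebSin n m := by
  have hm₀ : (0 : ℝ) < m := by exact_mod_cast hm₀
  have hm : (m : ℝ) < 2 * n := by exact_mod_cast hm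
  apply sin_pos_of_pos_of_lt_pi (div_pos (by positivity) (by linarith))
  rw [div_lt_iff₀ (by linarith)]
  nlinarith [pi_pos]

lemma chebSin_two_mul {j : ℕ} (hn : n ≠ 0) (hj : j ≤ n) :
    chebSin n (2 * j) = 2 * chebSin n j * chebSin n (n - j) := by
  rw [chebSin, chebSin, chebSin, Nat.cast_sub hj,
    show ((n : ℝ) - j) * π / (2 * n) = π / 2 - j * π / (2 * n) by field_simp,
    sin_pi_div_two_sub, ← sin_two_mul]
  congr 1
  push_cast
  ring

lemma cos_sub_cos_of_lt {j k : ℕ} (hkj : k < j) :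
    cos (j * π / n) - cos (k * π / n) = -(2 * (chebSin n (j + k) * chebSin n (j - k))) := by
  rw [cos_sub_cos, chebSin, chebSin, Nat.cast_sub hkj.le]
  push_cast
  ring_nf

lemma cos_sub_cos_of_gt {j k : ℕ} (hjk : j < k) :
    cos (j * π / n) - cos (k * π / n) = 2 * (chebSin n (j + k) * chebSin n (k - j)) := by
  rw [cos_sub_cos, chebSin, chebSin, Nat.cast_sub hjk.le,
    show ((k : ℝ) - j) * π / (2 * n) = -((j * π / n - k * π / n) / 2) by ring, sin_neg]
  push_cast
  ring_nf

lemma prod_Ico_chebSin_reflect {a b : ℕ} (hb : b ≤ 2 * n + 1) :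
    ∏ m ∈ Ico (2 * n + 1 - b) (2 * n + 1 - a), chebSin n m = ∏ m ∈ Ico a b, chebSin n m := by
  rw [← prod_Ico_reflect _ a hb]
  refine prod_congr rfl fun m hm => chebSin_two_mul_sub ?_
  have := (mem_Ico.mp hm).2
  omega

lemma prod_Ico_succ_chebSin (hn : n ≠ 0) :
    ∏ m ∈ Ico 1 (n + 1), chebSin n m = ∏ m ∈ Ico 1 n, chebSin n m := by
  rw [prod_Ico_succ_top (Nat.one_le_iff_ne_zero.mpr hn), chebSin_self hn, mul_one]

lemma prod_Ico_chebSin_upper_half :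
    ∏ m ∈ Ico (n + 1) (2 * n), chebSin n m = ∏ m ∈ Ico 1 n, chebSin n m := by
  rw [← prod_Ico_chebSin_reflect (a := 1) (b := n) (by omega),
    show 2 * n + 1 - n = n + 1 by omega, show 2 * n + 1 - 1 = 2 * n by omega]

lemma sq_two_pow_mul_prod_chebSin (hn : n ≠ 0) :
    (2 ^ (n - 1) * ∏ m ∈ Ico 1 n, chebSin n m) ^ 2 = n := by
  have hfull : ∏ m ∈ Ico 1 (2 * n), chebSin n m = 2 * n / 2 ^ (2 * n - 1) := by
    have hN : ((2 * n - 1 : ℕ) : ℝ) + 1 = 2 * n := by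
      rw [Nat.cast_sub (by omega)]; push_cast; ring
    rw [prod_Ico_eq_prod_range, ← hN, ← prod_sin_mul_pi_div]
    refine prod_congr rfl fun k _ => ?_
    rw [chebSin, hN]
    push_cast
    ring_nf
  rw [← prod_Ico_consecutive _ (by omega : 1 ≤ n) (by omega : n ≤ 2 * n),
    prod_eq_prod_Ico_succ_bot (by omega : n < 2 * n), chebSin_self hn, one_mul,
    prod_Ico_chebSin_upper_half] at hfull
  rw [mul_pow, sq (∏ m ∈ Ico 1 n, chebSin n m), hfull, ← pow_mul,
    show 2 * n - 1 = (n - 1) * 2 + 1 by omega, pow_succ]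
  field_simp

lemma prod_range_cos_sub_cos (j : ℕ) :
    ∏ k ∈ range j, (cos (j * π / n) - cos (k * π / n)) =
      (-2) ^ j * ((∏ m ∈ Ico j (2 * j), chebSin n m) * ∏ m ∈ Ico 1 (j + 1), chebSin n m) := by
  have hsum : ∏ k ∈ range j, chebSin n (j + k) = ∏ m ∈ Ico j (2 * j), chebSin n m := by
    rw [range_eq_Ico, prod_Ico_add, zero_add, two_mul]
  have hdiff : ∏ k ∈ range j, chebSin n (j - k) = ∏ m ∈ Ico 1 (j + 1), chebSin n m := by
    rw [prod_Ico_eq_prod_range, Nat.add_sub_cancel, ← prod_range_reflect]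
    refine prod_congr rfl fun k hk => congrArg _ ?_
    have := mem_range.mp hk
    omega
  have hterm : ∀ k ∈ range j,
      cos (j * π / n) - cos (k * π / n) = -2 * (chebSin n (j + k) * chebSin n (j - k)) := by
    intro k hk
    rw [cos_sub_cos_of_lt (mem_range.mp hk), neg_mul]
  rw [prod_congr rfl hterm, prod_mul_distrib, prod_const, card_range, prod_mul_distrib, hsum,
    hdiff]

lemma prod_Ico_cos_sub_cos {j : ℕ} (hj : j ≤ n) :
    ∏ k ∈ Ico (j + 1) (n + 1), (cos (j * π / n) - cos (k * π / n)) =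
      2 ^ (n - j) * ((∏ m ∈ Ico (2 * j + 1) (n + j + 1), chebSin n m) *
        ∏ m ∈ Ico 1 (n - j + 1), chebSin n m) := by
  have hsum : ∏ k ∈ Ico (j + 1) (n + 1), chebSin n (j + k) =
      ∏ m ∈ Ico (2 * j + 1) (n + j + 1), chebSin n m := by
    rw [prod_Ico_add]
    congr 2 <;> omega
  have hdiff : ∏ k ∈ Ico (j + 1) (n + 1), chebSin n (k - j) =
      ∏ m ∈ Ico 1 (n - j + 1), chebSin n m := by
    rw [show j + 1 = 1 + j by omega, show n + 1 = n - j + 1 + j by omega, ← prod_Ico_add']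
    simp only [Nat.add_sub_cancel]
  rw [prod_congr rfl fun k hk => cos_sub_cos_of_gt (mem_Ico.mp hk).1, prod_mul_distrib,
    prod_const, Nat.card_Ico, prod_mul_distrib, hsum, hdiff, Nat.add_sub_add_right]

lemma prod_range_erase_cos_sub_cos {j : ℕ} (hj : j ≤ n) :
    ∏ k ∈ (range (n + 1)).erase j, (cos (j * π / n) - cos (k * π / n)) =
      (-1) ^ j * 2 ^ n * (((∏ m ∈ Ico j (2 * j), chebSin n m) *
        ∏ m ∈ Ico (2 * j + 1) (n + j + 1), chebSin n m) *
        ((∏ m ∈ Ico 1 (j + 1), chebSin n m) * ∏ m ∈ Ico 1 (n - j + 1), chebSin n m)) := by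
  have hsplit : (range (n + 1)).erase j = range j ∪ Ico (j + 1) (n + 1) := by
    ext k
    simp only [mem_erase, mem_range, mem_union, mem_Ico]
    omega
  have hdisj : Disjoint (range j) (Ico (j + 1) (n + 1)) := by
    simp only [disjoint_left, mem_range, mem_Ico]
    omega
  have hpow : (2 : ℝ) ^ n = 2 ^ j * 2 ^ (n - j) := by rw [← pow_add, Nat.add_sub_cancel' hj]
  rw [hsplit, prod_union hdisj, prod_range_cos_sub_cos, prod_Ico_cos_sub_cos hj, neg_pow, hpow]
  ring

lemma prod_chebSin_eq_sq_div_two (hn : n ≠ 0) {j : ℕ} (hj₀ : 0 < j) (hjn : j < n) :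
    ((∏ m ∈ Ico j (2 * j), chebSin n m) * ∏ m ∈ Ico (2 * j + 1) (n + j + 1), chebSin n m) *
      ((∏ m ∈ Ico 1 (j + 1), chebSin n m) * ∏ m ∈ Ico 1 (n - j + 1), chebSin n m) =
      (∏ m ∈ Ico 1 n, chebSin n m) ^ 2 / 2 := by
  have hblock : (∏ m ∈ Ico j (2 * j), chebSin n m) * chebSin n (2 * j) *
      ∏ m ∈ Ico (2 * j + 1) (n + j + 1), chebSin n m =
      (∏ m ∈ Ico j (n + 1), chebSin n m) * ∏ m ∈ Ico (n - j) n, chebSin n m := by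
    rw [← prod_Ico_succ_top (by omega), prod_Ico_consecutive _ (by omega) (by omega),
      ← prod_Ico_consecutive _ (by omega : j ≤ n + 1) (by omega : n + 1 ≤ n + j + 1),
      ← prod_Ico_chebSin_reflect (by omega : n ≤ 2 * n + 1),
      show 2 * n + 1 - n = n + 1 by omega, show 2 * n + 1 - (n - j) = n + j + 1 by omega]
  -- `s (2j)` is the factor missing from the block `∏_{j ≤ m ≤ n + j} s m`; put it back.
  refine mul_right_cancel₀ (chebSin_pos (n := n) (by omega : 0 < 2 * j) (by omega)).ne' ?_
  calc _ = ((∏ m ∈ Ico 1 (j + 1), chebSin n m) * ∏ m ∈ Ico j (n + 1), chebSin n m) *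
        ((∏ m ∈ Ico 1 (n - j + 1), chebSin n m) * ∏ m ∈ Ico (n - j) n, chebSin n m) := by
        linear_combination (∏ m ∈ Ico 1 (j + 1), chebSin n m) *
          (∏ m ∈ Ico 1 (n - j + 1), chebSin n m) * hblock
    _ = chebSin n j * chebSin n (n - j) * (∏ m ∈ Ico 1 n, chebSin n m) ^ 2 := by
        rw [prod_Ico_succ_mul_prod_Ico _ (by omega) (by omega),
          prod_Ico_succ_mul_prod_Ico _ (by omega) (by omega), prod_Ico_succ_chebSin hn]
        ring
    _ = _ := by rw [chebSin_two_mul hn hjn.le]; ring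

lemma prod_range_erase_cos_sub_cos_eq (hn : n ≠ 0) {j : ℕ} (hj : j ≤ n) :
    ∏ k ∈ (range (n + 1)).erase j, (cos (j * π / n) - cos (k * π / n)) =
      (-1) ^ j * n / (2 ^ (n - 1) * if j = 0 ∨ j = n then (1 : ℝ) / 2 else 1) := by
  have hQ := sq_two_pow_mul_prod_chebSin hn
  have hpow : (2 : ℝ) ^ n = 2 * 2 ^ (n - 1) := by rw [← pow_succ', Nat.sub_add_cancel (by omega)]
  rw [prod_range_erase_cos_sub_cos hj, hpow]
  rcases Nat.eq_zero_or_pos j with rfl | hj₀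
  · simp only [mul_zero, Ico_self, prod_empty, zero_add, add_zero, tsub_zero, one_mul,
      prod_Ico_succ_chebSin hn, true_or, if_true]
    rw [← hQ]
    field_simp
  obtain hjn | hjn := hj.eq_or_lt
  · subst j
    simp only [prod_eq_prod_Ico_succ_bot (by omega : n < 2 * n), chebSin_self hn, one_mul,
      prod_Ico_chebSin_upper_half, ← two_mul, Ico_self, prod_empty, mul_one, tsub_self, zero_add,
      prod_Ico_succ_chebSin hn, or_true, if_true]
    rw [← hQ]
    field_simp
  · rw [prod_chebSin_eq_sq_div_two hn hj₀ hjn, if_neg (by omega), ← hQ]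
    field_simp

end

/-- Salzer's formula for the barycentric weights at the Chebyshev points of the
second kind `x_j = cos(jπ/n)`:
`w_j = 1/∏_{k≠j}(x_j - x_k) = (-1)^j δ_j 2^{n-1}/n` with `δ_0 = δ_n = 1/2`,
`δ_j = 1` otherwise. -/
theorem barycentric_weights_chebyshev_second_kind
    (n : ℕ) (hn : 1 ≤ n) (x : ℕ → ℝ)
    (hx : ∀ j, x j = Real.cos (j * Real.pi / n)) :
    ∀ j ≤ n,
      1 / ∏ k ∈ (Finset.range (n + 1)).erase j, (x j - x k) =
        (-1 : ℝ) ^ j * (if j = 0 ∨ j = n then (1 : ℝ) / 2 else 1) * 2 ^ (n - 1) / n := by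
  intro j hj
  simp only [hx]
  rw [prod_range_erase_cos_sub_cos_eq (by omega) hj, one_div_div]
  rcases neg_one_pow_eq_or ℝ j with h | h <;> rw [h] <;> ring
end

section
/- Let n ≥ 0 and let x_j = cos((2j+1)π/(2n+2)) for j = 0, ..., n be the Chebyshev points of the first kind. Then for every j ∈ {0,...,n}, the barycentric weight satisfies 1/Π_{k≠j}(x_j - x_k) = (-1)^j · sin((2j+1)π/(2n+2)) · 2^n/(n+1). -/
/-!
The nodes are the roots of the Chebyshev polynomial `T_{n+1}`, whose leading coefficient is
`2^n`, so `T_{n+1} = 2^n ∏_k (X - x_k)` and `∏_{k≠j} (x_j - x_k) = T'_{n+1}(x_j) / 2^n`.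
From `T_{n+1}(cos θ) = cos((n+1)θ)` one gets `T'_{n+1}(cos θ) sin θ = (n+1) sin((n+1)θ)`,
and at `θ_j = (2j+1)π/(2n+2)` the right side is `(n+1)(-1)^j`.
-/

open Finset Real Polynomial Polynomial.Chebyshev Lagrange

theorem eval_derivative_C_mul_nodal_at_node {R ι : Type*} [CommRing R] [DecidableEq ι]
    {s : Finset ι} {v : ι → R} {i : ι} (c : R) (hi : i ∈ s) :
    (derivative (C c * nodal s v)).eval (v i) = c * ∏ k ∈ s.erase i, (v i - v k) := by
  rw [derivative_C_mul, eval_mul, eval_C, eval_nodal_derivative_eval_node_eq hi, eval_nodal]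

theorem T_real_natCast_succ_eq_C_mul_nodal (n : ℕ) :
    T ℝ (n + 1 : ℕ) = C (2 ^ n) * nodal (range (n + 1))
      (fun k : ℕ => cos ((2 * k + 1) * π / (2 * n + 2))) := by
  have hinj := (range (n + 1)).nodup_map_iff_injOn.mp (roots_T_real_nodup (n + 1))
  have hcard : Multiset.card (T ℝ (n + 1 : ℕ)).roots = (T ℝ (n + 1 : ℕ)).natDegree := by
    rw [roots_T_real, natDegree_T, card_val, card_image_of_injOn hinj, card_range,
      Int.natAbs_natCast]
  rw [← C_leadingCoeff_mul_prod_multiset_X_sub_C hcard, roots_T_real, leadingCoeff_T,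
    ← Finset.prod_eq_multiset_prod, prod_image hinj, nodal_eq, Int.natAbs_natCast,
    add_tsub_cancel_right]
  push_cast
  simp only [mul_add, mul_one]

theorem eval_derivative_T_real_cos_mul_sin (n : ℤ) (θ : ℝ) :
    (derivative (T ℝ n)).eval (cos θ) * sin θ = n * sin (n * θ) := by
  rw [T_derivative_eq_U, eval_mul, eval_intCast, mul_assoc, U_real_cos]
  push_cast
  ring_nf

theorem sin_succ_mul_chebyshev_angle (n j : ℕ) :
    sin ((n + 1) * ((2 * j + 1) * π / (2 * n + 2))) = (-1) ^ j := by
  rw [show ((n : ℝ) + 1) * ((2 * j + 1) * π / (2 * n + 2)) = π / 2 + j * π by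
    field_simp; ring, sin_add_nat_mul_pi, sin_pi_div_two, mul_one]

/-- Barycentric weights at the Chebyshev points of the first kind
`x_j = cos((2j+1)π/(2n+2))`:
`w_j = 1/∏_{k≠j}(x_j - x_k) = (-1)^j sin((2j+1)π/(2n+2)) · 2^n/(n+1)`. -/
theorem barycentric_weights_chebyshev_first_kind
    (n : ℕ) (x : ℕ → ℝ)
    (hx : ∀ j, x j = Real.cos ((2 * j + 1) * Real.pi / (2 * n + 2))) :
    ∀ j ≤ n,
      1 / ∏ k ∈ (Finset.range (n + 1)).erase j, (x j - x k) =
        (-1 : ℝ) ^ j * Real.sin ((2 * j + 1) * Real.pi / (2 * n + 2)) * 2 ^ n / (n + 1) := by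
  intro j hj
  set θ := (2 * j + 1) * π / (2 * n + 2)
  have hT : T ℝ (n + 1 : ℕ) = C (2 ^ n) * nodal (range (n + 1)) x := by
    rw [funext hx]
    exact T_real_natCast_succ_eq_C_mul_nodal n
  have hderiv : (derivative (T ℝ (n + 1 : ℕ))).eval (x j) * sin θ = (n + 1) * (-1) ^ j := by
    rw [hx j, eval_derivative_T_real_cos_mul_sin]
    push_cast
    rw [sin_succ_mul_chebyshev_angle]
  rw [hT, eval_derivative_C_mul_nodal_at_node _ (mem_range.2 (by omega))] at hderiv
  have hprod : ∏ k ∈ (range (n + 1)).erase j, (x j - x k) ≠ 0 := by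
    rintro h
    simp [h, Nat.cast_add_one_ne_zero] at hderiv
  have hsign : ((-1 : ℝ) ^ j) ^ 2 = 1 := by rw [← pow_mul, mul_comm, pow_mul, neg_one_sq, one_pow]
  field_simp
  linear_combination -(-1) ^ j * hderiv - (n + 1) * hsign
end
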